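/- arXiv:2211.07922 — 7 statements merged into one kernel-verified Lean document; each statement's English description precedes it below -/
import Mathlib

section
/- Let R be a commutative Noetherian regular ring of prime characteristic p in which the Frobenius endomorphism is flat. Let 𝔞, I, J be ideals of R with J = 𝔞 : I. Then the colon ideal 𝔞^[p] : 𝔞 is contained in J^[p] : J, where for an ideal 𝔟, 𝔟^[p] denotes the ideal generated by the p-th powers of (a generating set of) 𝔟, i.e., the image of 𝔟 under Frobenius extended to an ideal. -/
open Module LinearMap

universe u

theorem flat_colon_map_le {R S : Type u} [CommRing R] [CommRing S] [Algebra R S]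
    [Module.Flat R S] (𝔞 I : Ideal R) (hI : I.FG) :
    ((𝔞.map (algebraMap R S)).colon (I.map (algebraMap R S))) ≤
      (𝔞.colon I).map (algebraMap R S) := by
  classical
  obtain ⟨t, ht⟩ := hI
  intro u hu
  -- every `i • u` with `i ∈ I` lies in `𝔞 • ⊤`
  have hmem : ∀ i : R, i ∈ I → i • u ∈ (𝔞 • (⊤ : Submodule R S)) := by
    intro i hi
    rw [Ideal.smul_top_eq_map]
    have h1 : algebraMap R S i ∈ I.map (algebraMap R S) := Ideal.mem_map_of_mem _ hi
    have h2 := Submodule.mem_colon.mp hu _ h1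
    simpa [Algebra.smul_def, mul_comm] using h2
  have hdec : ∀ i : {z // z ∈ t}, ∃ c : S →₀ R, (∀ s, c s ∈ 𝔞) ∧
      (c.sum fun s r => r • s) = (i : R) • u := by
    intro i
    have hiI : (i : R) ∈ I := by rw [← ht]; exact Submodule.subset_span i.2
    have h := hmem _ hiI
    rw [show (⊤ : Submodule R S) = Submodule.span R (Set.range (_root_.id : S → S)) by
      rw [Set.range_id, Submodule.span_univ]] at h
    obtain ⟨c, hc, hsum⟩ := (Submodule.mem_ideal_smul_span_iff_exists_sum 𝔞 _ _).mp h
    exact ⟨c, hc, by simpa using hsum⟩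
  choose c hc hcsum using hdec
  set T : Finset S := t.attach.biUnion fun i => (c i).support with hT
  have hsupp : ∀ i, (c i).support ⊆ T := fun i s hs =>
    Finset.mem_biUnion.mpr ⟨i, Finset.mem_attach _ _, hs⟩
  -- index type for the free module
  set e₀ : (Option {s // s ∈ T}) → R := Pi.single none 1 with he₀
  -- relation map
  set f : ({z // z ∈ t} → R) →ₗ[R] ((Option {s // s ∈ T}) → R) := LinearMap.pi fun z =>
    Option.rec (∑ i : {z // z ∈ t}, (i : R) • LinearMap.proj i)
      (fun s => - ∑ i : {z // z ∈ t}, (c i (s : S)) • LinearMap.proj i) z with hf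
  -- evaluation map
  set φ : ((Option {s // s ∈ T}) → R) →ₗ[R] S :=
    (LinearMap.proj none).smulRight u +
      ∑ s : {s // s ∈ T}, (LinearMap.proj (some s)).smulRight (s : S) with hφ
  have hfi : ∀ i : {z // z ∈ t}, f (Pi.single i 1) =
      (i : R) • e₀ + ∑ s : {s // s ∈ T}, Pi.single (some s) (-(c i (s : S))) := by
    intro i
    funext z
    cases z with
    | none =>
        simp [hf, he₀, Pi.single_apply]
    | some s =>
        simp [hf, he₀, Pi.single_apply, Finset.sum_ite_eq, Finset.sum_ite_eq']
  have hTsum : ∀ i : {z // z ∈ t},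
      ∑ s : {s // s ∈ T}, (c i (s : S)) • (s : S) = (i : R) • u := by
    intro i
    rw [Finset.sum_coe_sort T (fun s => (c i) s • s)]
    rw [← Finset.sum_subset (hsupp i) (fun s _ hs => by
      rw [Finsupp.notMem_support_iff.mp hs, zero_smul])]
    exact hcsum i
  have hφf : φ ∘ₗ f = 0 := by
    apply (Pi.basisFun R _).ext
    intro i
    have : φ (f (Pi.single i 1)) = 0 := by
      rw [hfi i, map_add, map_smul, map_sum]
      have h1 : φ e₀ = u := by
        simp [hφ, he₀, Pi.single_apply]
      have h2 : ∀ s : {s // s ∈ T}, φ (Pi.single (some s) (-(c i (s : S)))) =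
          -((c i (s : S)) • (s : S)) := by
        intro s
        simp [hφ, Pi.single_apply, Algebra.smul_def, apply_ite (algebraMap R S), ite_mul,
          Finset.sum_ite_eq, Finset.sum_ite_eq', Finset.mem_attach]
      rw [h1]
      simp only [h2]
      rw [Finset.sum_neg_distrib, hTsum i, add_neg_cancel]
    simpa [Pi.basisFun_apply] using this
  obtain ⟨κ, a, y, hxy, haf⟩ :=
    Module.Flat.exists_factorization_of_comp_eq_zero_of_free hφf
  -- every coordinate of `a e₀` lies in `𝔞.colon I`
  have hcol : ∀ m : Fin κ, (a e₀) m ∈ 𝔞.colon I := by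
    intro m
    rw [Submodule.mem_colon]
    have hgen : ∀ i : {z // z ∈ t}, (a e₀) m • (i : R) ∈ 𝔞 := by
      intro i
      have h0 : a (f (Pi.single i 1)) = 0 := by
        rw [← LinearMap.comp_apply, haf]; rfl
      rw [hfi i, map_add, map_smul, map_sum] at h0
      have h1 : ∀ s : {s // s ∈ T}, a (Pi.single (some s) (-(c i (s : S)))) =
          (-(c i (s : S))) • a (Pi.single (some s) 1) := by
        intro s
        rw [← map_smul]
        congr 1
        rw [← Pi.single_smul, smul_eq_mul, mul_one]
      have h2 := congrArg (fun v : _ →₀ R => v m) h0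
      simp only [h1, Finsupp.coe_add, Finsupp.coe_smul, Pi.add_apply, Pi.smul_apply,
        Finsupp.coe_finset_sum, Finset.sum_apply, smul_eq_mul, Finsupp.coe_zero,
        Pi.zero_apply, neg_mul, Finset.sum_neg_distrib] at h2
      have h3 : (a e₀) m • (i : R) =
          ∑ s : {s // s ∈ T}, (c i (s : S)) * (a (Pi.single (some s) 1)) m := by
        rw [smul_eq_mul]
        linear_combination h2
      rw [h3]
      exact Submodule.sum_mem _ fun s _ => Ideal.mul_mem_right _ _ (hc i (s : S))
    intro p hp
    rw [← ht] at hp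
    refine Submodule.span_induction ?_ ?_ ?_ ?_ hp
    · rintro x hx
      exact hgen ⟨x, hx⟩
    · simpa using 𝔞.zero_mem
    · intro x y _ _ hx hy; simpa [smul_eq_mul, mul_add] using 𝔞.add_mem hx hy
    · intro r x _ hx
      simp only [smul_eq_mul, mul_left_comm]
      exact Ideal.mul_mem_left _ r hx
  -- conclude
  have hu' : u = y (a e₀) := by
    have h1 : φ e₀ = u := by simp [hφ, he₀, Pi.single_apply]
    rw [← h1, hxy]; rfl
  rw [hu']
  have hrep : y (a e₀) = ∑ m ∈ (a e₀).support, ((a e₀) m) • y (Finsupp.single m 1) := by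
    conv_lhs => rw [← Finsupp.sum_single (a e₀)]
    rw [map_finsuppSum, Finsupp.sum]
    refine Finset.sum_congr rfl fun m _ => ?_
    rw [← map_smul, Finsupp.smul_single, smul_eq_mul, mul_one]
  rw [hrep]
  refine Submodule.sum_mem _ fun m hm => ?_
  rw [Algebra.smul_def]
  exact Ideal.mul_mem_right _ _ (Ideal.mem_map_of_mem _ (hcol m))


/-- Let `R` be a commutative Noetherian (regular) ring of prime characteristic
`p` in which the Frobenius endomorphism is flat (by Kunz's theorem, for Noetherian rings
flatness of Frobenius is equivalent to regularity).  Let `𝔞`, `I`, `J` be ideals of `R` with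
`J = 𝔞 : I`.  Then `𝔞^[p] : 𝔞 ⊆ J^[p] : J`, where `𝔟^[p]` denotes the ideal generated by the
`p`-th powers of elements of `𝔟`, i.e. the image of `𝔟` under Frobenius extended to an ideal. -/
theorem stmt0 {R : Type*} [CommRing R] [IsNoetherianRing R] (p : ℕ) [Fact p.Prime]
    [CharP R p] (hFlat : (frobenius R p).Flat) (𝔞 I J : Ideal R) (hJ : J = 𝔞.colon I) :
    (𝔞.map (frobenius R p)).colon 𝔞 ≤ (J.map (frobenius R p)).colon J := by
  have hp : p - 1 + 1 = p := Nat.succ_pred_eq_of_pos (Fact.out : p.Prime).pos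
  intro r hr
  rw [Submodule.mem_colon]
  intro x hx
  have hx𝔞I : x ∈ 𝔞.colon I := hJ ▸ hx
  -- Step 1 : `r * x ∈ 𝔞^[p] : I^[p]`.
  have step1 : r * x ∈ (𝔞.map (frobenius R p)).colon (I.map (frobenius R p)) := by
    have hle : I.map (frobenius R p) ≤
        (𝔞.map (frobenius R p)).colon (Ideal.span {r * x}) := by
      rw [Ideal.map_le_iff_le_comap]
      intro i hi
      rw [Ideal.mem_comap]
      rw [Submodule.mem_colon]
      intro q hq
      obtain ⟨d, rfl⟩ := Ideal.mem_span_singleton'.mp hq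
      have hxi : x * i ∈ 𝔞 := by
        have := Submodule.mem_colon.mp hx𝔞I i hi
        simpa [smul_eq_mul] using this
      have hrxi : r * (x * i) ∈ 𝔞.map (frobenius R p) := by
        have := Submodule.mem_colon.mp hr _ hxi
        simpa [smul_eq_mul] using this
      have hpow : i ^ p = i ^ (p - 1) * i := by rw [← pow_succ, hp]
      have key : frobenius R p i • (d * (r * x)) =
          (i ^ (p - 1) * d) * (r * (x * i)) := by
        rw [smul_eq_mul, _root_.frobenius_def, hpow]
        ring
      rw [key]
      exact Ideal.mul_mem_left _ _ hrxi
    rw [Submodule.mem_colon]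
    intro v hv
    have := Submodule.mem_colon.mp (hle hv) (r * x) (Ideal.mem_span_singleton_self _)
    simpa [smul_eq_mul, mul_comm] using this
  -- Step 2 : flatness of Frobenius gives `𝔞^[p] : I^[p] ≤ (𝔞 : I)^[p]`.
  have key : (𝔞.map (frobenius R p)).colon (I.map (frobenius R p)) ≤
      (𝔞.colon I).map (frobenius R p) := by
    letI alg : Algebra R R := (frobenius R p).toAlgebra
    have hmf : @Module.Flat R R _ _ alg.toModule := hFlat
    exact @flat_colon_map_le R R _ _ alg hmf 𝔞 I (IsNoetherian.noetherian I)
  have step2 : r * x ∈ (𝔞.colon I).map (frobenius R p) := key step1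
  rw [hJ, smul_eq_mul]
  exact step2
end

section
/- Let R be a local Artinian Gorenstein ring and I an ideal of R. Then I = 0 : (0 : I), i.e., I equals the annihilator of its annihilator. -/
/-- Let `R` be a local Artinian Gorenstein ring (an Artinian local ring is
Gorenstein iff it is self-injective, i.e. `R` is an injective `R`-module) and `I` an ideal of
`R`.  Then `I = 0 : (0 : I)`: `I` equals the annihilator of its annihilator. -/
theorem stmt2 {R : Type*} [CommRing R] [IsArtinianRing R] [IsLocalRing R]
    (hGor : Module.Injective R R) (I : Ideal R) :
    I = (⊥ : Ideal R).colon ((⊥ : Ideal R).colon I) := by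
  have hsmul : ∀ i a : R, i • (Ideal.Quotient.mk I a : R ⧸ I) = Ideal.Quotient.mk I (i * a) := by
    intro i a
    simp [Algebra.smul_def, Ideal.Quotient.algebraMap_eq, ← map_mul]
  apply le_antisymm
  · intro x hx
    rw [Submodule.mem_colon]
    intro p hp
    rw [SetLike.mem_coe, Submodule.mem_colon] at hp
    have := hp x hx
    simpa [smul_eq_mul, mul_comm] using this
  · intro x hx
    by_contra hxI
    set m := IsLocalRing.maximalIdeal R with hm
    have hnil : IsNilpotent m := by
      have := IsArtinianRing.isNilpotent_jacobson_bot (R := R)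
      rwa [IsLocalRing.jacobson_eq_maximalIdeal ⊥ bot_ne_top] at this
    obtain ⟨n, hn⟩ := hnil
    have hP : ∃ k, m ^ k = ⊥ := ⟨n, hn⟩
    classical
    set N := Nat.find hP with hN
    have hNzero : m ^ N = ⊥ := Nat.find_spec hP
    have hNpos : 0 < N := by
      rcases Nat.eq_zero_or_pos N with h | h
      · exfalso
        rw [h, pow_zero, Ideal.one_eq_top] at hNzero
        have h1 : (1 : R) ∈ (⊥ : Ideal R) := hNzero ▸ Submodule.mem_top
        exact one_ne_zero ((Submodule.mem_bot R).mp h1)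
      · exact h
    have hpred : m ^ (N - 1) ≠ ⊥ := Nat.find_min hP (by omega)
    obtain ⟨z, hzmem, hz0⟩ := Submodule.exists_mem_ne_zero_of_ne_bot hpred
    have hzm : ∀ a ∈ m, z * a = 0 := by
      intro a ha
      have : z * a ∈ m ^ (N - 1) * m := Submodule.mul_mem_mul hzmem ha
      rw [← pow_succ, Nat.sub_add_cancel hNpos, hNzero] at this
      simpa using this
    set xbar : R ⧸ I := Ideal.Quotient.mk I x with hxbar
    have hxbar0 : xbar ≠ 0 := by
      simpa [hxbar, Ideal.Quotient.eq_zero_iff_mem] using hxI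
    set φ : R →ₗ[R] R ⧸ I := LinearMap.toSpanSingleton R (R ⧸ I) xbar with hφ
    have hker : LinearMap.ker φ ≤ m := by
      apply IsLocalRing.le_maximalIdeal
      intro htop
      have h1 : (1 : R) ∈ LinearMap.ker φ := htop ▸ Submodule.mem_top
      rw [LinearMap.mem_ker, hφ, LinearMap.toSpanSingleton_apply, one_smul] at h1
      exact hxbar0 h1
    set ψ : R →ₗ[R] R := LinearMap.toSpanSingleton R R z with hψ
    have hkerle : LinearMap.ker φ ≤ LinearMap.ker ψ := by
      intro r hr
      rw [LinearMap.mem_ker, hψ, LinearMap.toSpanSingleton_apply, smul_eq_mul, mul_comm]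
      exact hzm r (hker hr)
    set h0 : (R ⧸ LinearMap.ker φ) →ₗ[R] R := Submodule.liftQ _ ψ hkerle with hh0
    set e := φ.quotKerEquivRange with he
    set h : LinearMap.range φ →ₗ[R] R :=
      h0 ∘ₗ (e.symm : LinearMap.range φ →ₗ[R] R ⧸ LinearMap.ker φ) with hh
    obtain ⟨g, hg⟩ := hGor.out (LinearMap.range φ).subtype (Submodule.injective_subtype _) h
    set y : R := g (Ideal.Quotient.mk I 1) with hy
    have hyann : y ∈ (⊥ : Ideal R).colon I := by
      rw [Submodule.mem_colon]
      intro i hi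
      have h2 : i • (Ideal.Quotient.mk I 1 : R ⧸ I) = 0 := by
        rw [hsmul, mul_one]
        exact Ideal.Quotient.eq_zero_iff_mem.2 hi
      have h3 : i * y = 0 := by
        rw [hy, ← smul_eq_mul, ← map_smul, h2, map_zero]
      simp [smul_eq_mul, mul_comm, h3]
    have hxy0 : x * y = 0 := by
      have := Submodule.mem_colon.mp hx y hyann
      simpa using this
    have hmemrange : xbar ∈ LinearMap.range φ := ⟨1, by simp [hφ]⟩
    have hxy : x * y = z := by
      have h4 : x • (Ideal.Quotient.mk I 1 : R ⧸ I) = xbar := by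
        rw [hsmul, mul_one]
      have h5 : x * y = g xbar := by
        rw [hy, ← smul_eq_mul, ← map_smul, h4]
      have h6 : g xbar = h ⟨xbar, hmemrange⟩ := by
        have := hg ⟨xbar, hmemrange⟩
        simpa using this
      have h7 : e (Submodule.Quotient.mk 1) = ⟨xbar, hmemrange⟩ := by
        apply Subtype.ext
        rw [he, LinearMap.quotKerEquivRange_apply_mk]
        simp [hφ]
      have e7 : e.symm ⟨xbar, hmemrange⟩ = Submodule.Quotient.mk 1 := by
        rw [LinearEquiv.symm_apply_eq, h7]
      have h8 : h ⟨xbar, hmemrange⟩ = z := by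
        calc h ⟨xbar, hmemrange⟩ = h0 (e.symm ⟨xbar, hmemrange⟩) := rfl
          _ = h0 (Submodule.Quotient.mk 1) := by rw [e7]
          _ = ψ 1 := Submodule.liftQ_apply _ _ _
          _ = z := by simp [hψ]
      rw [h5, h6, h8]
    exact hz0 (hxy ▸ hxy0)
end

section
/- Let K be a field, X = (x_{i,j}) a t × n matrix of indeterminates with n ≥ t, and R = K[X]. For 1 ≤ i ≤ n−t+1, let [i, t+i−1] denote the t × t minor of X using columns i through t+i−1 (all t rows). Then [1,t], [2,t+1], …, [n−t+1, n] form a regular sequence of length n−t+1 in R, contained in the ideal I_t(X) of maximal minors. -/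
open MvPolynomial

/-- The `t × t` minor `[i, t+i-1]` of the generic `t × n` matrix `X = (x_{a,b})`, i.e. the
determinant of the submatrix of `X` on the `t` consecutive columns `i, i+1, …, t+i-1`
(indices `0`-based). -/
noncomputable def consMinor (K : Type*) [Field K] (t n : ℕ) (h : t ≤ n)
    (i : Fin (n - t + 1)) : MvPolynomial (Fin t × Fin n) K :=
  (Matrix.of fun a b : Fin t =>
    (X (a, ⟨i.1 + b.1, by have := i.2; have := b.2; omega⟩) :
      MvPolynomial (Fin t × Fin n) K)).det

/-- The ideal `I_t(X)` of maximal minors of the generic `t × n` matrix. -/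
noncomputable def maxMinorsIdeal (K : Type*) [Field K] (t n : ℕ) :
    Ideal (MvPolynomial (Fin t × Fin n) K) :=
  Ideal.span {d | ∃ c : Fin t → Fin n, Function.Injective c ∧
    d = (Matrix.of fun a b : Fin t => (X (a, c b) : MvPolynomial (Fin t × Fin n) K)).det}

open MonomialOrder Finset

namespace Stmt6Aux

variable {σ' : Type*} (m : MonomialOrder σ') {K : Type*} [Field K]

noncomputable def mdeg (f : MvPolynomial σ' K) : m.syn := f.support.sup m.toSyn

noncomputable def mlc (f : MvPolynomial σ' K) : K := f.coeff (m.toSyn.symm (mdeg m f))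

variable {m}

lemma mdeg_zero : mdeg m (0 : MvPolynomial σ' K) = 0 := by
  simp [mdeg]

lemma le_mdeg {f : MvPolynomial σ' K} {a : σ' →₀ ℕ} (ha : a ∈ f.support) :
    m.toSyn a ≤ mdeg m f := Finset.le_sup ha

lemma mdeg_le_iff {f : MvPolynomial σ' K} {b : m.syn} :
    mdeg m f ≤ b ↔ ∀ a ∈ f.support, m.toSyn a ≤ b := Finset.sup_le_iff

lemma coeff_eq_zero_of_mdeg_lt {f : MvPolynomial σ' K} {a : σ' →₀ ℕ}
    (ha : mdeg m f < m.toSyn a) : f.coeff a = 0 := by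
  by_contra h
  exact absurd (le_mdeg (by simpa [MvPolynomial.mem_support_iff] using h)) (not_le.2 ha)

lemma mdeg_mem {f : MvPolynomial σ' K} (hf : f ≠ 0) :
    m.toSyn.symm (mdeg m f) ∈ f.support := by
  obtain ⟨a, ha, hsup⟩ := Finset.exists_mem_eq_sup f.support
    (by simpa [MvPolynomial.support_eq_empty, Finset.nonempty_iff_ne_empty] using hf) m.toSyn
  rw [mdeg, hsup, AddEquiv.symm_apply_apply]
  exact ha

@[simp] lemma toSyn_symm_mdeg (f : MvPolynomial σ' K) :
    m.toSyn (m.toSyn.symm (mdeg m f)) = mdeg m f := m.toSyn.apply_symm_apply _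

lemma mlc_ne_zero_iff {f : MvPolynomial σ' K} : mlc m f ≠ 0 ↔ f ≠ 0 := by
  constructor
  · intro h hf; subst hf; simp [mlc] at h
  · intro hf; simpa [mlc, MvPolynomial.mem_support_iff] using
      (MvPolynomial.mem_support_iff.1 (mdeg_mem hf))

lemma mdeg_mul_le {f g : MvPolynomial σ' K} :
    mdeg m (f * g) ≤ mdeg m f + mdeg m g := by
  classical
  rw [mdeg_le_iff]
  intro a ha
  obtain ⟨b, hb, c, hc, rfl⟩ := Finset.mem_add.1 (MvPolynomial.support_mul f g ha)
  rw [map_add]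
  exact add_le_add (le_mdeg hb) (le_mdeg hc)

lemma coeff_mdeg_add_mdeg (f g : MvPolynomial σ' K) :
    (f * g).coeff (m.toSyn.symm (mdeg m f) + m.toSyn.symm (mdeg m g)) = mlc m f * mlc m g := by
  classical
  rw [MvPolynomial.coeff_mul]
  rw [Finset.sum_eq_single_of_mem (m.toSyn.symm (mdeg m f), m.toSyn.symm (mdeg m g))
    (Finset.HasAntidiagonal.mem_antidiagonal.2 rfl)]
  · rfl
  · rintro ⟨b, c⟩ hbc hne
    rw [Finset.HasAntidiagonal.mem_antidiagonal] at hbc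
    by_cases hb : f.coeff b = 0
    · simp [hb]
    by_cases hc : g.coeff c = 0
    · simp [hc]
    exfalso
    have hb' : m.toSyn b ≤ mdeg m f := le_mdeg (MvPolynomial.mem_support_iff.2 hb)
    have hc' : m.toSyn c ≤ mdeg m g := le_mdeg (MvPolynomial.mem_support_iff.2 hc)
    have hsum : m.toSyn b + m.toSyn c = mdeg m f + mdeg m g := by
      rw [← map_add, hbc, map_add]; simp
    have hbeq : m.toSyn b = mdeg m f := by
      by_contra hlt
      have : m.toSyn b + m.toSyn c < mdeg m f + mdeg m g :=
        add_lt_add_of_lt_of_le (lt_of_le_of_ne hb' hlt) hc'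
      exact absurd hsum (ne_of_lt this)
    have hceq : m.toSyn c = mdeg m g := by
      have := hsum; rw [hbeq] at this; exact add_left_cancel this
    apply hne
    have h1 : b = m.toSyn.symm (mdeg m f) := by
      rw [← hbeq, AddEquiv.symm_apply_apply]
    have h2 : c = m.toSyn.symm (mdeg m g) := by
      rw [← hceq, AddEquiv.symm_apply_apply]
    rw [h1, h2]

lemma mdeg_mul {f g : MvPolynomial σ' K} (hf : f ≠ 0) (hg : g ≠ 0) :
    mdeg m (f * g) = mdeg m f + mdeg m g := by
  refine le_antisymm mdeg_mul_le ?_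
  have h := coeff_mdeg_add_mdeg (m := m) f g
  have hne : (f * g).coeff (m.toSyn.symm (mdeg m f) + m.toSyn.symm (mdeg m g)) ≠ 0 := by
    rw [h]
    exact mul_ne_zero (mlc_ne_zero_iff.2 hf) (mlc_ne_zero_iff.2 hg)
  have := le_mdeg (m := m) (MvPolynomial.mem_support_iff.2 hne)
  rwa [map_add, toSyn_symm_mdeg, toSyn_symm_mdeg] at this

lemma mlc_mul {f g : MvPolynomial σ' K} (hf : f ≠ 0) (hg : g ≠ 0) :
    mlc m (f * g) = mlc m f * mlc m g := by
  rw [← coeff_mdeg_add_mdeg, mlc, mdeg_mul hf hg, map_add]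

lemma mul_ne_zero' {f g : MvPolynomial σ' K} (hf : f ≠ 0) (hg : g ≠ 0) : f * g ≠ 0 :=
  mul_ne_zero hf hg

lemma mdeg_sum_le {α : Type*} {s : Finset α} {f : α → MvPolynomial σ' K} :
    mdeg m (∑ i ∈ s, f i) ≤ s.sup fun i => mdeg m (f i) := by
  classical
  rw [mdeg_le_iff]
  intro a ha
  obtain ⟨i, hi, hai⟩ := Finset.mem_biUnion.1 (MvPolynomial.support_sum ha)
  exact le_trans (le_mdeg (m := m) hai) (Finset.le_sup (f := fun i => mdeg m (f i)) hi)

lemma mem_support_sub {f g : MvPolynomial σ' K} {a : σ' →₀ ℕ}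
    (ha : a ∈ (f - g).support) : a ∈ f.support ∨ a ∈ g.support := by
  by_contra h
  simp only [not_or, MvPolynomial.mem_support_iff, not_not] at h
  rw [MvPolynomial.mem_support_iff, MvPolynomial.coeff_sub, h.1, h.2, sub_zero] at ha
  exact ha rfl

lemma mem_support_add {f g : MvPolynomial σ' K} {a : σ' →₀ ℕ}
    (ha : a ∈ (f + g).support) : a ∈ f.support ∨ a ∈ g.support := by
  by_contra h
  simp only [not_or, MvPolynomial.mem_support_iff, not_not] at h
  rw [MvPolynomial.mem_support_iff, MvPolynomial.coeff_add, h.1, h.2, add_zero] at ha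
  exact ha rfl

lemma mdeg_lt_of_forall {f : MvPolynomial σ' K} {μ : m.syn}
    (h : ∀ a ∈ f.support, m.toSyn a < μ) : f = 0 ∨ mdeg m f < μ := by
  rcases eq_or_ne f 0 with hf | hf
  · exact Or.inl hf
  · right
    obtain ⟨a, ha, hsup⟩ := Finset.exists_mem_eq_sup f.support
      (by simpa [MvPolynomial.support_eq_empty, Finset.nonempty_iff_ne_empty] using hf) m.toSyn
    rw [mdeg, hsup]
    exact h a ha

lemma sub_lead_support {f : MvPolynomial σ' K} (hf : f ≠ 0) {a : σ' →₀ ℕ}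
    (ha : a ∈ (f - MvPolynomial.monomial (m.toSyn.symm (mdeg m f)) (mlc m f)).support) :
    m.toSyn a < mdeg m f := by
  classical
  have hco : (f - MvPolynomial.monomial (m.toSyn.symm (mdeg m f)) (mlc m f)).coeff a ≠ 0 :=
    MvPolynomial.mem_support_iff.1 ha
  rw [MvPolynomial.coeff_sub, MvPolynomial.coeff_monomial] at hco
  by_cases hae : m.toSyn.symm (mdeg m f) = a
  · exfalso; rw [if_pos hae, ← hae] at hco; simp [mlc] at hco
  · rw [if_neg hae, sub_zero] at hco
    refine lt_of_le_of_ne (le_mdeg (MvPolynomial.mem_support_iff.2 hco)) fun h => hae ?_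
    rw [← h, AddEquiv.symm_apply_apply]

lemma mdeg_monomial {d : σ' →₀ ℕ} {c : K} (hc : c ≠ 0) :
    mdeg m (MvPolynomial.monomial d c) = m.toSyn d := by
  classical
  rw [mdeg, MvPolynomial.support_monomial, if_neg hc, Finset.sup_singleton]


section LemA

variable {ι : Type*} [Fintype ι] [DecidableEq ι]

theorem lemA (F : ι → MvPolynomial σ' K) (D : ι → (σ' →₀ ℕ))
    (hdeg : ∀ j, mdeg m (F j) = m.toSyn (D j))
    (hmon : ∀ j, mlc m (F j) = 1)
    (hdisj : ∀ j l, j ≠ l → ∀ x, D j x = 0 ∨ D l x = 0) :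
    ∀ (h : ι → MvPolynomial σ' K), (∑ j, h j * F j) ≠ 0 →
      ∃ j, D j ≤ m.toSyn.symm (mdeg m (∑ j, h j * F j)) := by
  classical
  have hF0 : ∀ j, F j ≠ 0 := fun j => mlc_ne_zero_iff.1 (by rw [hmon j]; exact one_ne_zero)
  suffices H : ∀ μ : m.syn, ∀ N : ℕ, ∀ h : ι → MvPolynomial σ' K,
      (Finset.univ.sup fun j => mdeg m (h j * F j)) = μ →
      (Finset.univ.filter fun j => mdeg m (h j * F j) = μ ∧ h j ≠ 0).card = N →
      (∑ j, h j * F j) ≠ 0 →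
      ∃ j, D j ≤ m.toSyn.symm (mdeg m (∑ j, h j * F j)) by
    intro h hne
    exact H _ _ h rfl rfl hne
  intro μ
  induction μ using WellFoundedLT.induction with
  | ind μ ihμ =>
  intro N
  induction N using Nat.strong_induction_on with
  | _ N ihN =>
  intro h hsup hcard hne
  set T : Finset ι := Finset.univ.filter fun j => mdeg m (h j * F j) = μ ∧ h j ≠ 0 with hT
  set r : MvPolynomial σ' K := ∑ j, h j * F j with hr
  -- the coefficient of r at μ
  have hprodmdeg : ∀ j, h j ≠ 0 → mdeg m (h j * F j) = mdeg m (h j) + m.toSyn (D j) := by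
    intro j hj
    rw [mdeg_mul hj (hF0 j), hdeg j]
  have hcoeffT : ∀ j ∈ T, (h j * F j).coeff (m.toSyn.symm μ) = mlc m (h j) := by
    intro j hj
    rw [hT, Finset.mem_filter] at hj
    obtain ⟨-, hμj, hj0⟩ := hj
    have : m.toSyn.symm μ = m.toSyn.symm (mdeg m (h j * F j)) := by rw [hμj]
    rw [this, ← mlc, mlc_mul hj0 (hF0 j), hmon j, mul_one]
  have hcoeffnT : ∀ j ∉ T, (h j * F j).coeff (m.toSyn.symm μ) = 0 := by
    intro j hj
    rw [hT, Finset.mem_filter, not_and] at hj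
    have hj' := hj (Finset.mem_univ j)
    by_cases hj0 : h j = 0
    · simp [hj0]
    · have hne' : mdeg m (h j * F j) ≠ μ := fun hh => hj' ⟨hh, hj0⟩
      have hle : mdeg m (h j * F j) ≤ μ := hsup ▸
        Finset.le_sup (f := fun j => mdeg m (h j * F j)) (Finset.mem_univ j)
      apply coeff_eq_zero_of_mdeg_lt
      rw [m.toSyn.apply_symm_apply]
      exact lt_of_le_of_ne hle hne'
  have hcr : r.coeff (m.toSyn.symm μ) = ∑ j ∈ T, mlc m (h j) := by
    rw [hr, MvPolynomial.coeff_sum]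
    rw [← Finset.sum_subset (Finset.subset_univ T) (fun j _ hj => hcoeffnT j hj)]
    exact Finset.sum_congr rfl hcoeffT
  by_cases h0 : r.coeff (m.toSyn.symm μ) ≠ 0
  -- Case A : the top coefficient survives
  · have hμr : mdeg m r = μ := by
      refine le_antisymm ?_ ?_
      · rw [hr]
        exact le_trans mdeg_sum_le (by rw [hsup])
      · have := le_mdeg (m := m) (MvPolynomial.mem_support_iff.2 h0)
        rwa [m.toSyn.apply_symm_apply] at this
    obtain ⟨j, hjT, hjc⟩ : ∃ j ∈ T, mlc m (h j) ≠ 0 := by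
      by_contra hcon
      push_neg at hcon
      rw [hcr] at h0
      exact h0 (Finset.sum_eq_zero hcon)
    rw [hT, Finset.mem_filter] at hjT
    obtain ⟨-, hμj, hj0⟩ := hjT
    refine ⟨j, ?_⟩
    have : m.toSyn.symm (mdeg m r) = m.toSyn.symm (mdeg m (h j)) + D j := by
      rw [hμr, ← hμj, hprodmdeg j hj0, map_add, AddEquiv.symm_apply_apply]
    rw [this]
    exact le_add_self
  -- Case B : cancellation at the top
  · push_neg at h0
    -- T has at least two elements
    have hTne : T.Nonempty := by
      obtain ⟨j0, hj0⟩ : ∃ j0, h j0 * F j0 ≠ 0 := by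
        by_contra hcon
        push_neg at hcon
        exact hne (by rw [hr] at *; exact Finset.sum_eq_zero fun j _ => hcon j)
      have hj00 : h j0 ≠ 0 := fun hh => hj0 (by rw [hh, zero_mul])
      obtain ⟨j1, -, hj1⟩ := Finset.exists_mem_eq_sup Finset.univ ⟨j0, Finset.mem_univ j0⟩
        (fun j => mdeg m (h j * F j))
      by_cases hj10 : h j1 = 0
      · have hμ0 : μ = 0 := by
          rw [← hsup, hj1, hj10, zero_mul, mdeg_zero]
        refine ⟨j0, ?_⟩
        rw [hT, Finset.mem_filter]
        refine ⟨Finset.mem_univ _, ?_, hj00⟩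
        rw [hμ0]
        refine le_antisymm ?_ bot_le
        rw [← hμ0, ← hsup]
        exact Finset.le_sup (f := fun j => mdeg m (h j * F j)) (Finset.mem_univ j0)
      · refine ⟨j1, ?_⟩
        rw [hT, Finset.mem_filter]
        exact ⟨Finset.mem_univ _, by rw [← hj1, hsup], hj10⟩
    obtain ⟨j, hjT⟩ := hTne
    have hjmem := hjT
    rw [hT, Finset.mem_filter] at hjmem
    obtain ⟨-, hμj, hj0⟩ := hjmem
    have hlcj : mlc m (h j) ≠ 0 := mlc_ne_zero_iff.2 hj0
    obtain ⟨l, hlT, hlj⟩ : ∃ l ∈ T, l ≠ j := by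
      by_contra hcon
      push_neg at hcon
      have hTsub : T = {j} := by
        apply Finset.eq_singleton_iff_unique_mem.2
        exact ⟨hjT, fun x hx => hcon x hx⟩
      rw [hcr, hTsub, Finset.sum_singleton] at h0
      exact hlcj h0
    have hlmem := hlT
    rw [hT, Finset.mem_filter] at hlmem
    obtain ⟨-, hμl, hl0⟩ := hlmem
    -- the key quantities
    set c : K := mlc m (h j) with hc
    set α : σ' →₀ ℕ := m.toSyn.symm (mdeg m (h j)) with hα
    have hαD : m.toSyn α + m.toSyn (D j) = μ := by
      rw [hα, m.toSyn.apply_symm_apply, ← hprodmdeg j hj0, hμj]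
    have hDlle : D l ≤ α + D j := by
      have h1 : m.toSyn.symm μ = m.toSyn.symm (mdeg m (h l)) + D l := by
        rw [← hμl, hprodmdeg l hl0, map_add, AddEquiv.symm_apply_apply]
      have h2 : m.toSyn.symm μ = α + D j := by
        rw [← hαD, map_add]
        simp
      rw [← h2, h1]
      exact le_add_self
    have hDlα : D l ≤ α := by
      intro x
      rcases hdisj l j (fun hh => hlj hh) x with hx | hx
      · rw [hx]; exact Nat.zero_le _
      · have := hDlle x
        rwa [Finsupp.add_apply, hx, add_zero] at this
    set β : σ' →₀ ℕ := α - D l with hβ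
    have hβDl : β + D l = α := by
      rw [hβ]
      exact tsub_add_cancel_of_le hDlα
    set tl : MvPolynomial σ' K := F l - MvPolynomial.monomial (D l) 1 with htl
    have htlsupp : ∀ a ∈ tl.support, m.toSyn a < m.toSyn (D l) := by
      intro a ha
      have e1 : m.toSyn.symm (mdeg m (F l)) = D l := by
        rw [hdeg l, AddEquiv.symm_apply_apply]
      have := sub_lead_support (hF0 l) (a := a) (by
        rw [e1, hmon l] at *
        exact ha)
      rwa [hdeg l] at this
    set hj' : MvPolynomial σ' K :=
      (h j - MvPolynomial.monomial α c) - MvPolynomial.monomial β c * tl with hhj'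
    set hl' : MvPolynomial σ' K := h l + MvPolynomial.monomial β c * F j with hhl'
    set h2 : ι → MvPolynomial σ' K :=
      Function.update (Function.update h j hj') l hl' with hh2
    have h2j : h2 j = hj' := by
      rw [hh2, Function.update_of_ne (fun hh => hlj hh.symm) _ _, Function.update_self]
    have h2l : h2 l = hl' := by rw [hh2, Function.update_self]
    have h2other : ∀ i, i ≠ j → i ≠ l → h2 i = h i := by
      intro i hij hil
      rw [hh2, Function.update_of_ne hil, Function.update_of_ne hij]
    -- sum preservation
    have hsum2 : ∑ i, h2 i * F i = r := by
      have key : ∀ i, h2 i * F i = h i * F i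
          + (if i = j then ((hj' - h j) * F j) else 0)
          + (if i = l then ((hl' - h l) * F l) else 0) := by
        intro i
        rcases eq_or_ne i j with rfl | hij
        · rw [if_pos rfl, if_neg (fun hh => hlj hh.symm), h2j]; ring
        · rcases eq_or_ne i l with rfl | hil
          · rw [if_neg hij, if_pos rfl, h2l]; ring
          · rw [if_neg hij, if_neg hil, h2other i hij hil]; ring
      rw [Finset.sum_congr rfl fun i _ => key i]
      rw [Finset.sum_add_distrib, Finset.sum_add_distrib,
        Finset.sum_ite_eq' Finset.univ j (fun _ => (hj' - h j) * F j),
        Finset.sum_ite_eq' Finset.univ l (fun _ => (hl' - h l) * F l),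
        if_pos (Finset.mem_univ _), if_pos (Finset.mem_univ _), ← hr]
      have e1 : hj' - h j = -(MvPolynomial.monomial α c) - MvPolynomial.monomial β c * tl := by
        rw [hhj']; ring
      have e2 : hl' - h l = MvPolynomial.monomial β c * F j := by
        rw [hhl']; ring
      have e3 : (MvPolynomial.monomial β c) * MvPolynomial.monomial (D l) (1 : K)
          = MvPolynomial.monomial α c := by
        rw [MvPolynomial.monomial_mul, hβDl, mul_one]
      rw [e1, e2, htl]
      linear_combination (F j) * e3
    have hc0 : c ≠ 0 := hlcj
    -- support bound for hj'
    have hj'supp : ∀ a ∈ hj'.support, m.toSyn a < mdeg m (h j) := by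
      intro a ha
      rw [hhj'] at ha
      rcases mem_support_sub ha with ha1 | ha2
      · rw [hα, hc] at ha1
        exact sub_lead_support hj0 ha1
      · have hle := le_mdeg (m := m) ha2
        have h1 : mdeg m (MvPolynomial.monomial β c * tl) ≤ m.toSyn β + mdeg m tl :=
          le_trans mdeg_mul_le (le_of_eq (by rw [mdeg_monomial hc0]))
        have htl0 : tl ≠ 0 := by
          intro hh; rw [hh] at ha2; simp at ha2
        have h2' : mdeg m tl < m.toSyn (D l) := by
          rcases mdeg_lt_of_forall (μ := m.toSyn (D l)) htlsupp with hh | hh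
          · exact absurd hh htl0
          · exact hh
        calc m.toSyn a ≤ m.toSyn β + mdeg m tl := le_trans hle h1
          _ < m.toSyn β + m.toSyn (D l) := add_lt_add_right h2' _
          _ = m.toSyn α := by rw [← map_add, hβDl]
          _ = mdeg m (h j) := by rw [hα, m.toSyn.apply_symm_apply]
    have hj'prod : ∀ a ∈ (hj' * F j).support, m.toSyn a < μ := by
      intro a ha
      obtain ⟨b, hb, c', hc', rfl⟩ := Finset.mem_add.1 (MvPolynomial.support_mul _ _ ha)
      rw [map_add]
      calc m.toSyn b + m.toSyn c' < mdeg m (h j) + m.toSyn (D j) := by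
            refine add_lt_add_of_lt_of_le (hj'supp b hb) ?_
            have := le_mdeg (m := m) hc'
            rwa [hdeg j] at this
        _ = μ := by rw [← hprodmdeg j hj0, hμj]
    have hsuple : ∀ i, mdeg m (h2 i * F i) ≤ μ := by
      intro i
      rcases eq_or_ne i j with rfl | hij
      · rw [h2j]
        rcases mdeg_lt_of_forall hj'prod with hh | hh
        · rw [hh, mdeg_zero]; exact bot_le
        · exact le_of_lt hh
      rcases eq_or_ne i l with rfl | hil
      · rw [h2l, hhl']
        have hdist : (h i + MvPolynomial.monomial β c * F j) * F i
            = h i * F i + MvPolynomial.monomial β c * F j * F i := by ring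
        rw [hdist, mdeg_le_iff]
        intro a ha
        rcases mem_support_add ha with ha1 | ha2
        · exact le_trans (le_mdeg (m := m) ha1) (le_of_eq hμl)
        · refine le_trans (le_mdeg (m := m) ha2) ?_
          refine le_trans mdeg_mul_le ?_
          have hb1 : mdeg m (MvPolynomial.monomial β c * F j) ≤ m.toSyn β + m.toSyn (D j) :=
            le_trans mdeg_mul_le (le_of_eq (by rw [mdeg_monomial hc0, hdeg j]))
          calc mdeg m (MvPolynomial.monomial β c * F j) + mdeg m (F i)
              ≤ (m.toSyn β + m.toSyn (D j)) + m.toSyn (D i) := by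
                rw [hdeg i]; exact add_le_add_left hb1 _
            _ = (m.toSyn β + m.toSyn (D i)) + m.toSyn (D j) := by
                rw [add_right_comm]
            _ = m.toSyn α + m.toSyn (D j) := by rw [← map_add, hβDl]
            _ = μ := by rw [hα, m.toSyn.apply_symm_apply, ← hprodmdeg j hj0, hμj]
      · rw [h2other i hij hil, ← hsup]
        exact Finset.le_sup (f := fun i => mdeg m (h i * F i)) (Finset.mem_univ i)
    set ν : m.syn := Finset.univ.sup (fun i => mdeg m (h2 i * F i)) with hν
    have hνμ : ν ≤ μ := Finset.sup_le fun i _ => hsuple i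
    have hT' : (Finset.univ.filter fun i => mdeg m (h2 i * F i) = μ ∧ h2 i ≠ 0) ⊆ T.erase j := by
      intro i hi
      rw [Finset.mem_filter] at hi
      obtain ⟨-, hiμ, hi0⟩ := hi
      rcases eq_or_ne i j with rfl | hij
      · exfalso
        rw [h2j] at hiμ hi0
        rcases mdeg_lt_of_forall hj'prod with hh | hh
        · exact hi0 ((mul_eq_zero.1 hh).resolve_right (hF0 i))
        · exact absurd hiμ (ne_of_lt hh)
      · refine Finset.mem_erase.2 ⟨hij, ?_⟩
        rw [hT, Finset.mem_filter]
        rcases eq_or_ne i l with rfl | hil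
        · exact ⟨Finset.mem_univ _, hμl, hl0⟩
        · rw [h2other i hij hil] at hiμ hi0
          exact ⟨Finset.mem_univ _, hiμ, hi0⟩
    have hcard' : (Finset.univ.filter fun i => mdeg m (h2 i * F i) = μ ∧ h2 i ≠ 0).card < N := by
      calc (Finset.univ.filter fun i => mdeg m (h2 i * F i) = μ ∧ h2 i ≠ 0).card
          ≤ (T.erase j).card := Finset.card_le_card hT'
        _ < T.card := Finset.card_erase_lt_of_mem hjT
        _ = N := hcard
    have hne2 : ∑ i, h2 i * F i ≠ 0 := by rw [hsum2]; exact hne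
    rcases lt_or_eq_of_le hνμ with hlt | heq
    · obtain ⟨jj, hjj⟩ := ihμ ν hlt _ h2 hν.symm rfl hne2
      exact ⟨jj, by rwa [hsum2] at hjj⟩
    · obtain ⟨jj, hjj⟩ := ihN _ hcard' h2 (by rw [← hν, heq]) rfl hne2
      exact ⟨jj, by rwa [hsum2] at hjj⟩
  
theorem lemB (F : ι → MvPolynomial σ' K) (D : ι → (σ' →₀ ℕ))
    (hdeg : ∀ j, mdeg m (F j) = m.toSyn (D j))
    (hmon : ∀ j, mlc m (F j) = 1)
    (hdisj : ∀ j l, j ≠ l → ∀ x, D j x = 0 ∨ D l x = 0)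
    (G : MvPolynomial σ' K) (DG : σ' →₀ ℕ)
    (hGdeg : mdeg m G = m.toSyn DG) (hGmon : mlc m G = 1)
    (hGdisj : ∀ j, ∀ x, D j x = 0 ∨ DG x = 0) :
    ∀ r : MvPolynomial σ' K, r * G ∈ Ideal.span (Set.range F) →
      r ∈ Ideal.span (Set.range F) := by
  classical
  have hF0 : ∀ j, F j ≠ 0 := fun j => mlc_ne_zero_iff.1 (by rw [hmon j]; exact one_ne_zero)
  have hG0 : G ≠ 0 := mlc_ne_zero_iff.1 (by rw [hGmon]; exact one_ne_zero)
  suffices H : ∀ μ : m.syn, ∀ r : MvPolynomial σ' K, mdeg m r = μ →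
      r * G ∈ Ideal.span (Set.range F) → r ∈ Ideal.span (Set.range F) by
    intro r hr
    exact H _ r rfl hr
  intro μ
  induction μ using WellFoundedLT.induction with
  | ind μ ih =>
  intro r hμ hrG
  by_cases h0 : r = 0
  · rw [h0]; exact Ideal.zero_mem _
  have hrG0 : r * G ≠ 0 := mul_ne_zero h0 hG0
  obtain ⟨co, hco⟩ := Ideal.mem_span_range_iff_exists_fun.mp hrG
  obtain ⟨j, hj⟩ := lemA F D hdeg hmon hdisj co (by rw [hco]; exact hrG0)
  rw [hco] at hj
  -- D j ≤ symm (mdeg r) + DG, hence D j ≤ symm (mdeg r)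
  have hj' : D j ≤ m.toSyn.symm (mdeg m r) + DG := by
    have e : m.toSyn.symm (mdeg m (r * G)) = m.toSyn.symm (mdeg m r) + DG := by
      rw [mdeg_mul h0 hG0, hGdeg, map_add]
      simp
    rwa [e] at hj
  have hDj : D j ≤ m.toSyn.symm (mdeg m r) := by
    intro x
    rcases hGdisj j x with hx | hx
    · rw [hx]; exact Nat.zero_le _
    · have := hj' x
      rwa [Finsupp.add_apply, hx, add_zero] at this
  set ρ : σ' →₀ ℕ := m.toSyn.symm (mdeg m r) with hρ
  set q : MvPolynomial σ' K := MvPolynomial.monomial (ρ - D j) (mlc m r) with hq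
  set r' : MvPolynomial σ' K := r - q * F j with hr'
  have hFjspan : F j ∈ Ideal.span (Set.range F) := Ideal.subset_span ⟨j, rfl⟩
  have hqFj : q * F j ∈ Ideal.span (Set.range F) := Ideal.mul_mem_left _ _ hFjspan
  -- decomposition of q * F j
  have hqdec : q * F j = MvPolynomial.monomial ρ (mlc m r)
      + q * (F j - MvPolynomial.monomial (D j) 1) := by
    have e3 : q * MvPolynomial.monomial (D j) (1 : K) = MvPolynomial.monomial ρ (mlc m r) := by
      rw [hq, MvPolynomial.monomial_mul, tsub_add_cancel_of_le hDj, mul_one]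
    linear_combination e3
  have hr'supp : ∀ a ∈ r'.support, m.toSyn a < μ := by
    intro a ha
    rw [hr', hqdec] at ha
    have ha' : a ∈ ((r - MvPolynomial.monomial ρ (mlc m r))
        - q * (F j - MvPolynomial.monomial (D j) 1)).support := by
      convert ha using 2
      ring
    rcases mem_support_sub ha' with ha1 | ha2
    · rw [← hμ]
      rw [hρ] at ha1
      exact sub_lead_support h0 ha1
    · have hle := le_mdeg (m := m) ha2
      have htjsupp : ∀ b ∈ (F j - MvPolynomial.monomial (D j) (1 : K)).support,
          m.toSyn b < m.toSyn (D j) := by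
        intro b hb
        have e1 : m.toSyn.symm (mdeg m (F j)) = D j := by
          rw [hdeg j, AddEquiv.symm_apply_apply]
        have heq : (MvPolynomial.monomial (m.toSyn.symm (mdeg m (F j))) (mlc m (F j))
            : MvPolynomial σ' K) = MvPolynomial.monomial (D j) 1 := by
          rw [e1, hmon j]
        have := sub_lead_support (m := m) (hF0 j) (a := b) (by rw [heq]; exact hb)
        rwa [hdeg j] at this
      rcases eq_or_ne (F j - MvPolynomial.monomial (D j) (1 : K)) 0 with htj0 | htj0
      · exfalso
        rw [htj0, mul_zero] at ha2
        simp at ha2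
      have h2' : mdeg m (F j - MvPolynomial.monomial (D j) (1 : K)) < m.toSyn (D j) := by
        rcases mdeg_lt_of_forall (μ := m.toSyn (D j)) htjsupp with hh | hh
        · exact absurd hh htj0
        · exact hh
      have hqle : mdeg m q ≤ m.toSyn (ρ - D j) := by
        rcases eq_or_ne (mlc m r) 0 with hc0 | hc0
        · rw [hq, hc0]
          simp only [MvPolynomial.monomial_zero, mdeg_zero]
          exact bot_le
        · rw [hq, mdeg_monomial hc0]
      calc m.toSyn a ≤ mdeg m q + mdeg m (F j - MvPolynomial.monomial (D j) 1) :=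
            le_trans hle mdeg_mul_le
        _ < m.toSyn (ρ - D j) + m.toSyn (D j) :=
            add_lt_add_of_le_of_lt hqle h2'
        _ = m.toSyn ρ := by rw [← map_add, tsub_add_cancel_of_le hDj]
        _ = μ := by rw [hρ, m.toSyn.apply_symm_apply, hμ]
  have hr'G : r' * G ∈ Ideal.span (Set.range F) := by
    rw [hr', sub_mul]
    exact Ideal.sub_mem _ hrG (by
      have e : q * F j * G = (q * G) * F j := by ring
      rw [e]
      exact Ideal.mul_mem_left _ _ hFjspan)
  rcases eq_or_ne r' 0 with h'0 | h'0
  · have : r = q * F j := by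
      have := sub_eq_zero.1 (hr' ▸ h'0)
      exact this
    rw [this]
    exact hqFj
  · have hlt : mdeg m r' < μ := by
      rcases mdeg_lt_of_forall hr'supp with hh | hh
      · exact absurd hh h'0
      · exact hh
    have hmem := ih _ hlt r' rfl hr'G
    have : r = r' + q * F j := by rw [hr']; ring
    rw [this]
    exact Ideal.add_mem _ hmem hqFj

end LemA

section Order

variable (t n : ℕ)

def vkey : Fin t × Fin n → ℕ := fun p => p.2.1 + n * p.1.1

lemma vkey_fpe (p : Fin t × Fin n) : (finProdFinEquiv p).1 = vkey t n p := rfl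

lemma vkey_lt_of_fst {t n : ℕ} {a a' : Fin t} {b b' : Fin n} (hlt : a.1 < a'.1) :
    vkey t n (a, b) < vkey t n (a', b') := by
  have h1 : b.1 + n * a.1 < n + n * a.1 := Nat.add_lt_add_right b.2 _
  have h2 : n + n * a.1 = n * (a.1 + 1) := by rw [Nat.mul_succ, Nat.add_comm]
  have h3 : n * (a.1 + 1) ≤ n * a'.1 := Nat.mul_le_mul_left n hlt
  have h4 : n * a'.1 ≤ b'.1 + n * a'.1 := Nat.le_add_left _ _
  calc b.1 + n * a.1 < n + n * a.1 := h1
    _ = n * (a.1 + 1) := h2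
    _ ≤ n * a'.1 := h3
    _ ≤ b'.1 + n * a'.1 := h4

noncomputable def mlex : MonomialOrder (Fin t × Fin n) where
  syn := (MonomialOrder.lex (σ := Fin (t * n))).syn
  toSyn := (Finsupp.domCongr (finProdFinEquiv : Fin t × Fin n ≃ Fin (t * n))).trans
    (MonomialOrder.lex (σ := Fin (t * n))).toSyn
  toSyn_monotone := by
    intro d e hde
    apply (MonomialOrder.lex (σ := Fin (t * n))).toSyn_monotone
      (a := (Finsupp.domCongr finProdFinEquiv) d) (b := (Finsupp.domCongr finProdFinEquiv) e)
    rw [Finsupp.le_def]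
    intro x
    exact Finsupp.le_def.1 hde _
  wellFoundedLT_syn := (MonomialOrder.lex (σ := Fin (t * n))).wellFoundedLT_syn

lemma mlex_lt_of (d e : (Fin t × Fin n) →₀ ℕ) (v₀ : Fin t × Fin n)
    (h1 : ∀ w, vkey t n w < vkey t n v₀ → d w = e w) (h2 : d v₀ < e v₀) :
    (mlex t n).toSyn d < (mlex t n).toSyn e := by
  show (MonomialOrder.lex (σ := Fin (t * n))).toSyn
      ((Finsupp.domCongr finProdFinEquiv) d)
    < (MonomialOrder.lex (σ := Fin (t * n))).toSyn ((Finsupp.domCongr finProdFinEquiv) e)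
  rw [MonomialOrder.lex_lt_iff, Finsupp.Lex.lt_iff]
  refine ⟨finProdFinEquiv v₀, fun j hj => ?_, ?_⟩
  · show (Finsupp.equivMapDomain finProdFinEquiv d) j
      = (Finsupp.equivMapDomain finProdFinEquiv e) j
    rw [Finsupp.equivMapDomain_apply, Finsupp.equivMapDomain_apply]
    apply h1
    have hvj : vkey t n (finProdFinEquiv.symm j) = j.1 := by
      rw [← vkey_fpe, Equiv.apply_symm_apply]
    rw [hvj, ← vkey_fpe]
    exact hj
  · show (Finsupp.equivMapDomain finProdFinEquiv d) (finProdFinEquiv v₀)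
      < (Finsupp.equivMapDomain finProdFinEquiv e) (finProdFinEquiv v₀)
    rw [Finsupp.equivMapDomain_apply, Finsupp.equivMapDomain_apply,
      Equiv.symm_apply_apply]
    exact h2

end Order

section Minors

variable {t n : ℕ} (h : t ≤ n)

/-- The column map of the `i`-th consecutive minor. -/
def colF (i : Fin (n - t + 1)) (b : Fin t) : Fin n :=
  ⟨i.1 + b.1, by have := i.2; have := b.2; omega⟩

/-- The exponent of the monomial of the minor attached to the permutation `σ`. -/
noncomputable def Em (i : Fin (n - t + 1)) (σ : Equiv.Perm (Fin t)) :
    (Fin t × Fin n) →₀ ℕ :=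
  ∑ a : Fin t, Finsupp.single (σ a, colF h i a) 1

lemma Em_apply (i : Fin (n - t + 1)) (σ : Equiv.Perm (Fin t)) (r : Fin t) (c : Fin n) :
    Em h i σ (r, c) = if c = colF h i (σ⁻¹ r) then 1 else 0 := by
  classical
  rw [Em, Finsupp.finset_sum_apply]
  have key : ∀ a : Fin t, (Finsupp.single ((σ a, colF h i a)) (1 : ℕ)) (r, c)
      = if a = σ⁻¹ r then (if c = colF h i (σ⁻¹ r) then 1 else 0) else 0 := by
    intro a
    rw [Finsupp.single_apply]
    rcases eq_or_ne a (σ⁻¹ r) with rfl | hne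
    · rw [if_pos rfl, (by exact σ.apply_symm_apply r : σ (σ⁻¹ r) = r)]
      by_cases hc : c = colF h i (σ⁻¹ r)
      · rw [if_pos (by rw [hc]), if_pos hc]
      · rw [if_neg (by
          rw [Prod.mk.injEq]
          rintro ⟨-, hcc⟩
          exact hc hcc.symm), if_neg hc]
    · rw [if_neg hne, if_neg (by
        rw [Prod.mk.injEq]
        rintro ⟨hrr, -⟩
        exact hne (by rw [← hrr, (by exact σ.symm_apply_apply a : σ⁻¹ (σ a) = a)]))]
  rw [Finset.sum_congr rfl fun a _ => key a, Finset.sum_ite_eq' Finset.univ (σ⁻¹ r),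
    if_pos (Finset.mem_univ _)]

lemma Em_lt (i : Fin (n - t + 1)) (σ : Equiv.Perm (Fin t)) (hσ : σ ≠ 1) :
    (mlex t n).toSyn (Em h i σ) < (mlex t n).toSyn (Em h i 1) := by
  classical
  set S : Finset (Fin t) := Finset.univ.filter fun r => σ⁻¹ r ≠ r with hS
  have hSne : S.Nonempty := by
    by_contra hcon
    rw [Finset.not_nonempty_iff_eq_empty] at hcon
    apply hσ
    have hid : σ⁻¹ = 1 := by
      ext r
      by_contra hr
      have hmem : r ∈ S := by
        rw [hS, Finset.mem_filter]
        exact ⟨Finset.mem_univ _, fun hh => hr (by rw [hh]; rfl)⟩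
      rw [hcon] at hmem
      exact absurd hmem (Finset.notMem_empty r)
    rw [← inv_inv σ, hid, inv_one]
  set r₀ : Fin t := S.min' hSne with hr₀def
  have hr₀S : r₀ ∈ S := S.min'_mem hSne
  have hr₀ : σ⁻¹ r₀ ≠ r₀ := by
    rw [hS] at hr₀S
    exact (Finset.mem_filter.1 hr₀S).2
  have hfix : ∀ r : Fin t, r < r₀ → σ⁻¹ r = r := by
    intro r hr
    by_contra hcon
    have hmem : r ∈ S := by rw [hS, Finset.mem_filter]; exact ⟨Finset.mem_univ _, hcon⟩
    exact absurd (S.min'_le r hmem) (not_le.2 hr)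
  have hgt : r₀ < σ⁻¹ r₀ := by
    rcases lt_trichotomy (σ⁻¹ r₀) r₀ with hlt | heq | hgt
    · exfalso
      have h1 := hfix _ hlt
      exact hr₀ (σ⁻¹.injective h1)
    · exact absurd heq hr₀
    · exact hgt
  apply mlex_lt_of t n _ _ (r₀, colF h i r₀)
  · rintro ⟨r, c⟩ hw
    simp only [vkey] at hw
    rw [Em_apply, Em_apply, inv_one, Equiv.Perm.one_apply]
    rcases lt_trichotomy r.1 r₀.1 with hlt | heq | hgt'
    · rw [hfix r (Fin.lt_def.2 hlt)]
    · have hrr : r = r₀ := Fin.ext heq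
      subst hrr
      have hcv : (colF h i r₀).1 = i.1 + r₀.1 := rfl
      rw [hcv] at hw
      have hc : c.1 < i.1 + r₀.1 := Nat.lt_of_add_lt_add_right hw
      have h3 : r₀.1 < (σ⁻¹ r₀).1 := Fin.lt_def.1 hgt
      rw [if_neg (fun hcc => by
          have hval : c.1 = i.1 + (σ⁻¹ r₀).1 := congrArg Fin.val hcc
          omega),
        if_neg (fun hcc => by
          have hval : c.1 = i.1 + r₀.1 := congrArg Fin.val hcc
          omega)]
    · exfalso
      have := vkey_lt_of_fst (t := t) (n := n) (b := colF h i r₀) (b' := c) hgt'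
      simp only [vkey] at this
      omega
  · rw [Em_apply, Em_apply, inv_one, Equiv.Perm.one_apply]
    have h3 : r₀.1 < (σ⁻¹ r₀).1 := Fin.lt_def.1 hgt
    rw [if_neg (fun hcc : colF h i r₀ = colF h i (σ⁻¹ r₀) => by
        have hval : (colF h i r₀).1 = (colF h i (σ⁻¹ r₀)).1 := congrArg Fin.val hcc
        have e1 : (colF h i r₀).1 = i.1 + r₀.1 := rfl
        have e2 : (colF h i (σ⁻¹ r₀)).1 = i.1 + (σ⁻¹ r₀).1 := rfl
        omega), if_pos rfl]
    omega

end Minors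

section MinorPoly

variable {K : Type*} [Field K] {t n : ℕ} (h : t ≤ n)

lemma X_eq_monomial (v : Fin t × Fin n) :
    (X v : MvPolynomial (Fin t × Fin n) K) = MvPolynomial.monomial (Finsupp.single v 1) 1 := by
  rw [← pow_one (X v : MvPolynomial (Fin t × Fin n) K), MvPolynomial.X_pow_eq_monomial]

lemma prod_X (v : Fin t → Fin t × Fin n) :
    (∏ a : Fin t, (X (v a) : MvPolynomial (Fin t × Fin n) K))
      = MvPolynomial.monomial (∑ a : Fin t, Finsupp.single (v a) 1) 1 := by
  classical
  have key : ∀ s : Finset (Fin t), (∏ a ∈ s, (X (v a) : MvPolynomial (Fin t × Fin n) K))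
      = MvPolynomial.monomial (∑ a ∈ s, Finsupp.single (v a) 1) 1 := by
    intro s
    induction s using Finset.induction_on with
    | empty => simp
    | insert _ _ hmem ih =>
      rw [Finset.prod_insert hmem, Finset.sum_insert hmem, ih, X_eq_monomial,
        MvPolynomial.monomial_mul, one_mul]
  exact key Finset.univ

lemma consMinor_eq (i : Fin (n - t + 1)) :
    consMinor K t n h i = ∑ σ : Equiv.Perm (Fin t),
      MvPolynomial.monomial (Em h i σ) (((Equiv.Perm.sign σ : ℤ) : K)) := by
  rw [consMinor, Matrix.det_apply']
  refine Finset.sum_congr rfl fun σ _ => ?_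
  have hterm : (∏ a : Fin t, (Matrix.of fun a b : Fin t =>
      (X (a, ⟨i.1 + b.1, by have := i.2; have := b.2; omega⟩) :
        MvPolynomial (Fin t × Fin n) K)) (σ a) a)
      = MvPolynomial.monomial (Em h i σ) 1 := by
    have : ∀ a : Fin t, (Matrix.of fun a b : Fin t =>
        (X (a, ⟨i.1 + b.1, by have := i.2; have := b.2; omega⟩) :
          MvPolynomial (Fin t × Fin n) K)) (σ a) a = X (σ a, colF h i a) := fun a => rfl
    rw [Finset.prod_congr rfl fun a _ => this a, prod_X, Em]
  rw [hterm]
  rw [show ((((Equiv.Perm.sign σ : ℤ)) : MvPolynomial (Fin t × Fin n) K))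
      = MvPolynomial.C (((Equiv.Perm.sign σ : ℤ) : K)) by
    rw [map_intCast]]
  rw [MvPolynomial.C_mul_monomial, mul_one]

lemma consMinor_coeff (i : Fin (n - t + 1)) (d : (Fin t × Fin n) →₀ ℕ) :
    (consMinor K t n h i).coeff d = ∑ σ : Equiv.Perm (Fin t),
      (if Em h i σ = d then (((Equiv.Perm.sign σ : ℤ) : K)) else 0) := by
  classical
  rw [consMinor_eq h i, MvPolynomial.coeff_sum]
  exact Finset.sum_congr rfl fun σ _ => MvPolynomial.coeff_monomial d (Em h i σ) _

lemma consMinor_coeff_top (i : Fin (n - t + 1)) :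
    (consMinor K t n h i).coeff (Em h i 1) = 1 := by
  classical
  rw [consMinor_coeff h i]
  rw [Finset.sum_eq_single (1 : Equiv.Perm (Fin t))]
  · rw [if_pos rfl]
    simp
  · intro σ _ hσ
    rw [if_neg fun hh => (ne_of_lt (Em_lt h i σ hσ)) (congrArg (mlex t n).toSyn hh)]
  · intro habs
    exact absurd (Finset.mem_univ _) habs

lemma consMinor_mdeg (i : Fin (n - t + 1)) :
    mdeg (mlex t n) (consMinor K t n h i) = (mlex t n).toSyn (Em h i 1) := by
  classical
  refine le_antisymm ?_ ?_
  · rw [mdeg_le_iff]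
    intro d hd
    have hne := MvPolynomial.mem_support_iff.1 hd
    have hex : ∃ σ : Equiv.Perm (Fin t), Em h i σ = d := by
      by_contra hcon
      push_neg at hcon
      rw [consMinor_coeff h i] at hne
      exact hne (Finset.sum_eq_zero fun σ _ => if_neg (hcon σ))
    obtain ⟨σ, rfl⟩ := hex
    rcases eq_or_ne σ 1 with rfl | hσ
    · exact le_refl _
    · exact le_of_lt (Em_lt h i σ hσ)
  · refine le_mdeg (MvPolynomial.mem_support_iff.2 ?_)
    rw [consMinor_coeff_top h i]
    exact one_ne_zero

lemma consMinor_mlc (i : Fin (n - t + 1)) :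
    mlc (mlex t n) (consMinor K t n h i) = 1 := by
  rw [mlc, consMinor_mdeg h i, AddEquiv.symm_apply_apply, consMinor_coeff_top h i]

lemma Em_disj (i i' : Fin (n - t + 1)) (hne : i ≠ i') (x : Fin t × Fin n) :
    Em h i 1 x = 0 ∨ Em h i' 1 x = 0 := by
  obtain ⟨r, c⟩ := x
  rw [Em_apply, Em_apply, inv_one, Equiv.Perm.one_apply]
  by_cases h1 : c = colF h i r
  · by_cases h2 : c = colF h i' r
    · exfalso
      apply hne
      have hv1 : c.1 = i.1 + r.1 := congrArg Fin.val h1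
      have hv2 : c.1 = i'.1 + r.1 := congrArg Fin.val h2
      exact Fin.ext (by omega)
    · right
      rw [if_neg h2]
  · left
    rw [if_neg h1]

end MinorPoly

end Stmt6Aux

section Assembly

variable (K : Type*) [Field K] (t n : ℕ)

lemma constantCoeff_consMinor (ht : 0 < t) (h : t ≤ n) (i : Fin (n - t + 1)) :
    constantCoeff (consMinor K t n h i) = 0 := by
  rw [consMinor, RingHom.map_det]
  have hmap : (constantCoeff : MvPolynomial (Fin t × Fin n) K →+* K).mapMatrix
      (Matrix.of fun a b : Fin t =>
      (X (a, ⟨i.1 + b.1, by have := i.2; have := b.2; omega⟩) :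
        MvPolynomial (Fin t × Fin n) K)) = 0 := by
    ext a b
    simp [RingHom.mapMatrix_apply, Matrix.map_apply]
  rw [hmap]
  haveI : Nonempty (Fin t) := ⟨⟨0, ht⟩⟩
  exact Matrix.det_zero

lemma smul_top_le (I : Ideal (MvPolynomial (Fin t × Fin n) K)) :
    I • (⊤ : Submodule (MvPolynomial (Fin t × Fin n) K) (MvPolynomial (Fin t × Fin n) K)) ≤ I :=
  Submodule.smul_le.2 fun r hr m _ => by
    rw [smul_eq_mul]
    exact I.mul_mem_right m hr

lemma take_span_eq (h : t ≤ n) (k : ℕ) (hk : k ≤ n - t + 1) :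
    Ideal.ofList ((List.ofFn (consMinor K t n h)).take k)
      = Ideal.span (Set.range fun j : Fin k => consMinor K t n h (Fin.castLE hk j)) := by
  have hset : {r | r ∈ (List.ofFn (consMinor K t n h)).take k}
      = Set.range (fun j : Fin k => consMinor K t n h (Fin.castLE hk j)) := by
    ext x
    constructor
    · intro hx
      obtain ⟨i, hi, hix⟩ := List.mem_take_iff_getElem.1 hx
      have hilen : i < k := lt_of_lt_of_le hi (min_le_left _ _)
      refine ⟨⟨i, hilen⟩, ?_⟩
      rw [← hix, List.getElem_ofFn]
      rfl
    · intro hx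
      obtain ⟨j, rfl⟩ := hx
      apply List.mem_take_iff_getElem.2
      refine ⟨j.1, ?_, ?_⟩
      · simp only [List.length_ofFn]
        exact lt_min j.2 (lt_of_lt_of_le j.2 hk)
      · rw [List.getElem_ofFn]
        rfl
  exact congrArg Ideal.span hset

end Assembly

open Stmt6Aux in
theorem stmt6' (K : Type*) [Field K] (t n : ℕ) (ht : 0 < t) (h : t ≤ n) :
    RingTheory.Sequence.IsRegular (MvPolynomial (Fin t × Fin n) K)
        (List.ofFn (consMinor K t n h)) ∧
      (List.ofFn (consMinor K t n h)).length = n - t + 1 ∧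
      ∀ i : Fin (n - t + 1), consMinor K t n h i ∈ maxMinorsIdeal K t n := by
  classical
  set R' := MvPolynomial (Fin t × Fin n) K
  refine ⟨?_, List.length_ofFn, ?_⟩
  · rw [RingTheory.Sequence.isRegular_iff]
    constructor
    · -- weakly regular
      refine ⟨?_⟩
      intro k hk
      rw [List.length_ofFn] at hk
      have hk' : k ≤ n - t + 1 := le_of_lt hk
      -- identify the ideal
      have hIdeq : (Ideal.ofList ((List.ofFn (consMinor K t n h)).take k) •
            (⊤ : Submodule R' R') : Submodule R' R')
          = (Ideal.span (Set.range fun j : Fin k => consMinor K t n h (Fin.castLE hk' j)) :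
              Ideal R') := by
        rw [smul_eq_mul, Ideal.mul_top, take_span_eq K t n h k hk']
      have hElem : (List.ofFn (consMinor K t n h))[k]'(by rw [List.length_ofFn]; exact hk)
          = consMinor K t n h ⟨k, hk⟩ := by
        rw [List.getElem_ofFn]
      rw [hElem]
      -- now the regularity statement
      intro x y hxy
      obtain ⟨a, rfl⟩ := Submodule.Quotient.mk_surjective _ x
      obtain ⟨b, rfl⟩ := Submodule.Quotient.mk_surjective _ y
      simp only [← Submodule.Quotient.mk_smul] at hxy
      rw [Submodule.Quotient.eq] at hxy
      rw [Submodule.Quotient.eq]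
      rw [hIdeq] at hxy ⊢
      have hmul : (a - b) * consMinor K t n h ⟨k, hk⟩
          = consMinor K t n h ⟨k, hk⟩ • a - consMinor K t n h ⟨k, hk⟩ • b := by
        rw [smul_eq_mul, smul_eq_mul]
        ring
      have hmem : (a - b) * consMinor K t n h ⟨k, hk⟩ ∈
          Ideal.span (Set.range fun j : Fin k => consMinor K t n h (Fin.castLE hk' j)) := by
        rw [hmul]
        exact hxy
      refine lemB (m := mlex t n)
        (fun j : Fin k => consMinor K t n h (Fin.castLE hk' j))
        (fun j : Fin k => Em h (Fin.castLE hk' j) 1)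
        (fun j => consMinor_mdeg h _)
        (fun j => consMinor_mlc h _)
        (fun j l hjl x => Em_disj h _ _
          (fun hh => hjl (by
            have := congrArg Fin.val hh
            exact Fin.ext this)) x)
        (consMinor K t n h ⟨k, hk⟩) (Em h ⟨k, hk⟩ 1)
        (consMinor_mdeg h _) (consMinor_mlc h _)
        (fun j x => Em_disj h _ _
          (fun hh => by
            have := congrArg Fin.val hh
            have hj2 := j.2
            simp only [Fin.coe_castLE] at this
            omega) x)
        (a - b) hmem
    · -- properness
      intro hcon
      have h1 : (1 : R') ∈ Ideal.ofList (List.ofFn (consMinor K t n h)) •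
          (⊤ : Submodule R' R') := by
        rw [← hcon]
        exact Submodule.mem_top
      have h2 : (1 : R') ∈ Ideal.ofList (List.ofFn (consMinor K t n h)) :=
        smul_top_le K t n _ h1
      have hker : Ideal.ofList (List.ofFn (consMinor K t n h))
          ≤ RingHom.ker (constantCoeff : R' →+* K) := by
        apply Ideal.span_le.2
        rintro x hx
        obtain ⟨i, rfl⟩ := List.mem_ofFn.1 hx
        exact constantCoeff_consMinor K t n ht h i
      have := hker h2
      rw [RingHom.mem_ker, map_one] at this
      exact one_ne_zero this
  · intro i
    refine Ideal.subset_span ⟨colF h i, ?_, rfl⟩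
    intro b b' hbb
    have hval : i.1 + b.1 = i.1 + b'.1 := congrArg Fin.val hbb
    exact Fin.ext (by omega)

/-- Let `K` be a field, `X` a `t × n` matrix of indeterminates with `n ≥ t`,
and `R = K[X]`.  The consecutive-column maximal minors `[1,t], [2,t+1], …, [n−t+1, n]` form a
regular sequence of length `n − t + 1` in `R`, contained in the ideal `I_t(X)` of maximal
minors. -/
theorem stmt6 (K : Type*) [Field K] (t n : ℕ) (ht : 0 < t) (h : t ≤ n) :
    RingTheory.Sequence.IsRegular (MvPolynomial (Fin t × Fin n) K)
        (List.ofFn (consMinor K t n h)) ∧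
      (List.ofFn (consMinor K t n h)).length = n - t + 1 ∧
      ∀ i : Fin (n - t + 1), consMinor K t n h i ∈ maxMinorsIdeal K t n :=
  stmt6' K t n ht h
end

section
/- Let K be a field of characteristic p > 0, X = (x_{i,j}) a t × n matrix of indeterminates with n ≥ t > 1, R = K[X], and 𝔪 the ideal generated by all the variables x_{i,j}. Let [i, t+i−1] denote the maximal minor of X on columns i through t+i−1. Then x_{1,n} · ([1,t]·[2,t+1]⋯[n−t+1,n])^{p−1} ∉ 𝔪^{[p]}, where 𝔪^{[p]} = (x_{i,j}^p : all i,j). -/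
open MvPolynomial

namespace Stmt7Aux

variable {τ : Type*} [DecidableEq τ] {R : Type*} [CommRing R]

/-- `d` is the unique monomial of `P` of maximal weight (if it occurs at all). -/
def IsTop (w : τ → ℕ) (P : MvPolynomial τ R) (d : τ →₀ ℕ) : Prop :=
  ∀ m ∈ P.support,
    Finsupp.weight w m ≤ Finsupp.weight w d ∧
      (Finsupp.weight w m = Finsupp.weight w d → m = d)

lemma isTop_monomial (w : τ → ℕ) (d : τ →₀ ℕ) (c : R) : IsTop w (monomial d c) d := by
  intro m hm
  have hmem := support_monomial_subset hm
  simp only [Finset.mem_singleton] at hmem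
  subst hmem
  exact ⟨le_rfl, fun _ => rfl⟩

lemma isTop_one (w : τ → ℕ) : IsTop w (1 : MvPolynomial τ R) 0 := by
  have h := isTop_monomial (R := R) w 0 1
  rwa [monomial_zero', C_1] at h

lemma IsTop.mul {w : τ → ℕ} {P Q : MvPolynomial τ R} {d e : τ →₀ ℕ}
    (hP : IsTop w P d) (hQ : IsTop w Q e) : IsTop w (P * Q) (d + e) := by
  intro m hm
  obtain ⟨a, ha, b, hb, rfl⟩ := Finset.mem_add.mp (support_mul P Q hm)
  obtain ⟨ha1, ha2⟩ := hP a ha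
  obtain ⟨hb1, hb2⟩ := hQ b hb
  rw [map_add, map_add]
  refine ⟨add_le_add ha1 hb1, fun hsum => ?_⟩
  have h1 : Finsupp.weight w a = Finsupp.weight w d := by omega
  have h2 : Finsupp.weight w b = Finsupp.weight w e := by omega
  rw [ha2 h1, hb2 h2]

lemma IsTop.coeff_mul {w : τ → ℕ} {P Q : MvPolynomial τ R} {d e : τ →₀ ℕ}
    (hP : IsTop w P d) (hQ : IsTop w Q e) :
    coeff (d + e) (P * Q) = coeff d P * coeff e Q := by
  rw [MvPolynomial.coeff_mul]
  apply Finset.sum_eq_single_of_mem (d, e)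
  · rw [Finset.HasAntidiagonal.mem_antidiagonal]
  · rintro ⟨a, b⟩ hab hne
    rw [Finset.HasAntidiagonal.mem_antidiagonal] at hab
    by_cases hca : coeff a P = 0
    · simp [hca]
    by_cases hcb : coeff b Q = 0
    · simp [hcb]
    exfalso
    obtain ⟨ha1, ha2⟩ := hP a (mem_support_iff.mpr hca)
    obtain ⟨hb1, hb2⟩ := hQ b (mem_support_iff.mpr hcb)
    have hw : Finsupp.weight w a + Finsupp.weight w b =
        Finsupp.weight w d + Finsupp.weight w e := by
      rw [← map_add, ← map_add, hab]
    have h1 : Finsupp.weight w a = Finsupp.weight w d := by omega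
    have h2 : Finsupp.weight w b = Finsupp.weight w e := by omega
    exact hne (by rw [ha2 h1, hb2 h2])

lemma isTop_prod {ι : Type*} (w : τ → ℕ) (s : Finset ι) (P : ι → MvPolynomial τ R)
    (d : ι → τ →₀ ℕ) (hp : ∀ i ∈ s, IsTop w (P i) (d i)) :
    IsTop w (∏ i ∈ s, P i) (∑ i ∈ s, d i) ∧
      coeff (∑ i ∈ s, d i) (∏ i ∈ s, P i) = ∏ i ∈ s, coeff (d i) (P i) := by
  classical
  induction s using Finset.cons_induction with
  | empty =>
    simp only [Finset.prod_empty, Finset.sum_empty]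
    exact ⟨isTop_one w, by simp⟩
  | cons a s ha ih =>
    rw [Finset.prod_cons, Finset.sum_cons, Finset.prod_cons]
    have hPa := hp a (Finset.mem_cons_self a s)
    obtain ⟨ih1, ih2⟩ := ih (fun i hi => hp i (Finset.mem_cons_of_mem hi))
    exact ⟨hPa.mul ih1, by rw [hPa.coeff_mul ih1, ih2]⟩

lemma X_eq_monomial (v : τ) : (X v : MvPolynomial τ R) = monomial (Finsupp.single v 1) 1 := by
  rw [← pow_one (X v : MvPolynomial τ R), X_pow_eq_monomial]

lemma prod_X {ι : Type*} (s : Finset ι) (f : ι → τ) :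
    ∏ i ∈ s, (X (f i) : MvPolynomial τ R) =
      monomial (∑ i ∈ s, Finsupp.single (f i) 1) 1 := by
  classical
  induction s using Finset.cons_induction with
  | empty => rw [Finset.prod_empty, Finset.sum_empty, monomial_zero', C_1]
  | cons a s ha ih =>
    rw [Finset.prod_cons, Finset.sum_cons, ih, X_eq_monomial, monomial_mul, one_mul]

lemma weight_single_one (w : τ → ℕ) (v : τ) :
    Finsupp.weight w (Finsupp.single v 1) = w v := by
  rw [Finsupp.weight_apply, Finsupp.sum_single_index] <;> simp

/-- Strict rearrangement for the identity weights on `Fin t`. -/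
lemma perm_sum (t : ℕ) (σ : Equiv.Perm (Fin t)) :
    (∑ x : Fin t, (σ x : ℕ) * (x : ℕ)) ≤ (∑ x : Fin t, (x : ℕ) * (x : ℕ)) ∧
      ((∑ x : Fin t, (σ x : ℕ) * (x : ℕ)) = (∑ x : Fin t, (x : ℕ) * (x : ℕ)) → σ = 1) := by
  have h1 : (∑ x : Fin t, ((σ x : ℕ) : ℤ) * ((σ x : ℕ) : ℤ))
      = ∑ x : Fin t, ((x : ℕ) : ℤ) * ((x : ℕ) : ℤ) :=
    Equiv.sum_comp σ (fun y : Fin t => ((y : ℕ) : ℤ) * ((y : ℕ) : ℤ))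
  have hsq : ∑ x : Fin t, (((σ x : ℕ) : ℤ) - ((x : ℕ) : ℤ)) ^ 2
      = 2 * (∑ x : Fin t, ((x : ℕ) : ℤ) * ((x : ℕ) : ℤ))
        - 2 * ∑ x : Fin t, ((σ x : ℕ) : ℤ) * ((x : ℕ) : ℤ) := by
    have expand : ∀ x : Fin t, (((σ x : ℕ) : ℤ) - ((x : ℕ) : ℤ)) ^ 2
        = ((σ x : ℕ) : ℤ) * ((σ x : ℕ) : ℤ)
          - 2 * (((σ x : ℕ) : ℤ) * ((x : ℕ) : ℤ)) + ((x : ℕ) : ℤ) * ((x : ℕ) : ℤ) := by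
      intro x; ring
    rw [Finset.sum_congr rfl (fun x _ => expand x), Finset.sum_add_distrib,
      Finset.sum_sub_distrib, h1, ← Finset.mul_sum]
    ring
  have hnonneg : (0 : ℤ) ≤ ∑ x : Fin t, (((σ x : ℕ) : ℤ) - ((x : ℕ) : ℤ)) ^ 2 :=
    Finset.sum_nonneg fun x _ => sq_nonneg _
  have hcast1 : ((∑ x : Fin t, (σ x : ℕ) * (x : ℕ) : ℕ) : ℤ)
      = ∑ x : Fin t, ((σ x : ℕ) : ℤ) * ((x : ℕ) : ℤ) := by push_cast; rfl
  have hcast2 : ((∑ x : Fin t, (x : ℕ) * (x : ℕ) : ℕ) : ℤ)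
      = ∑ x : Fin t, ((x : ℕ) : ℤ) * ((x : ℕ) : ℤ) := by push_cast; rfl
  constructor
  · have : (((∑ x : Fin t, (σ x : ℕ) * (x : ℕ) : ℕ)) : ℤ)
        ≤ ((∑ x : Fin t, (x : ℕ) * (x : ℕ) : ℕ) : ℤ) := by
      rw [hcast1, hcast2]; omega
    exact_mod_cast this
  · intro heq
    have hz : ∑ x : Fin t, (((σ x : ℕ) : ℤ) - ((x : ℕ) : ℤ)) ^ 2 = 0 := by
      have : ((∑ x : Fin t, (σ x : ℕ) * (x : ℕ) : ℕ) : ℤ)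
          = ((∑ x : Fin t, (x : ℕ) * (x : ℕ) : ℕ) : ℤ) := by exact_mod_cast heq
      rw [hcast1, hcast2] at this
      omega
    have hall := (Finset.sum_eq_zero_iff_of_nonneg (fun x _ => sq_nonneg _)).mp hz
    ext x
    have hx := hall x (Finset.mem_univ x)
    have : ((σ x : ℕ) : ℤ) = ((x : ℕ) : ℤ) := by
      have := sq_eq_zero_iff.mp hx
      omega
    have hval : (σ x : ℕ) = (x : ℕ) := by exact_mod_cast this
    simpa [Fin.ext_iff] using hval

lemma det_top {t : ℕ} (w : τ → ℕ) (E : Fin t → Fin t → τ)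
    (hle : ∀ σ : Equiv.Perm (Fin t), (∑ x, w (E (σ x) x)) ≤ ∑ x, w (E x x))
    (heq : ∀ σ : Equiv.Perm (Fin t), (∑ x, w (E (σ x) x)) = (∑ x, w (E x x)) → σ = 1) :
    IsTop w (Matrix.det (Matrix.of fun a b : Fin t => (X (E a b) : MvPolynomial τ R)))
        (∑ x, Finsupp.single (E x x) 1) ∧
      coeff (∑ x, Finsupp.single (E x x) 1)
        (Matrix.det (Matrix.of fun a b : Fin t => (X (E a b) : MvPolynomial τ R))) = 1 := by
  classical
  set mId : τ →₀ ℕ := ∑ x, Finsupp.single (E x x) 1 with hmId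
  set mσ : Equiv.Perm (Fin t) → (τ →₀ ℕ) :=
    fun σ => ∑ x, Finsupp.single (E (σ x) x) 1 with hmσ
  have hwσ : ∀ σ : Equiv.Perm (Fin t),
      Finsupp.weight w (mσ σ) = ∑ x, w (E (σ x) x) := by
    intro σ
    rw [hmσ, map_sum]
    exact Finset.sum_congr rfl fun x _ => weight_single_one w _
  have hwId : Finsupp.weight w mId = ∑ x, w (E x x) := by
    rw [hmId, map_sum]
    exact Finset.sum_congr rfl fun x _ => weight_single_one w _
  have hm1 : mσ 1 = mId := by
    rw [hmσ, hmId]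
    exact Finset.sum_congr rfl fun x _ => by rw [Equiv.Perm.one_apply]
  have huniq : ∀ σ : Equiv.Perm (Fin t), mσ σ = mId → σ = 1 := by
    intro σ hs
    exact heq σ (by rw [← hwσ σ, hs, hwId])
  have hdet : Matrix.det (Matrix.of fun a b : Fin t => (X (E a b) : MvPolynomial τ R))
      = ∑ σ : Equiv.Perm (Fin t),
          monomial (mσ σ) ((((Equiv.Perm.sign σ : ℤ) : R))) := by
    rw [Matrix.det_apply']
    refine Finset.sum_congr rfl fun σ _ => ?_
    have hp : ∏ x, (Matrix.of fun a b : Fin t => (X (E a b) : MvPolynomial τ R)) (σ x) x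
        = monomial (mσ σ) (1 : R) := by
      simp only [Matrix.of_apply]
      exact prod_X Finset.univ fun x => E (σ x) x
    rw [hp, ← map_intCast (C : R →+* MvPolynomial τ R), C_mul_monomial, mul_one]
  constructor
  · intro m hm
    rw [hdet] at hm
    obtain ⟨σ, _, hmem⟩ := Finset.mem_biUnion.mp (support_sum hm)
    have hmeq : m = mσ σ := by
      have := support_monomial_subset hmem
      simpa using this
    subst hmeq
    rw [hwσ σ, hwId]
    exact ⟨hle σ, fun hq => by rw [heq σ hq, hm1]⟩
  · rw [hdet, coeff_sum]
    rw [Finset.sum_eq_single_of_mem 1 (Finset.mem_univ 1)]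
    · rw [coeff_monomial, if_pos hm1]
      simp
    · intro σ _ hσ
      rw [coeff_monomial, if_neg]
      intro hcon
      exact hσ (huniq σ hcon)

lemma not_mem_span (q : ℕ) (f : MvPolynomial τ R) (m : τ →₀ ℕ)
    (hm : ∀ v, m v < q) (hc : coeff m f ≠ 0) :
    f ∉ Ideal.span (Set.range fun v : τ => (X v : MvPolynomial τ R) ^ q) := by
  intro hf
  apply hc
  have key := Submodule.span_induction
    (p := fun (x : MvPolynomial τ R) _ =>
      ∀ m' : τ →₀ ℕ, (∀ v, m' v < q) → coeff m' x = 0)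
    ?_ ?_ ?_ ?_ hf
  · exact key m hm
  · rintro x ⟨v, rfl⟩ m' hm'
    have hv : coeff m' ((X v : MvPolynomial τ R) ^ q) = 0 := by
      rw [X_pow_eq_monomial, coeff_monomial, if_neg]
      intro hEq
      have h1 := hm' v
      rw [← hEq, Finsupp.single_eq_same] at h1
      omega
    simpa using hv
  · intro m' _
    simp
  · intro x y _ _ hx hy m' hm'
    rw [coeff_add, hx m' hm', hy m' hm', add_zero]
  · intro a x _ hx m' hm'
    rw [smul_eq_mul, MvPolynomial.coeff_mul]
    apply Finset.sum_eq_zero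
    rintro ⟨u, z⟩ hmem
    rw [Finset.HasAntidiagonal.mem_antidiagonal] at hmem
    have hz : ∀ v, z v < q := by
      intro v
      have h1 : (u + z) v = m' v := by rw [hmem]
      rw [Finsupp.add_apply] at h1
      have := hm' v
      omega
    rw [hx z hz, mul_zero]

end Stmt7Aux

/-- Let `K` be a field of characteristic `p > 0`, `X` a `t × n` matrix of
indeterminates with `n ≥ t > 1`, `R = K[X]`, and `𝔪` the ideal generated by all the
variables.  Then `x_{1,n} · ([1,t]·[2,t+1]⋯[n−t+1,n])^{p−1} ∉ 𝔪^{[p]}`, where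
`𝔪^{[p]} = (x_{i,j}^p)`. -/
theorem stmt7 (K : Type*) [Field K] (p : ℕ) [Fact p.Prime] [CharP K p]
    (t n : ℕ) (ht : 1 < t) (h : t ≤ n) :
    (X ((⟨0, by omega⟩ : Fin t), (⟨n - 1, by omega⟩ : Fin n)) :
        MvPolynomial (Fin t × Fin n) K) *
      (∏ i : Fin (n - t + 1), consMinor K t n h i) ^ (p - 1) ∉
    Ideal.span (Set.range fun v : Fin t × Fin n =>
      (X v : MvPolynomial (Fin t × Fin n) K) ^ p) := by
  classical
  have hp2 : 2 ≤ p := (Fact.out : p.Prime).two_le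
  set v0 : Fin t × Fin n :=
    ((⟨0, by omega⟩ : Fin t), (⟨n - 1, by omega⟩ : Fin n)) with hv0
  set w : Fin t × Fin n → ℕ := fun v => v.1.1 * v.2.1 with hw
  set E : Fin (n - t + 1) → Fin t → Fin t → Fin t × Fin n := fun i a b =>
    (a, ⟨i.1 + b.1, by have := i.2; have := b.2; omega⟩) with hE
  set D : Fin (n - t + 1) → ((Fin t × Fin n) →₀ ℕ) :=
    fun i => ∑ x : Fin t, Finsupp.single (E i x x) 1 with hD
  have minor_top : ∀ i, Stmt7Aux.IsTop w (consMinor K t n h i) (D i) ∧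
      coeff (D i) (consMinor K t n h i) = 1 := by
    intro i
    have hEw : ∀ (f : Fin t → Fin t) (x : Fin t),
        w (E i (f x) x) = (f x : ℕ) * i.1 + (f x : ℕ) * (x : ℕ) := by
      intro f x
      show (f x : ℕ) * (i.1 + x.1) = _
      ring
    have key : ∀ σ : Equiv.Perm (Fin t),
        (∑ x, w (E i (σ x) x))
          = (∑ x : Fin t, (x : ℕ) * i.1) + ∑ x : Fin t, (σ x : ℕ) * (x : ℕ) := by
      intro σ
      rw [Finset.sum_congr rfl fun x _ => hEw σ x, Finset.sum_add_distrib]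
      congr 1
      exact Equiv.sum_comp σ (fun y : Fin t => (y : ℕ) * i.1)
    have keyId : (∑ x, w (E i x x))
        = (∑ x : Fin t, (x : ℕ) * i.1) + ∑ x : Fin t, (x : ℕ) * (x : ℕ) := by
      simpa using key 1
    have hres := Stmt7Aux.det_top (R := K) w (E i) ?_ ?_
    · exact hres
    · intro σ
      rw [key σ, keyId]
      exact Nat.add_le_add_left (Stmt7Aux.perm_sum t σ).1 _
    · intro σ hs
      rw [key σ, keyId] at hs
      exact (Stmt7Aux.perm_sum t σ).2 (by omega)
  obtain ⟨prodTopAll, prodCoeffAll⟩ := Stmt7Aux.isTop_prod w Finset.univ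
    (fun i => consMinor K t n h i) D (fun i _ => (minor_top i).1)
  have prodCoeff1 : coeff (∑ i, D i) (∏ i, consMinor K t n h i) = 1 := by
    rw [prodCoeffAll, Finset.prod_congr rfl fun i _ => (minor_top i).2,
      Finset.prod_const_one]
  set Q : MvPolynomial (Fin t × Fin n) K := ∏ i, consMinor K t n h i with hQ
  set Dtot : (Fin t × Fin n) →₀ ℕ := ∑ i, D i with hDtot
  have hpow : Q ^ (p - 1) = ∏ _j ∈ Finset.range (p - 1), Q := by
    rw [Finset.prod_const, Finset.card_range]
  obtain ⟨powTop, powCoeff⟩ := Stmt7Aux.isTop_prod w (Finset.range (p - 1))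
    (fun _ => Q) (fun _ => Dtot) (fun _ _ => prodTopAll)
  have powCoeff1 :
      coeff (∑ _j ∈ Finset.range (p - 1), Dtot) (Q ^ (p - 1)) = 1 := by
    rw [hpow, powCoeff, Finset.prod_congr rfl fun _ _ => prodCoeff1,
      Finset.prod_const_one]
  have powTop' : Stmt7Aux.IsTop w (Q ^ (p - 1))
      (∑ _j ∈ Finset.range (p - 1), Dtot) := by
    rw [hpow]; exact powTop
  have xTop : Stmt7Aux.IsTop w (X v0 : MvPolynomial (Fin t × Fin n) K)
      (Finsupp.single v0 1) := by
    rw [Stmt7Aux.X_eq_monomial]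
    exact Stmt7Aux.isTop_monomial w _ 1
  set M : (Fin t × Fin n) →₀ ℕ :=
    Finsupp.single v0 1 + ∑ _j ∈ Finset.range (p - 1), Dtot with hM
  have coeffM : coeff M (X v0 * Q ^ (p - 1)) = 1 := by
    rw [hM, Stmt7Aux.IsTop.coeff_mul xTop powTop', powCoeff1, mul_one,
      Stmt7Aux.X_eq_monomial, coeff_monomial, if_pos rfl]
  have hDapp : ∀ v, Dtot v
      = ∑ i : Fin (n - t + 1), ∑ x : Fin t, (if E i x x = v then (1 : ℕ) else 0) := by
    intro v
    rw [hDtot, Finsupp.finset_sum_apply]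
    refine Finset.sum_congr rfl fun i _ => ?_
    rw [hD, Finsupp.finset_sum_apply]
    exact Finset.sum_congr rfl fun x _ => Finsupp.single_apply
  have hext : ∀ (v : Fin t × Fin n) (z : Fin (n - t + 1) × Fin t),
      E z.1 z.2 z.2 = v → z.2 = v.1 ∧ z.1.1 + z.2.1 = v.2.1 := by
    rintro v z hz
    rw [hE, Prod.ext_iff] at hz
    exact ⟨hz.1, by have := congrArg Fin.val hz.2; simpa using this⟩
  have hDle : ∀ v : Fin t × Fin n, Dtot v ≤ 1 := by
    intro v
    rw [hDapp v]
    have inner : ∀ i : Fin (n - t + 1),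
        (∑ x : Fin t, if E i x x = v then (1 : ℕ) else 0)
          = if E i v.1 v.1 = v then (1 : ℕ) else 0 := by
      intro i
      apply Finset.sum_eq_single v.1
      · intro x _ hx
        apply if_neg
        intro hcon
        exact hx (hext v (i, x) hcon).1
      · intro habs
        exact absurd (Finset.mem_univ _) habs
    rw [Finset.sum_congr rfl fun i _ => inner i, Finset.sum_boole, Nat.cast_id]
    apply Finset.card_le_one.mpr
    intro a ha b hb
    rw [Finset.mem_filter] at ha hb
    have h1 : a.1 + v.1.1 = v.2.1 := (hext v (a, v.1) ha.2).2
    have h2 : b.1 + v.1.1 = v.2.1 := (hext v (b, v.1) hb.2).2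
    apply Fin.ext
    omega
  have hD0 : Dtot v0 = 0 := by
    rw [hDapp v0]
    apply Finset.sum_eq_zero; intro i _
    apply Finset.sum_eq_zero; intro x _
    rw [if_neg]
    intro hcon
    obtain ⟨hx, hsum⟩ := hext v0 (i, x) hcon
    have hx0 : x.1 = 0 := by rw [hv0] at hx; exact congrArg Fin.val hx
    have hs : i.1 + x.1 = n - 1 := by rw [hv0] at hsum; exact hsum
    have := i.2
    omega
  have hMlt : ∀ v, M v < p := by
    intro v
    rw [hM, Finsupp.add_apply, Finsupp.finset_sum_apply, Finset.sum_const,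
      Finset.card_range, smul_eq_mul]
    by_cases hv : v = v0
    · subst hv
      rw [hD0, Finsupp.single_eq_same]
      omega
    · rw [Finsupp.single_eq_of_ne' fun hh => hv hh.symm]
      have hle := hDle v
      have := Nat.mul_le_mul_left (p - 1) hle
      omega
  have hne : coeff M (X v0 * Q ^ (p - 1)) ≠ 0 := by
    rw [coeffM]; exact one_ne_zero
  exact Stmt7Aux.not_mem_span p _ M hMlt hne
end

section
/- Let K be a field and X = (x_{i,j}) an m × n matrix of indeterminates with m, n ≥ 2, R = K[X]. Let Y = (y_{i,j}), 2 ≤ i ≤ m, 2 ≤ j ≤ n, be a new matrix of indeterminates and R' = K[Y]. Then the map sending y_{i,j} to x_{i,j} − x_{i,1}x_{1,j}x_{1,1}^{−1} extends to a K-algebra isomorphism R'[x_{1,1},…,x_{m,1}, x_{1,2},…,x_{1,n}]_{x_{1,1}} ≅ R_{x_{1,1}}, and under this isomorphism I_t(X) R_{x_{1,1}} = I_{t−1}(Y) R_{x_{1,1}} for every t ≥ 1. -/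
open MvPolynomial

/-- The ideal `I_k(M)` generated by the `k × k` minors of a matrix `M` (for `k = 0` this is
the unit ideal). -/
noncomputable def minorsIdeal {R : Type*} [CommRing R] {m n : Type*} (k : ℕ)
    (M : Matrix m n R) : Ideal R :=
  Ideal.span {d | ∃ (r : Fin k → m) (c : Fin k → n), Function.Injective r ∧
    Function.Injective c ∧ d = (Matrix.of fun a b => M (r a) (c b)).det}

/-- Index type for the polynomial ring `R'[x_{1,1},…,x_{m,1}, x_{1,2},…,x_{1,n}]`, where
`R' = K[Y]` for the `(m-1) × (n-1)` matrix of indeterminates `Y`: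
variables `y_{i,j}` (left), the first column `x_{1,1},…,x_{m,1}` (middle) and the rest
`x_{1,2},…,x_{1,n}` of the first row (right). -/
abbrev Stmt8Vars (m n : ℕ) : Type :=
  (Fin (m - 1) × Fin (n - 1)) ⊕ (Fin m ⊕ Fin (n - 1))


set_option synthInstance.maxHeartbeats 1000000
set_option maxHeartbeats 1000000

namespace MinorsAux
open Matrix

variable {A : Type*} [CommRing A]

lemma det_mem_minorsIdeal {m n : Type*} (k : ℕ) (M : Matrix m n A)
    {r : Fin k → m} {c : Fin k → n} (hr : Function.Injective r) (hc : Function.Injective c) :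
    (Matrix.of fun a b => M (r a) (c b)).det ∈ minorsIdeal k M :=
  Ideal.subset_span ⟨r, c, hr, hc, rfl⟩

lemma minors_transpose {m n : Type*} (k : ℕ) (M : Matrix m n A) :
    minorsIdeal k Mᵀ = minorsIdeal k M := by
  unfold minorsIdeal
  congr 1
  ext d
  constructor
  · rintro ⟨r, c, hr, hc, rfl⟩
    refine ⟨c, r, hc, hr, ?_⟩
    rw [show (Matrix.of fun a b => Mᵀ (r a) (c b)) = (Matrix.of fun a b => M (c a) (r b))ᵀ from rfl,
      Matrix.det_transpose]
  · rintro ⟨r, c, hr, hc, rfl⟩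
    refine ⟨c, r, hc, hr, ?_⟩
    rw [show (Matrix.of fun a b => Mᵀ (c a) (r b)) = (Matrix.of fun a b => M (r a) (c b))ᵀ from rfl,
      Matrix.det_transpose]

lemma minors_map {B : Type*} [CommRing B] {m n : Type*} (k : ℕ) (f : A →+* B)
    (M : Matrix m n A) : (minorsIdeal k M).map f = minorsIdeal k (M.map f) := by
  unfold minorsIdeal
  rw [Ideal.map_span]
  congr 1
  ext d
  simp only [Set.mem_image, Set.mem_setOf_eq]
  constructor
  · rintro ⟨-, ⟨r, c, hr, hc, rfl⟩, rfl⟩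
    refine ⟨r, c, hr, hc, ?_⟩
    rw [f.map_det]; rfl
  · rintro ⟨r, c, hr, hc, rfl⟩
    refine ⟨_, ⟨r, c, hr, hc, rfl⟩, ?_⟩
    rw [f.map_det]; rfl

lemma minors_succ_le {m n : Type*} (k : ℕ) (M : Matrix m n A) :
    minorsIdeal (k + 1) M ≤ minorsIdeal k M := by
  rw [minorsIdeal, Ideal.span_le]
  rintro d ⟨r, c, hr, hc, rfl⟩
  rw [SetLike.mem_coe, Matrix.det_succ_row_zero]
  refine Ideal.sum_mem _ fun j _ => Ideal.mul_mem_left _ _ ?_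
  exact det_mem_minorsIdeal k M (hr.comp (Fin.succ_injective _))
    (hc.comp (Fin.succAbove_right_injective))

lemma minors_mul_le_right {p m n : Type*} [Fintype m] (k : ℕ)
    (P : Matrix p m A) (Q : Matrix m n A) :
    minorsIdeal k (P * Q) ≤ minorsIdeal k Q := by
  classical
  rw [minorsIdeal, Ideal.span_le]
  rintro d ⟨r, c, hr, hc, rfl⟩
  rw [SetLike.mem_coe]
  have h1 : (Matrix.of fun a b => (P * Q) (r a) (c b)).det
      = Matrix.detRowAlternating.toMultilinearMap
          (fun a => ∑ x : m, P (r a) x • fun b : Fin k => Q x (c b)) := by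
    congr 1
    funext a
    funext b
    simp [Matrix.mul_apply, Matrix.of_apply, Finset.sum_apply]
  rw [h1, MultilinearMap.map_sum]
  refine Ideal.sum_mem _ fun f _ => ?_
  rw [MultilinearMap.map_smul_univ]
  by_cases hf : Function.Injective f
  · exact Ideal.mul_mem_left _ _ (det_mem_minorsIdeal k Q hf hc)
  · rw [Function.not_injective_iff] at hf
    obtain ⟨a, b, hab, hne⟩ := hf
    have : Matrix.detRowAlternating.toMultilinearMap (fun a b : Fin k => Q (f a) (c b)) = 0 :=
      Matrix.det_zero_of_row_eq hne (by funext x; simp [hab])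
    rw [this]
    simp

lemma minors_mul_le_left {p m n : Type*} [Fintype m] (k : ℕ)
    (P : Matrix p m A) (Q : Matrix m n A) :
    minorsIdeal k (P * Q) ≤ minorsIdeal k P := by
  rw [← minors_transpose k (P * Q), Matrix.transpose_mul, ← minors_transpose k P]
  exact minors_mul_le_right k Qᵀ Pᵀ

lemma minors_conj {m' n' : Type*} [Fintype m'] [Fintype n'] [DecidableEq m'] [DecidableEq n'] (k : ℕ)
    (P P' : Matrix m' m' A) (Q Q' : Matrix n' n' A) (hP : P' * P = 1) (hQ : Q * Q' = 1)
    (N : Matrix m' n' A) : minorsIdeal k (P * N * Q) = minorsIdeal k N := by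
  apply le_antisymm
  · exact le_trans (minors_mul_le_left k (P * N) Q) (minors_mul_le_right k P N)
  · have hN : P' * (P * N * Q) * Q' = N := by
      rw [Matrix.mul_assoc P N Q, ← Matrix.mul_assoc P' P (N * Q), hP, Matrix.one_mul,
        Matrix.mul_assoc N Q Q', hQ, Matrix.mul_one]
    conv_lhs => rw [← hN]
    exact le_trans (minors_mul_le_left k (P' * (P * N * Q)) Q')
      (minors_mul_le_right k P' (P * N * Q))


lemma minors_block {m n : ℕ} (hm : 2 ≤ m) (hn : 2 ≤ n)
    (D : Matrix (Fin m) (Fin n) A) (ι : A)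
    (hu : D ⟨0, by lia⟩ ⟨0, by lia⟩ * ι = 1)
    (hrow : ∀ j : Fin n, j.1 ≠ 0 → D ⟨0, by lia⟩ j = 0)
    (hcol : ∀ i : Fin m, i.1 ≠ 0 → D i ⟨0, by lia⟩ = 0) (s : ℕ) :
    minorsIdeal (s + 1) D = minorsIdeal s
      (Matrix.of fun (i : Fin (m - 1)) (j : Fin (n - 1)) =>
        D ⟨i.1 + 1, by lia⟩ ⟨j.1 + 1, by lia⟩) := by
  set X'' : Matrix (Fin (m - 1)) (Fin (n - 1)) A :=
    Matrix.of fun (i : Fin (m - 1)) (j : Fin (n - 1)) =>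
      D ⟨i.1 + 1, by lia⟩ ⟨j.1 + 1, by lia⟩ with hX''
  apply le_antisymm
  · rw [minorsIdeal, Ideal.span_le]
    rintro d ⟨r, c, hr, hc, rfl⟩
    rw [SetLike.mem_coe]
    by_cases ha : ∃ a, (r a).1 = 0
    · obtain ⟨a, ha⟩ := ha
      by_cases hb : ∃ b, (c b).1 = 0
      · obtain ⟨b, hb⟩ := hb
        rw [Matrix.det_succ_row _ a]
        refine Ideal.sum_mem _ fun j _ => ?_
        by_cases hj : j = b
        · subst hj
          -- term: sign * D (r a) (c j) * det of submatrix avoiding row a, col j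
          rw [mul_assoc]
          refine Ideal.mul_mem_left _ _ (Ideal.mul_mem_left _ _ ?_)
          have hrne : ∀ a' : Fin s, (r (a.succAbove a')).1 ≠ 0 := by
            intro a' h0
            exact Fin.succAbove_ne a a' (hr (by ext; rw [h0, ha]))
          have hcne : ∀ b' : Fin s, (c (j.succAbove b')).1 ≠ 0 := by
            intro b' h0
            exact Fin.succAbove_ne j b' (hc (by ext; rw [h0, hb]))
          set r' : Fin s → Fin (m - 1) := fun a' =>
            ⟨(r (a.succAbove a')).1 - 1, by have := (r (a.succAbove a')).2; lia⟩ with hr'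
          set c' : Fin s → Fin (n - 1) := fun b' =>
            ⟨(c (j.succAbove b')).1 - 1, by have := (c (j.succAbove b')).2; lia⟩ with hc'
          have hr'inj : Function.Injective r' := by
            intro x y h
            have hx := hrne x; have hy := hrne y
            have : (r (a.succAbove x)).1 = (r (a.succAbove y)).1 := by
              have := congrArg Fin.val h; simp only [hr'] at this; lia
            exact Fin.succAbove_right_injective (hr (Fin.ext this))
          have hc'inj : Function.Injective c' := by
            intro x y h
            have hx := hcne x; have hy := hcne y
            have : (c (j.succAbove x)).1 = (c (j.succAbove y)).1 := by
              have := congrArg Fin.val h; simp only [hc'] at this; lia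
            exact Fin.succAbove_right_injective (hc (Fin.ext this))
          have hsub : ((Matrix.of fun a' b' => D (r a') (c b')).submatrix
              a.succAbove j.succAbove) = Matrix.of fun a' b' => X'' (r' a') (c' b') := by
            ext x y
            have hx := hrne x; have hy := hcne y
            simp only [Matrix.submatrix_apply, Matrix.of_apply, hX'', hr', hc']
            congr 1 <;> ext <;> simp only [] <;> lia
          rw [hsub]
          exact det_mem_minorsIdeal s X'' hr'inj hc'inj
        · -- entry is 0
          have : (c j).1 ≠ 0 := fun h0 => hj (hc (by ext; rw [h0, hb]))
          have hra : r a = ⟨0, by lia⟩ := by ext; exact ha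
          rw [Matrix.of_apply, hra, hrow _ this, mul_zero, zero_mul]
          exact Ideal.zero_mem _
      · -- row a of the submatrix is zero
        push_neg at hb
        have : (Matrix.of fun a' b' => D (r a') (c b')).det = 0 := by
          apply Matrix.det_eq_zero_of_row_eq_zero a
          intro j
          have hra : r a = ⟨0, by lia⟩ := by ext; exact ha
          simp only [Matrix.of_apply, hra]
          exact hrow _ (hb j)
        rw [this]; exact Ideal.zero_mem _
    · push_neg at ha
      by_cases hb : ∃ b, (c b).1 = 0
      · obtain ⟨b, hb⟩ := hb
        have : (Matrix.of fun a' b' => D (r a') (c b')).det = 0 := by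
          apply Matrix.det_eq_zero_of_column_eq_zero b
          intro i
          have hcb : c b = ⟨0, by lia⟩ := by ext; exact hb
          simp only [Matrix.of_apply, hcb]
          exact hcol _ (ha i)
        rw [this]; exact Ideal.zero_mem _
      · push_neg at hb
        set r' : Fin (s + 1) → Fin (m - 1) := fun a' =>
          ⟨(r a').1 - 1, by have := (r a').2; lia⟩ with hr'
        set c' : Fin (s + 1) → Fin (n - 1) := fun b' =>
          ⟨(c b').1 - 1, by have := (c b').2; lia⟩ with hc'
        have hr'inj : Function.Injective r' := by
          intro x y h
          have hx := ha x; have hy := ha y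
          refine hr (Fin.ext ?_)
          have := congrArg Fin.val h; simp only [hr'] at this; lia
        have hc'inj : Function.Injective c' := by
          intro x y h
          have hx := hb x; have hy := hb y
          refine hc (Fin.ext ?_)
          have := congrArg Fin.val h; simp only [hc'] at this; lia
        have hsub : (Matrix.of fun a' b' => D (r a') (c b'))
            = Matrix.of fun a' b' => X'' (r' a') (c' b') := by
          ext x y
          have hx := ha x; have hy := hb y
          simp only [Matrix.of_apply, hX'', hr', hc']
          congr 1 <;> ext <;> simp only [] <;> lia
        rw [hsub]
        exact minors_succ_le s X'' (det_mem_minorsIdeal (s + 1) X'' hr'inj hc'inj)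
  · rw [minorsIdeal, Ideal.span_le]
    rintro d ⟨r, c, hr, hc, rfl⟩
    rw [SetLike.mem_coe]
    set r' : Fin (s + 1) → Fin m :=
      Fin.cons ⟨0, by lia⟩ (fun a => ⟨(r a).1 + 1, by have := (r a).2; lia⟩) with hr'
    set c' : Fin (s + 1) → Fin n :=
      Fin.cons ⟨0, by lia⟩ (fun b => ⟨(c b).1 + 1, by have := (c b).2; lia⟩) with hc'
    have hr'inj : Function.Injective r' := by
      intro x y h
      induction x using Fin.cases <;> induction y using Fin.cases <;>
        simp only [hr', Fin.cons_zero, Fin.cons_succ] at h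
      · rfl
      · exact absurd (congrArg Fin.val h) (by simp)
      · exact absurd (congrArg Fin.val h) (by simp)
      · rename_i x y
        have hv : (r x).1 = (r y).1 := by
          have := congrArg Fin.val h; simp only [] at this; lia
        exact congrArg Fin.succ (hr (Fin.ext hv))
    have hc'inj : Function.Injective c' := by
      intro x y h
      induction x using Fin.cases <;> induction y using Fin.cases <;>
        simp only [hc', Fin.cons_zero, Fin.cons_succ] at h
      · rfl
      · exact absurd (congrArg Fin.val h) (by simp)
      · exact absurd (congrArg Fin.val h) (by simp)
      · rename_i x y
        have hv : (c x).1 = (c y).1 := by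
          have := congrArg Fin.val h; simp only [] at this; lia
        exact congrArg Fin.succ (hc (Fin.ext hv))
    have hglobal := det_mem_minorsIdeal (s + 1) D hr'inj hc'inj
    have hrz : r' 0 = ⟨0, by lia⟩ := Fin.cons_zero _ _
    have hcz : c' 0 = ⟨0, by lia⟩ := Fin.cons_zero _ _
    have hkey : (Matrix.of fun a b => D (r' a) (c' b)).det
        = D ⟨0, by lia⟩ ⟨0, by lia⟩ * (Matrix.of fun a b => X'' (r a) (c b)).det := by
      rw [Matrix.det_succ_row_zero]
      have hz : ∀ j ∈ Finset.univ, j ≠ (0 : Fin (s + 1)) →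
          (-1 : A) ^ (j : ℕ) * (Matrix.of fun a b => D (r' a) (c' b)) 0 j *
            ((Matrix.of fun a b => D (r' a) (c' b)).submatrix Fin.succ j.succAbove).det = 0 := by
        intro j _ hj
        have hcj : (c' j).1 ≠ 0 := by
          intro h0
          exact hj (hc'inj (show c' j = c' 0 by rw [hcz]; exact Fin.ext h0))
        rw [Matrix.of_apply, hrz, hrow _ hcj, mul_zero, zero_mul]
      rw [Finset.sum_eq_single_of_mem 0 (Finset.mem_univ _) hz]
      simp only [Fin.val_zero, pow_zero, one_mul, Matrix.of_apply]
      rw [hrz, hcz]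
      congr 1
    have : (Matrix.of fun a b => X'' (r a) (c b)).det
        = ι * (Matrix.of fun a b => D (r' a) (c' b)).det := by
      rw [hkey, ← mul_assoc, mul_comm ι, hu, one_mul]
    rw [this]
    exact Ideal.mul_mem_left _ _ hglobal


lemma main_minors {m n : ℕ} (hm : 2 ≤ m) (hn : 2 ≤ n)
    (M : Matrix (Fin m) (Fin n) A) (ι : A)
    (hu : M ⟨0, by lia⟩ ⟨0, by lia⟩ * ι = 1) (s : ℕ) :
    minorsIdeal (s + 1) M = minorsIdeal s
      (Matrix.of fun (i : Fin (m - 1)) (j : Fin (n - 1)) =>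
        M ⟨i.1 + 1, by lia⟩ ⟨j.1 + 1, by lia⟩ -
          M ⟨i.1 + 1, by lia⟩ ⟨0, by lia⟩ * M ⟨0, by lia⟩ ⟨j.1 + 1, by lia⟩ * ι) := by
  set i0 : Fin m := ⟨0, by lia⟩ with hi0
  set j0 : Fin n := ⟨0, by lia⟩ with hj0
  set E : Matrix (Fin m) (Fin m) A :=
    Matrix.of fun i k => if i.1 ≠ 0 ∧ k.1 = 0 then M i j0 * ι else 0 with hE
  set F : Matrix (Fin n) (Fin n) A :=
    Matrix.of fun k j => if k.1 = 0 ∧ j.1 ≠ 0 then M i0 j * ι else 0 with hF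
  have hEE : E * E = 0 := by
    ext i j
    rw [Matrix.mul_apply]
    apply Finset.sum_eq_zero
    intro k _
    by_cases hk : k.1 = 0
    · have : E k j = 0 := by simp [hE, hk]
      rw [this, mul_zero]
    · have : E i k = 0 := by simp [hE, hk]
      rw [this, zero_mul]
  have hFF : F * F = 0 := by
    ext i j
    rw [Matrix.mul_apply]
    apply Finset.sum_eq_zero
    intro k _
    by_cases hk : k.1 = 0
    · have : F i k = 0 := by simp [hF, hk]
      rw [this, zero_mul]
    · have : F k j = 0 := by simp [hF, hk]
      rw [this, mul_zero]
  have hP : (1 - E) * (1 + E) = 1 := by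
    have : (1 - E) * (1 + E) = 1 + E - E - E * E := by noncomm_ring
    rw [this, hEE]; noncomm_ring
  have hQ : (1 + F) * (1 - F) = 1 := by
    have : (1 + F) * (1 - F) = 1 + F - F - F * F := by noncomm_ring
    rw [this, hFF]; noncomm_ring
  set D : Matrix (Fin m) (Fin n) A := (1 - E) * M * (1 - F) with hD
  have hMD : (1 + E) * D * (1 + F) = M := by
    have h1 : (1 + E) * (1 - E) = 1 := by
      have : (1 + E) * (1 - E) = 1 + E - E - E * E := by noncomm_ring
      rw [this, hEE]; noncomm_ring
    have h2 : (1 - F) * (1 + F) = 1 := by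
      have : (1 - F) * (1 + F) = 1 + F - F - F * F := by noncomm_ring
      rw [this, hFF]; noncomm_ring
    rw [hD, Matrix.mul_assoc (1 - E) M (1 - F), ← Matrix.mul_assoc (1 + E) (1 - E) _, h1,
      Matrix.one_mul, Matrix.mul_assoc M (1 - F) (1 + F), h2, Matrix.mul_one]
  -- entries of D
  have hEM : ∀ i j, (E * M) i j = E i i0 * M i0 j := by
    intro i j
    rw [Matrix.mul_apply]
    apply Finset.sum_eq_single_of_mem i0 (Finset.mem_univ _)
    intro k _ hk
    have : k.1 ≠ 0 := fun h0 => hk (Fin.ext h0)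
    have : E i k = 0 := by simp [hE, this]
    rw [this, zero_mul]
  have hNmat : (1 - E) * M = M - E * M := by
    rw [Matrix.sub_mul, Matrix.one_mul]
  have hDval : ∀ i j, D i j
      = M i j - E i i0 * M i0 j - (M i j0 - E i i0 * M i0 j0) * F j0 j := by
    intro i j
    have hNF : ∀ i j, ((((1 - E) * M : Matrix (Fin m) (Fin n) A)) * F) i j
        = (((1 - E) * M : Matrix (Fin m) (Fin n) A)) i j0 * F j0 j := by
      intro i j
      rw [Matrix.mul_apply]
      apply Finset.sum_eq_single_of_mem j0 (Finset.mem_univ _)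
      intro k _ hk
      have hk0 : k.1 ≠ 0 := fun h0 => hk (Fin.ext h0)
      have : F k j = 0 := by simp [hF, hk0]
      rw [this, mul_zero]
    have : D i j = (((1 - E) * M : Matrix (Fin m) (Fin n) A)) i j
        - ((((1 - E) * M : Matrix (Fin m) (Fin n) A)) * F) i j := by
      rw [hD, Matrix.mul_sub, Matrix.mul_one, Matrix.sub_apply]
    rw [this, hNF, hNmat, Matrix.sub_apply, Matrix.sub_apply, hEM, hEM]
  have hEval : ∀ i : Fin m, E i i0 = if i.1 ≠ 0 then M i j0 * ι else 0 := by
    intro i; simp [hE, hi0]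
  have hFval : ∀ j : Fin n, F j0 j = if j.1 ≠ 0 then M i0 j * ι else 0 := by
    intro j; simp [hF, hj0]
  have hd00 : D i0 j0 = M i0 j0 := by
    rw [hDval, hEval, hFval]
    simp [hi0, hj0]
  have hdrow : ∀ j : Fin n, j.1 ≠ 0 → D i0 j = 0 := by
    intro j hj
    rw [hDval, hEval, hFval]
    have h1 : (i0.1 ≠ 0) = False := by simp [hi0]
    rw [if_neg (by simp [hi0]), if_pos hj]
    have : M i0 j - 0 * M i0 j - (M i0 j0 - 0 * M i0 j0) * (M i0 j * ι)
        = M i0 j - M i0 j0 * ι * M i0 j := by ring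
    rw [this, hu]; ring
  have hdcol : ∀ i : Fin m, i.1 ≠ 0 → D i j0 = 0 := by
    intro i hi
    rw [hDval, hEval, hFval]
    rw [if_pos hi, if_neg (by simp [hj0])]
    have : M i j0 - M i j0 * ι * M i0 j0 - (M i j0 - M i j0 * ι * M i0 j0) * 0
        = M i j0 - M i j0 * (M i0 j0 * ι) := by ring
    rw [this, hu]; ring
  have hdin : ∀ (i : Fin m) (j : Fin n), i.1 ≠ 0 → j.1 ≠ 0 →
      D i j = M i j - M i j0 * M i0 j * ι := by
    intro i j hi hj
    rw [hDval, hEval, hFval, if_pos hi, if_pos hj]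
    have h2 : M i j0 - M i j0 * ι * M i0 j0 = M i j0 - M i j0 * (M i0 j0 * ι) := by ring
    rw [show M i j - M i j0 * ι * M i0 j - (M i j0 - M i j0 * ι * M i0 j0) * (M i0 j * ι)
        = M i j - M i j0 * ι * M i0 j - (M i j0 - M i j0 * (M i0 j0 * ι)) * (M i0 j * ι)
      from by ring, hu]
    ring
  have hmain := minors_conj (s + 1) (1 + E) (1 - E) (1 + F) (1 - F) hP hQ D
  rw [hMD] at hmain
  rw [hmain, minors_block hm hn D ι (by rw [hd00]; exact hu) hdrow hdcol s]
  have : (Matrix.of fun (i : Fin (m - 1)) (j : Fin (n - 1)) =>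
      D ⟨i.1 + 1, by lia⟩ ⟨j.1 + 1, by lia⟩)
      = Matrix.of fun (i : Fin (m - 1)) (j : Fin (n - 1)) =>
        M ⟨i.1 + 1, by lia⟩ ⟨j.1 + 1, by lia⟩ -
          M ⟨i.1 + 1, by lia⟩ ⟨0, by lia⟩ * M ⟨0, by lia⟩ ⟨j.1 + 1, by lia⟩ * ι := by
    ext i j
    rw [Matrix.of_apply, Matrix.of_apply,
      hdin ⟨i.1 + 1, by lia⟩ ⟨j.1 + 1, by lia⟩ (by simp) (by simp)]
  rw [this]

end MinorsAux

namespace Stmt8Aux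

variable (K : Type) [Field K] (m n : ℕ)

noncomputable def u0 (hm : 2 ≤ m) (hn : 2 ≤ n) : MvPolynomial (Fin m × Fin n) K :=
  X ((⟨0, by lia⟩ : Fin m), (⟨0, by lia⟩ : Fin n))

noncomputable def v0 (hm : 2 ≤ m) (hn : 2 ≤ n) : MvPolynomial (Stmt8Vars m n) K :=
  X (Sum.inr (Sum.inl (⟨0, by lia⟩ : Fin m)))

noncomputable def gfun (hm : 2 ≤ m) (hn : 2 ≤ n) : Stmt8Vars m n → Localization.Away (u0 K m n hm hn)
  | Sum.inl (i, j) =>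
      algebraMap (MvPolynomial (Fin m × Fin n) K) _ (X ((⟨i.1 + 1, by have := i.2; lia⟩ : Fin m),
          (⟨j.1 + 1, by have := j.2; lia⟩ : Fin n))) -
        algebraMap (MvPolynomial (Fin m × Fin n) K) _
          (X ((⟨i.1 + 1, by have := i.2; lia⟩ : Fin m), (⟨0, by lia⟩ : Fin n)) *
            X ((⟨0, by lia⟩ : Fin m), (⟨j.1 + 1, by have := j.2; lia⟩ : Fin n))) *
          IsLocalization.Away.invSelf (S := Localization.Away (u0 K m n hm hn)) (u0 K m n hm hn)
  | Sum.inr (Sum.inl i) =>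
      algebraMap (MvPolynomial (Fin m × Fin n) K) _ (X (i, (⟨0, by lia⟩ : Fin n)))
  | Sum.inr (Sum.inr j) =>
      algebraMap (MvPolynomial (Fin m × Fin n) K) _
        (X ((⟨0, by lia⟩ : Fin m), (⟨j.1 + 1, by have := j.2; lia⟩ : Fin n)))

noncomputable def φ (hm : 2 ≤ m) (hn : 2 ≤ n) : MvPolynomial (Stmt8Vars m n) K →ₐ[K] Localization.Away (u0 K m n hm hn) :=
  aeval (gfun K m n hm hn)

noncomputable def hfun (hm : 2 ≤ m) (hn : 2 ≤ n) : Fin m × Fin n → Localization.Away (v0 K m n hm hn) := fun p =>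
  if hj : p.2.1 = 0 then
    algebraMap (MvPolynomial (Stmt8Vars m n) K) _ (X (Sum.inr (Sum.inl p.1)))
  else if hi : p.1.1 = 0 then
    algebraMap (MvPolynomial (Stmt8Vars m n) K) _
      (X (Sum.inr (Sum.inr (⟨p.2.1 - 1, by have := p.2.2; lia⟩ : Fin (n - 1)))))
  else
    algebraMap (MvPolynomial (Stmt8Vars m n) K) _
      (X (Sum.inl ((⟨p.1.1 - 1, by have := p.1.2; lia⟩ : Fin (m - 1)),
        (⟨p.2.1 - 1, by have := p.2.2; lia⟩ : Fin (n - 1))))) +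
      algebraMap (MvPolynomial (Stmt8Vars m n) K) _ (X (Sum.inr (Sum.inl p.1)) *
          X (Sum.inr (Sum.inr (⟨p.2.1 - 1, by have := p.2.2; lia⟩ : Fin (n - 1))))) *
        IsLocalization.Away.invSelf (S := Localization.Away (v0 K m n hm hn)) (v0 K m n hm hn)

noncomputable def χ (hm : 2 ≤ m) (hn : 2 ≤ n) : MvPolynomial (Fin m × Fin n) K →ₐ[K] Localization.Away (v0 K m n hm hn) :=
  aeval (hfun K m n hm hn)

lemma φ_v0 (hm : 2 ≤ m) (hn : 2 ≤ n) : φ K m n hm hn (v0 K m n hm hn) = algebraMap _ _ (u0 K m n hm hn) := by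
  unfold φ v0
  rw [aeval_X]
  rfl

lemma χ_u0 (hm : 2 ≤ m) (hn : 2 ≤ n) : χ K m n hm hn (u0 K m n hm hn) = algebraMap _ _ (v0 K m n hm hn) := by
  unfold χ u0
  rw [aeval_X]
  rfl

noncomputable def Φ (hm : 2 ≤ m) (hn : 2 ≤ n) :
    Localization.Away (v0 K m n hm hn) →+* Localization.Away (u0 K m n hm hn) :=
  IsLocalization.Away.lift (v0 K m n hm hn) (g := (φ K m n hm hn).toRingHom)
    (by rw [AlgHom.toRingHom_eq_coe, RingHom.coe_coe, φ_v0]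
        exact IsLocalization.Away.algebraMap_isUnit _)

noncomputable def Ψ (hm : 2 ≤ m) (hn : 2 ≤ n) :
    Localization.Away (u0 K m n hm hn) →+* Localization.Away (v0 K m n hm hn) :=
  IsLocalization.Away.lift (u0 K m n hm hn) (g := (χ K m n hm hn).toRingHom)
    (by rw [AlgHom.toRingHom_eq_coe, RingHom.coe_coe, χ_u0]
        exact IsLocalization.Away.algebraMap_isUnit _)

lemma Φ_alg (hm : 2 ≤ m) (hn : 2 ≤ n) (p : MvPolynomial (Stmt8Vars m n) K) :
    Φ K m n hm hn (algebraMap _ _ p) = φ K m n hm hn p :=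
  IsLocalization.Away.lift_eq _ _ _

lemma Ψ_alg (hm : 2 ≤ m) (hn : 2 ≤ n) (p : MvPolynomial (Fin m × Fin n) K) :
    Ψ K m n hm hn (algebraMap _ _ p) = χ K m n hm hn p :=
  IsLocalization.Away.lift_eq _ _ _

lemma inv_unique {T : Type*} [CommRing T] {a b c : T} (h1 : a * b = 1) (h2 : a * c = 1) :
    b = c := by
  calc b = b * (a * c) := by rw [h2, mul_one]
    _ = (a * b) * c := by ring
    _ = c := by rw [h1, one_mul]

lemma Ψ_inv (hm : 2 ≤ m) (hn : 2 ≤ n) :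
    Ψ K m n hm hn (IsLocalization.Away.invSelf
        (S := Localization.Away (u0 K m n hm hn)) (u0 K m n hm hn))
      = IsLocalization.Away.invSelf (S := Localization.Away (v0 K m n hm hn)) (v0 K m n hm hn) := by
  have h1 := IsLocalization.Away.mul_invSelf
    (S := Localization.Away (u0 K m n hm hn)) (u0 K m n hm hn)
  have h2 := congrArg (Ψ K m n hm hn) h1
  rw [_root_.map_mul, _root_.map_one, Ψ_alg, χ_u0] at h2
  exact inv_unique h2 (IsLocalization.Away.mul_invSelf _)

lemma Φ_inv (hm : 2 ≤ m) (hn : 2 ≤ n) :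
    Φ K m n hm hn (IsLocalization.Away.invSelf
        (S := Localization.Away (v0 K m n hm hn)) (v0 K m n hm hn))
      = IsLocalization.Away.invSelf (S := Localization.Away (u0 K m n hm hn)) (u0 K m n hm hn) := by
  have h1 := IsLocalization.Away.mul_invSelf
    (S := Localization.Away (v0 K m n hm hn)) (v0 K m n hm hn)
  have h2 := congrArg (Φ K m n hm hn) h1
  rw [_root_.map_mul, _root_.map_one, Φ_alg, φ_v0] at h2
  exact inv_unique h2 (IsLocalization.Away.mul_invSelf _)


lemma φ_X (hm : 2 ≤ m) (hn : 2 ≤ n) (s : Stmt8Vars m n) :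
    φ K m n hm hn (X s) = gfun K m n hm hn s := aeval_X _ _

lemma χ_X (hm : 2 ≤ m) (hn : 2 ≤ n) (p : Fin m × Fin n) :
    χ K m n hm hn (X p) = hfun K m n hm hn p := aeval_X _ _

lemma comp_ΨΦ (hm : 2 ≤ m) (hn : 2 ≤ n) :
    (Ψ K m n hm hn).comp (Φ K m n hm hn) = RingHom.id _ := by
  apply IsLocalization.ringHom_ext (Submonoid.powers (v0 K m n hm hn))
  apply MvPolynomial.ringHom_ext
  · intro r
    simp only [RingHom.comp_apply, RingHom.id_apply]
    rw [Φ_alg]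
    have h1 : φ K m n hm hn (C r) = algebraMap K _ r := aeval_C _ _
    rw [h1, IsScalarTower.algebraMap_apply K (MvPolynomial (Fin m × Fin n) K)
      (Localization.Away (u0 K m n hm hn)) r, MvPolynomial.algebraMap_eq, Ψ_alg]
    have h2 : χ K m n hm hn (C r) = algebraMap K _ r := aeval_C _ _
    rw [h2, IsScalarTower.algebraMap_apply K (MvPolynomial (Stmt8Vars m n) K)
      (Localization.Away (v0 K m n hm hn)) r, MvPolynomial.algebraMap_eq]
  · intro s
    simp only [RingHom.comp_apply, RingHom.id_apply]
    rw [Φ_alg, φ_X]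
    rcases s with ⟨i, j⟩ | i | j
    · -- y variables
      show Ψ K m n hm hn (_ - _) = _
      rw [_root_.map_sub, _root_.map_mul (Ψ K m n hm hn), Ψ_alg, Ψ_alg, Ψ_inv,
        _root_.map_mul (χ K m n hm hn), χ_X, χ_X, χ_X]
      have e1 : hfun K m n hm hn (⟨i.1 + 1, by have := i.2; lia⟩,
          ⟨j.1 + 1, by have := j.2; lia⟩) =
          algebraMap (MvPolynomial (Stmt8Vars m n) K) _
            (X (Sum.inl ((⟨i.1, by have := i.2; lia⟩ : Fin (m - 1)),
              (⟨j.1, by have := j.2; lia⟩ : Fin (n - 1))))) +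
          algebraMap (MvPolynomial (Stmt8Vars m n) K) _
            (X (Sum.inr (Sum.inl ⟨i.1 + 1, by have := i.2; lia⟩)) *
              X (Sum.inr (Sum.inr (⟨j.1, by have := j.2; lia⟩ : Fin (n - 1))))) *
            IsLocalization.Away.invSelf (v0 K m n hm hn) := by
        unfold hfun
        rw [dif_neg (by simp), dif_neg (by simp)]
        simp only [Nat.add_sub_cancel]
      have e2 : hfun K m n hm hn (⟨i.1 + 1, by have := i.2; lia⟩, ⟨0, by lia⟩) =
          algebraMap (MvPolynomial (Stmt8Vars m n) K) _
            (X (Sum.inr (Sum.inl ⟨i.1 + 1, by have := i.2; lia⟩))) := by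
        unfold hfun
        rw [dif_pos rfl]
      have e3 : hfun K m n hm hn (⟨0, by lia⟩, ⟨j.1 + 1, by have := j.2; lia⟩) =
          algebraMap (MvPolynomial (Stmt8Vars m n) K) _
            (X (Sum.inr (Sum.inr (⟨j.1, by have := j.2; lia⟩ : Fin (n - 1))))) := by
        unfold hfun
        rw [dif_neg (by simp), dif_pos rfl]
        simp only [Nat.add_sub_cancel]
      rw [e1, e2, e3]
      rw [← _root_.map_mul]
      ring_nf
    · -- first column variables
      show Ψ K m n hm hn (algebraMap _ _ (X (i, (⟨0, by lia⟩ : Fin n)))) = _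
      rw [Ψ_alg, χ_X]
      unfold hfun
      rw [dif_pos rfl]
    · -- first row variables
      show Ψ K m n hm hn (algebraMap _ _
        (X ((⟨0, by lia⟩ : Fin m), (⟨j.1 + 1, by have := j.2; lia⟩ : Fin n)))) = _
      rw [Ψ_alg, χ_X]
      unfold hfun
      rw [dif_neg (by simp), dif_pos rfl]
      simp only [Nat.add_sub_cancel]

lemma comp_ΦΨ (hm : 2 ≤ m) (hn : 2 ≤ n) :
    (Φ K m n hm hn).comp (Ψ K m n hm hn) = RingHom.id _ := by
  apply IsLocalization.ringHom_ext (Submonoid.powers (u0 K m n hm hn))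
  apply MvPolynomial.ringHom_ext
  · intro r
    simp only [RingHom.comp_apply, RingHom.id_apply]
    rw [Ψ_alg]
    have h1 : χ K m n hm hn (C r) = algebraMap K _ r := aeval_C _ _
    rw [h1, IsScalarTower.algebraMap_apply K (MvPolynomial (Stmt8Vars m n) K)
      (Localization.Away (v0 K m n hm hn)) r, MvPolynomial.algebraMap_eq, Φ_alg]
    have h2 : φ K m n hm hn (C r) = algebraMap K _ r := aeval_C _ _
    rw [h2, IsScalarTower.algebraMap_apply K (MvPolynomial (Fin m × Fin n) K)
      (Localization.Away (u0 K m n hm hn)) r, MvPolynomial.algebraMap_eq]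
  · intro p
    obtain ⟨i, j⟩ := p
    simp only [RingHom.comp_apply, RingHom.id_apply]
    rw [Ψ_alg, χ_X]
    by_cases hj : j.1 = 0
    · have hj' : j = ⟨0, by lia⟩ := Fin.ext hj
      rw [hj']
      unfold hfun
      rw [dif_pos rfl, Φ_alg, φ_X]
      rfl
    · by_cases hi : i.1 = 0
      · have hi' : i = ⟨0, by lia⟩ := Fin.ext hi
        rw [hi']
        unfold hfun
        rw [dif_neg hj, dif_pos rfl, Φ_alg, φ_X]
        have e2 : ∀ h, (⟨j.1 - 1 + 1, h⟩ : Fin n) = j := fun _ => Fin.ext (show j.1 - 1 + 1 = j.1 by lia)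
        show algebraMap (MvPolynomial (Fin m × Fin n) K) _
          (X ((⟨0, by lia⟩ : Fin m), (⟨j.1 - 1 + 1, by have := j.2; lia⟩ : Fin n))) = _
        rw [e2]
      · unfold hfun
        rw [dif_neg hj, dif_neg hi, _root_.map_add, _root_.map_mul (Φ K m n hm hn),
          Φ_alg, Φ_alg, Φ_inv, _root_.map_mul (φ K m n hm hn), φ_X, φ_X, φ_X]
        have e1 : ∀ h, (⟨i.1 - 1 + 1, h⟩ : Fin m) = i := fun _ => Fin.ext (show i.1 - 1 + 1 = i.1 by lia)
        have e2 : ∀ h, (⟨j.1 - 1 + 1, h⟩ : Fin n) = j := fun _ => Fin.ext (show j.1 - 1 + 1 = j.1 by lia)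
        show (algebraMap (MvPolynomial (Fin m × Fin n) K) _
            (X ((⟨i.1 - 1 + 1, by have := i.2; lia⟩ : Fin m),
                (⟨j.1 - 1 + 1, by have := j.2; lia⟩ : Fin n))) -
          algebraMap (MvPolynomial (Fin m × Fin n) K) _
            (X ((⟨i.1 - 1 + 1, by have := i.2; lia⟩ : Fin m), (⟨0, by lia⟩ : Fin n)) *
              X ((⟨0, by lia⟩ : Fin m), (⟨j.1 - 1 + 1, by have := j.2; lia⟩ : Fin n))) *
            IsLocalization.Away.invSelf (u0 K m n hm hn)) +
          algebraMap (MvPolynomial (Fin m × Fin n) K) _ (X (i, (⟨0, by lia⟩ : Fin n))) *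
            algebraMap (MvPolynomial (Fin m × Fin n) K) _
              (X ((⟨0, by lia⟩ : Fin m), (⟨j.1 - 1 + 1, by have := j.2; lia⟩ : Fin n))) *
            IsLocalization.Away.invSelf (u0 K m n hm hn) = _
        rw [e1, e2, ← _root_.map_mul]
        ring

noncomputable def eEquiv (hm : 2 ≤ m) (hn : 2 ≤ n) :
    Localization.Away (v0 K m n hm hn) ≃ₐ[K] Localization.Away (u0 K m n hm hn) :=
  AlgEquiv.ofRingEquiv (f := RingEquiv.ofRingHom (Φ K m n hm hn) (Ψ K m n hm hn)
      (comp_ΦΨ K m n hm hn) (comp_ΨΦ K m n hm hn))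
    (by
      intro r
      show Φ K m n hm hn (algebraMap K _ r) = _
      rw [IsScalarTower.algebraMap_apply K (MvPolynomial (Stmt8Vars m n) K)
        (Localization.Away (v0 K m n hm hn)) r, MvPolynomial.algebraMap_eq, Φ_alg]
      have h2 : φ K m n hm hn (C r) = algebraMap K _ r := aeval_C _ _
      rw [h2, IsScalarTower.algebraMap_apply K (MvPolynomial (Fin m × Fin n) K)
        (Localization.Away (u0 K m n hm hn)) r, MvPolynomial.algebraMap_eq])

end Stmt8Aux

/-- Let `K` be a field and `X = (x_{i,j})` an `m × n` matrix of
indeterminates with `m, n ≥ 2`, `R = K[X]`.  Let `Y = (y_{i,j})`, `2 ≤ i ≤ m`, `2 ≤ j ≤ n`,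
be a new matrix of indeterminates and `R' = K[Y]`.  Then the map sending `y_{i,j}` to
`x_{i,j} − x_{i,1}x_{1,j}x_{1,1}^{−1}` (and fixing the first row and column of `X`) extends
to a `K`-algebra isomorphism `R'[x_{1,1},…,x_{m,1}, x_{1,2},…,x_{1,n}]_{x_{1,1}} ≅
R_{x_{1,1}}`, under which `I_t(X) R_{x_{1,1}} = I_{t−1}(Y) R_{x_{1,1}}` for every `t ≥ 1`. -/
theorem stmt8 (K : Type) [Field K] (m n : ℕ) (hm : 2 ≤ m) (hn : 2 ≤ n) :
    ∃ e : Localization.Away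
            ((X (Sum.inr (Sum.inl ⟨0, by omega⟩)) : MvPolynomial (Stmt8Vars m n) K)) ≃ₐ[K]
          Localization.Away
            ((X ((⟨0, by omega⟩ : Fin m), (⟨0, by omega⟩ : Fin n)) :
              MvPolynomial (Fin m × Fin n) K)),
      (∀ i : Fin m, e (algebraMap _ _
            ((X (Sum.inr (Sum.inl i)) : MvPolynomial (Stmt8Vars m n) K)))
          = algebraMap _ _
              ((X (i, (⟨0, by omega⟩ : Fin n)) : MvPolynomial (Fin m × Fin n) K))) ∧
      (∀ j : Fin (n - 1), e (algebraMap _ _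
            ((X (Sum.inr (Sum.inr j)) : MvPolynomial (Stmt8Vars m n) K)))
          = algebraMap _ _
              ((X ((⟨0, by omega⟩ : Fin m),
                (⟨j.1 + 1, by have := j.2; omega⟩ : Fin n)) :
                MvPolynomial (Fin m × Fin n) K))) ∧
      (∀ (i : Fin (m - 1)) (j : Fin (n - 1)),
        e (algebraMap _ _ ((X (Sum.inl (i, j)) : MvPolynomial (Stmt8Vars m n) K))) *
            algebraMap _ _
              ((X ((⟨0, by omega⟩ : Fin m), (⟨0, by omega⟩ : Fin n)) :
                MvPolynomial (Fin m × Fin n) K))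
          = algebraMap _ _
              ((X ((⟨i.1 + 1, by have := i.2; omega⟩ : Fin m),
                    (⟨j.1 + 1, by have := j.2; omega⟩ : Fin n)) *
                  X ((⟨0, by omega⟩ : Fin m), (⟨0, by omega⟩ : Fin n)) -
                X ((⟨i.1 + 1, by have := i.2; omega⟩ : Fin m), (⟨0, by omega⟩ : Fin n)) *
                  X ((⟨0, by omega⟩ : Fin m),
                    (⟨j.1 + 1, by have := j.2; omega⟩ : Fin n)) :
                MvPolynomial (Fin m × Fin n) K))) ∧
      (∀ t : ℕ, 1 ≤ t →
        Ideal.map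
            (algebraMap (MvPolynomial (Fin m × Fin n) K)
              (Localization.Away
                ((X ((⟨0, by omega⟩ : Fin m), (⟨0, by omega⟩ : Fin n)) :
                  MvPolynomial (Fin m × Fin n) K))))
            (minorsIdeal t (Matrix.of fun i j => (X (i, j) : MvPolynomial (Fin m × Fin n) K)))
          = Ideal.map
              ((e.toAlgHom.toRingHom).comp
                (algebraMap (MvPolynomial (Stmt8Vars m n) K)
                  (Localization.Away
                    ((X (Sum.inr (Sum.inl ⟨0, by omega⟩)) :
                      MvPolynomial (Stmt8Vars m n) K)))))
              (minorsIdeal (t - 1)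
                (Matrix.of fun i j =>
                  (X (Sum.inl (i, j)) : MvPolynomial (Stmt8Vars m n) K)))) := by
  classical
  refine ⟨Stmt8Aux.eEquiv K m n hm hn, ?_, ?_, ?_, ?_⟩
  · intro i
    show Stmt8Aux.Φ K m n hm hn
      (algebraMap (MvPolynomial (Stmt8Vars m n) K)
        (Localization.Away (Stmt8Aux.v0 K m n hm hn)) (X (Sum.inr (Sum.inl i)))) = _
    rw [Stmt8Aux.Φ_alg, Stmt8Aux.φ_X]
    rfl
  · intro j
    show Stmt8Aux.Φ K m n hm hn
      (algebraMap (MvPolynomial (Stmt8Vars m n) K)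
        (Localization.Away (Stmt8Aux.v0 K m n hm hn)) (X (Sum.inr (Sum.inr j)))) = _
    rw [Stmt8Aux.Φ_alg, Stmt8Aux.φ_X]
    rfl
  · intro i j
    have hι : IsLocalization.Away.invSelf (S := Localization.Away (Stmt8Aux.u0 K m n hm hn))
          (Stmt8Aux.u0 K m n hm hn) *
        algebraMap (MvPolynomial (Fin m × Fin n) K) (Localization.Away (Stmt8Aux.u0 K m n hm hn))
          (Stmt8Aux.u0 K m n hm hn) = 1 := by
      rw [mul_comm]; exact IsLocalization.Away.mul_invSelf _
    show Stmt8Aux.Φ K m n hm hn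
        (algebraMap (MvPolynomial (Stmt8Vars m n) K)
          (Localization.Away (Stmt8Aux.v0 K m n hm hn)) (X (Sum.inl (i, j)))) *
      algebraMap (MvPolynomial (Fin m × Fin n) K)
        (Localization.Away (Stmt8Aux.u0 K m n hm hn)) (Stmt8Aux.u0 K m n hm hn) = _
    rw [Stmt8Aux.Φ_alg, Stmt8Aux.φ_X]
    show (algebraMap (MvPolynomial (Fin m × Fin n) K)
          (Localization.Away (Stmt8Aux.u0 K m n hm hn))
          (X ((⟨i.1 + 1, by have := i.2; omega⟩ : Fin m),
            (⟨j.1 + 1, by have := j.2; omega⟩ : Fin n))) -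
        algebraMap (MvPolynomial (Fin m × Fin n) K)
          (Localization.Away (Stmt8Aux.u0 K m n hm hn))
          (X ((⟨i.1 + 1, by have := i.2; omega⟩ : Fin m), (⟨0, by omega⟩ : Fin n)) *
            X ((⟨0, by omega⟩ : Fin m), (⟨j.1 + 1, by have := j.2; omega⟩ : Fin n))) *
          IsLocalization.Away.invSelf (Stmt8Aux.u0 K m n hm hn)) *
        algebraMap (MvPolynomial (Fin m × Fin n) K)
          (Localization.Away (Stmt8Aux.u0 K m n hm hn)) (Stmt8Aux.u0 K m n hm hn) = _
    rw [sub_mul, mul_assoc, hι, mul_one, ← _root_.map_mul, ← _root_.map_sub]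
    rfl
  · intro t ht
    obtain ⟨s, rfl⟩ : ∃ s, t = s + 1 := ⟨t - 1, by omega⟩
    show Ideal.map (algebraMap (MvPolynomial (Fin m × Fin n) K)
          (Localization.Away (Stmt8Aux.u0 K m n hm hn)))
        (minorsIdeal (s + 1)
          (Matrix.of fun i j => (X (i, j) : MvPolynomial (Fin m × Fin n) K)))
      = Ideal.map
          ((AlgEquiv.toAlgHom (Stmt8Aux.eEquiv K m n hm hn)).toRingHom.comp
            (algebraMap (MvPolynomial (Stmt8Vars m n) K)
              (Localization.Away (Stmt8Aux.v0 K m n hm hn))))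
          (minorsIdeal s
            (Matrix.of fun i j => (X (Sum.inl (i, j)) : MvPolynomial (Stmt8Vars m n) K)))
    rw [MinorsAux.minors_map, MinorsAux.minors_map]
    have hu : ((Matrix.of fun (i : Fin m) (j : Fin n) =>
          (X (i, j) : MvPolynomial (Fin m × Fin n) K)).map
          (algebraMap (MvPolynomial (Fin m × Fin n) K)
            (Localization.Away (Stmt8Aux.u0 K m n hm hn)))) ⟨0, by omega⟩ ⟨0, by omega⟩ *
        IsLocalization.Away.invSelf (S := Localization.Away (Stmt8Aux.u0 K m n hm hn))
          (Stmt8Aux.u0 K m n hm hn) = 1 := by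
      show algebraMap (MvPolynomial (Fin m × Fin n) K)
          (Localization.Away (Stmt8Aux.u0 K m n hm hn)) (Stmt8Aux.u0 K m n hm hn) *
        IsLocalization.Away.invSelf (Stmt8Aux.u0 K m n hm hn) = 1
      exact IsLocalization.Away.mul_invSelf _
    rw [MinorsAux.main_minors hm hn _
      (IsLocalization.Away.invSelf (Stmt8Aux.u0 K m n hm hn)) hu s]
    congr 1
    ext i j
    show _ = ((AlgEquiv.toAlgHom (Stmt8Aux.eEquiv K m n hm hn)).toRingHom.comp
        (algebraMap (MvPolynomial (Stmt8Vars m n) K)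
          (Localization.Away (Stmt8Aux.v0 K m n hm hn)))) (X (Sum.inl (i, j)))
    rw [RingHom.comp_apply]
    show _ = Stmt8Aux.Φ K m n hm hn
      (algebraMap (MvPolynomial (Stmt8Vars m n) K)
        (Localization.Away (Stmt8Aux.v0 K m n hm hn)) (X (Sum.inl (i, j))))
    rw [Stmt8Aux.Φ_alg, Stmt8Aux.φ_X]
    show _ = algebraMap (MvPolynomial (Fin m × Fin n) K)
          (Localization.Away (Stmt8Aux.u0 K m n hm hn))
          (X ((⟨i.1 + 1, by have := i.2; omega⟩ : Fin m),
            (⟨j.1 + 1, by have := j.2; omega⟩ : Fin n))) -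
        algebraMap (MvPolynomial (Fin m × Fin n) K)
          (Localization.Away (Stmt8Aux.u0 K m n hm hn))
          (X ((⟨i.1 + 1, by have := i.2; omega⟩ : Fin m), (⟨0, by omega⟩ : Fin n)) *
            X ((⟨0, by omega⟩ : Fin m), (⟨j.1 + 1, by have := j.2; omega⟩ : Fin n))) *
          IsLocalization.Away.invSelf (Stmt8Aux.u0 K m n hm hn)
    rw [_root_.map_mul]
    rfl
end

section
/- Let K be a field of characteristic p > 0, n > 1, s ≥ n, and S = K[x₁,…,x_n][u_{i,j} : 1 ≤ i ≤ s, 1 ≤ j ≤ n] with 𝔫 the ideal generated by all variables. Let Δ₁,…,Δ_{s−n+1} be the n × n minors of U = (u_{i,j}) on consecutive rows. Then x₁ · (Δ₁⋯Δ_{s−n+1})^{p−1} · ∏_{i=1}^{n−1}(u_{i,1}x₁ + ⋯ + u_{i,n}x_n)^{p−1} ∉ 𝔫^{[p]}, where 𝔫^{[p]} is the ideal generated by the p-th powers of all variables. -/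
open MvPolynomial

namespace Stmt10Aux

variable {σ : Type*} {K : Type*} [Field K]

/-- weight of an exponent vector with respect to integer weights on variables -/
noncomputable def wt (w : σ → ℤ) (m : σ →₀ ℕ) : ℤ := m.sum fun v k => (k : ℤ) * w v

lemma wt_add (w : σ → ℤ) (a b : σ →₀ ℕ) : wt w (a + b) = wt w a + wt w b :=
  Finsupp.sum_add_index' (fun v => by simp) (fun v k l => by push_cast; ring)

lemma wt_single (w : σ → ℤ) (v : σ) (k : ℕ) : wt w (Finsupp.single v k) = k * w v := by
  classical
  simp [wt, Finsupp.sum_single_index]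

lemma wt_sum (w : σ → ℤ) {ι : Type*} (t : Finset ι) (g : ι → (σ →₀ ℕ)) :
    wt w (∑ i ∈ t, g i) = ∑ i ∈ t, wt w (g i) := by
  classical
  induction t using Finset.induction_on with
  | empty => simp [wt]
  | insert a t' hx ih =>
      rw [Finset.sum_insert hx, Finset.sum_insert hx, wt_add, ih]

/-- `f` has dominant monomial `m₀` w.r.t. weight `w`. -/
def Dom (w : σ → ℤ) (f : MvPolynomial σ K) (m₀ : σ →₀ ℕ) : Prop :=
  coeff m₀ f ≠ 0 ∧ ∀ m ∈ f.support, m ≠ m₀ → wt w m < wt w m₀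

lemma Dom.wt_le {w : σ → ℤ} {f : MvPolynomial σ K} {m₀ : σ →₀ ℕ} (h : Dom w f m₀)
    {m : σ →₀ ℕ} (hm : m ∈ f.support) : wt w m ≤ wt w m₀ := by
  rcases eq_or_ne m m₀ with rfl | hne
  · exact le_refl _
  · exact (h.2 m hm hne).le

lemma Dom.mul {w : σ → ℤ} {f g : MvPolynomial σ K} {m₀ m₁ : σ →₀ ℕ}
    (hf : Dom w f m₀) (hg : Dom w g m₁) : Dom w (f * g) (m₀ + m₁) := by
  classical
  constructor
  · rw [coeff_mul]
    rw [Finset.sum_eq_single_of_mem (m₀, m₁) (Finset.HasAntidiagonal.mem_antidiagonal.mpr rfl)]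
    · exact mul_ne_zero hf.1 hg.1
    · rintro ⟨a, b⟩ hab hne
      rw [Finset.HasAntidiagonal.mem_antidiagonal] at hab
      by_cases ha : coeff a f = 0
      · simp [ha]
      by_cases hb : coeff b g = 0
      · simp [hb]
      exfalso
      have haf : a ∈ f.support := mem_support_iff.mpr ha
      have hbg : b ∈ g.support := mem_support_iff.mpr hb
      have hwa : wt w a ≤ wt w m₀ := hf.wt_le haf
      have hwb : wt w b ≤ wt w m₁ := hg.wt_le hbg
      have hsum : wt w a + wt w b = wt w m₀ + wt w m₁ := by
        rw [← wt_add, ← wt_add, hab]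
      have ha' : a = m₀ := by
        by_contra h
        have hlt := hf.2 a haf h
        omega
      have hb' : b = m₁ := by
        ext v
        have h := DFunLike.congr_fun hab v
        have h0 := DFunLike.congr_fun ha' v
        simp only [Finsupp.add_apply] at h
        omega
      apply hne
      rw [Prod.ext_iff]
      exact ⟨ha', hb'⟩
  · intro m hm hne
    have := support_mul f g hm
    rw [Finset.mem_add] at this
    obtain ⟨a, ha, b, hb, rfl⟩ := this
    rcases eq_or_ne a m₀ with rfl | hna
    · have hb' : b ≠ m₁ := fun h => hne (by rw [h])
      have := hg.2 b hb hb'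
      have h2 := hf.wt_le ha
      rw [wt_add, wt_add]; omega
    · have := hf.2 a ha hna
      have h2 := hg.wt_le hb
      rw [wt_add, wt_add]; omega

lemma Dom.one (w : σ → ℤ) : Dom w (1 : MvPolynomial σ K) 0 := by
  classical
  constructor
  · simp
  · intro m hm hne
    exfalso
    apply hne
    have h1 : coeff m (1 : MvPolynomial σ K) ≠ 0 := mem_support_iff.mp hm
    rw [coeff_one] at h1
    by_contra h2
    rw [if_neg (fun h => h2 h.symm)] at h1
    exact h1 rfl

lemma Dom.pow {w : σ → ℤ} {f : MvPolynomial σ K} {m₀ : σ →₀ ℕ} (hf : Dom w f m₀) (k : ℕ) :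
    Dom w (f ^ k) (k • m₀) := by
  induction k with
  | zero => simpa using Dom.one w
  | succ n ih =>
      rw [pow_succ, succ_nsmul]
      exact ih.mul hf

lemma Dom.prod {w : σ → ℤ} {ι : Type*} (t : Finset ι) (f : ι → MvPolynomial σ K)
    (M : ι → σ →₀ ℕ) (h : ∀ i ∈ t, Dom w (f i) (M i)) :
    Dom w (∏ i ∈ t, f i) (∑ i ∈ t, M i) := by
  classical
  induction t using Finset.induction_on with
  | empty => simpa using Dom.one w
  | insert a t' hx ih =>
      rw [Finset.prod_insert hx, Finset.sum_insert hx]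
      exact (h a (Finset.mem_insert_self a t')).mul
        (ih fun i hi => h i (Finset.mem_insert_of_mem hi))

lemma Dom.sum_monomial {w : σ → ℤ} {ι : Type*} (t : Finset ι) (M : ι → σ →₀ ℕ) (c : ι → K)
    (j₀ : ι) (hj₀ : j₀ ∈ t) (hc : c j₀ ≠ 0)
    (hmax : ∀ j ∈ t, j ≠ j₀ → wt w (M j) < wt w (M j₀)) :
    Dom w (∑ j ∈ t, monomial (M j) (c j)) (M j₀) := by
  classical
  have key : ∀ j ∈ t, j ≠ j₀ → M j ≠ M j₀ := by
    intro j hj hne heq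
    exact absurd (heq ▸ hmax j hj hne) (lt_irrefl _)
  constructor
  · rw [coeff_sum]
    rw [Finset.sum_eq_single j₀]
    · simp only [coeff_monomial, if_pos rfl]
      exact hc
    · intro j hj hne
      rw [coeff_monomial, if_neg (key j hj hne)]
    · intro h; exact absurd hj₀ h
  · intro m hm hne
    have : coeff m (∑ j ∈ t, monomial (M j) (c j)) ≠ 0 := mem_support_iff.mp hm
    rw [coeff_sum] at this
    obtain ⟨j, hj, hcj⟩ := Finset.exists_ne_zero_of_sum_ne_zero this
    rw [coeff_monomial] at hcj
    have hMj : M j = m := by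
      by_contra h; rw [if_neg h] at hcj; exact hcj rfl
    rcases eq_or_ne j j₀ with rfl | hjne
    · exact absurd hMj.symm hne
    · exact hMj ▸ hmax j hj hjne

lemma Dom.monomial' (w : σ → ℤ) {m : σ →₀ ℕ} {c : K} (hc : c ≠ 0) :
    Dom w (monomial m c) m := by
  classical
  constructor
  · simpa [coeff_monomial] using hc
  · intro m' hm' hne
    exfalso
    rw [support_monomial, if_neg hc] at hm'
    exact hne (Finset.mem_singleton.mp hm')

lemma Dom.X (w : σ → ℤ) (v : σ) : Dom w (X v : MvPolynomial σ K) (Finsupp.single v 1) := by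
  rw [← pow_one (MvPolynomial.X v), X_pow_eq_monomial]
  exact Dom.monomial' w one_ne_zero

lemma prod_X_eq {ι : Type*} (t : Finset ι) (v : ι → σ) :
    (∏ i ∈ t, (X (v i) : MvPolynomial σ K))
      = monomial (∑ i ∈ t, Finsupp.single (v i) 1) 1 := by
  classical
  induction t using Finset.induction_on with
  | empty => simp
  | insert a t' hx ih =>
      rw [Finset.prod_insert hx, Finset.sum_insert hx, ih, ← pow_one (MvPolynomial.X (v a)),
        X_pow_eq_monomial, monomial_mul, one_mul]

lemma sum_indicator_le_one {ι : Type*} (t : Finset ι) (P : ι → Prop) [DecidablePred P]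
    (h : ∀ i ∈ t, ∀ j ∈ t, P i → P j → i = j) :
    (∑ i ∈ t, if P i then (1 : ℕ) else 0) ≤ 1 := by
  classical
  by_cases hex : ∃ i ∈ t, P i
  · obtain ⟨i₀, hi₀, hPi₀⟩ := hex
    rw [Finset.sum_eq_single_of_mem i₀ hi₀]
    · simp [hPi₀]
    · intro j hj hne
      rw [if_neg]
      intro hPj
      exact hne (h j hj i₀ hi₀ hPj hPi₀)
  · push_neg at hex
    rw [Finset.sum_eq_zero]
    · exact Nat.zero_le 1
    · intro i hi
      rw [if_neg (hex i hi)]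

lemma perm_core {nn : ℕ} (σ : Equiv.Perm (Fin nn)) (hσ : σ ≠ 1) :
    ∑ a : Fin nn, ((σ a).1 : ℤ) * (a.1 : ℤ) < ∑ a : Fin nn, (a.1 : ℤ) * (a.1 : ℤ) := by
  obtain ⟨a₀, ha₀⟩ : ∃ a, σ a ≠ a := by
    by_contra h
    push_neg at h
    exact hσ (Equiv.ext h)
  have h1 : (1 : ℤ) ≤ ∑ a : Fin nn, (((a.1 : ℤ)) - ((σ a).1 : ℤ)) ^ 2 := by
    have hterm : (1 : ℤ) ≤ (((a₀.1 : ℤ)) - ((σ a₀).1 : ℤ)) ^ 2 := by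
      have hne : ((a₀.1 : ℤ)) - ((σ a₀).1 : ℤ) ≠ 0 := by
        intro h
        apply ha₀
        apply Fin.ext
        omega
      have := Int.one_le_abs hne
      nlinarith [sq_abs (((a₀.1 : ℤ)) - ((σ a₀).1 : ℤ)),
        abs_nonneg (((a₀.1 : ℤ)) - ((σ a₀).1 : ℤ))]
    have hsum := Finset.single_le_sum (f := fun a : Fin nn => (((a.1 : ℤ)) - ((σ a).1 : ℤ)) ^ 2)
      (fun i _ => sq_nonneg _) (Finset.mem_univ a₀)
    linarith
  have h2 : ∑ a : Fin nn, (((σ a).1 : ℤ)) ^ 2 = ∑ a : Fin nn, ((a.1 : ℤ)) ^ 2 :=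
    Equiv.sum_comp σ (fun a => ((a.1 : ℤ)) ^ 2)
  have h3 : ∑ a : Fin nn, (((a.1 : ℤ)) - ((σ a).1 : ℤ)) ^ 2
      = ∑ a : Fin nn, ((a.1 : ℤ)) ^ 2 - 2 * ∑ a : Fin nn, ((σ a).1 : ℤ) * (a.1 : ℤ)
        + ∑ a : Fin nn, (((σ a).1 : ℤ)) ^ 2 := by
    rw [Finset.sum_congr rfl (fun a _ => show (((a.1 : ℤ)) - ((σ a).1 : ℤ)) ^ 2
      = ((a.1 : ℤ)) ^ 2 - 2 * (((σ a).1 : ℤ) * (a.1 : ℤ)) + (((σ a).1 : ℤ)) ^ 2 from by ring)]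
    rw [Finset.sum_add_distrib, Finset.sum_sub_distrib, ← Finset.mul_sum]
  have h4 : ∑ a : Fin nn, (a.1 : ℤ) * (a.1 : ℤ) = ∑ a : Fin nn, ((a.1 : ℤ)) ^ 2 :=
    Finset.sum_congr rfl (fun a _ => by ring)
  rw [h2] at h3
  omega

end Stmt10Aux

/-- The ambient polynomial ring `S = K[x₁,…,x_n][u_{i,j} : 1 ≤ i ≤ s, 1 ≤ j ≤ n]`:
`Sum.inl j` is the variable `x_j` and `Sum.inr (i, j)` is the variable `u_{i,j}`. -/
abbrev Stmt9Ring (K : Type*) [Field K] (s n : ℕ) : Type _ :=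
  MvPolynomial (Fin n ⊕ (Fin s × Fin n)) K

/-- The linear form `a_i = u_{i,1}x₁ + ⋯ + u_{i,n}x_n` for `1 ≤ i ≤ n-1`. -/
noncomputable def stmt9A (K : Type*) [Field K] (s n : ℕ) (hs : n ≤ s)
    (i : Fin (n - 1)) : Stmt9Ring K s n :=
  ∑ j : Fin n, X (Sum.inr ((⟨i.1, by have := i.2; omega⟩ : Fin s), j)) * X (Sum.inl j)

/-- The `n × n` minor `Δ_i` of the `s × n` matrix `U = (u_{i,j})` on the `n` consecutive
rows `i, …, i+n-1` (indices `0`-based). -/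
noncomputable def stmt9Delta (K : Type*) [Field K] (s n : ℕ) (hs : n ≤ s)
    (i : Fin (s - n + 1)) : Stmt9Ring K s n :=
  (Matrix.of fun a b : Fin n =>
    (X (Sum.inr ((⟨i.1 + a.1, by have := i.2; have := a.2; omega⟩ : Fin s), b)) :
      Stmt9Ring K s n)).det

namespace Stmt10Aux

/-- the weight function on variables -/
def stmtW (s n : ℕ) : (Fin n ⊕ (Fin s × Fin n)) → ℤ
  | .inl j => -((j.1 : ℤ) - 1) ^ 2
  | .inr (r, c) => 2 * (r.1 : ℤ) * (c.1 : ℤ)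

variable {K : Type*} [Field K]

/-- leading monomial of `stmt9A i` -/
noncomputable def NAm (s n : ℕ) (hs : n ≤ s) (i : Fin (n - 1)) :
    (Fin n ⊕ (Fin s × Fin n)) →₀ ℕ :=
  Finsupp.single (Sum.inr ((⟨i.1, by have := i.2; omega⟩ : Fin s),
      (⟨i.1 + 1, by have := i.2; omega⟩ : Fin n))) 1
    + Finsupp.single (Sum.inl (⟨i.1 + 1, by have := i.2; omega⟩ : Fin n)) 1

/-- leading monomial of `stmt9Delta i` -/
noncomputable def NDm (s n : ℕ) (hs : n ≤ s) (i : Fin (s - n + 1)) :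
    (Fin n ⊕ (Fin s × Fin n)) →₀ ℕ :=
  ∑ a : Fin n, Finsupp.single
    (Sum.inr ((⟨i.1 + a.1, by have := i.2; have := a.2; omega⟩ : Fin s), a)) 1

lemma domA (s n : ℕ) (hs : n ≤ s) (i : Fin (n - 1)) :
    Dom (stmtW s n) (stmt9A K s n hs i) (NAm s n hs i) := by
  classical
  have hrw : stmt9A K s n hs i = ∑ j : Fin n, monomial
      (Finsupp.single (Sum.inr ((⟨i.1, by have := i.2; omega⟩ : Fin s), j)) 1
        + Finsupp.single (Sum.inl j) 1) (1 : K) := by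
    unfold stmt9A
    refine Finset.sum_congr rfl fun j _ => ?_
    rw [← pow_one (MvPolynomial.X (Sum.inr ((⟨i.1, by have := i.2; omega⟩ : Fin s), j))),
      ← pow_one (MvPolynomial.X (Sum.inl j)), X_pow_eq_monomial, X_pow_eq_monomial,
      monomial_mul, one_mul]
  rw [hrw]
  exact Dom.sum_monomial Finset.univ _ _ (⟨i.1 + 1, by have := i.2; omega⟩ : Fin n)
    (Finset.mem_univ _) one_ne_zero (by
      intro j _ hne
      rw [wt_add, wt_add, wt_single, wt_single, wt_single, wt_single]
      simp only [stmtW, Nat.cast_one, one_mul]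
      have hj : (j.1 : ℤ) ≠ (i.1 : ℤ) + 1 := by
        have : j.1 ≠ i.1 + 1 := fun h => hne (Fin.ext h)
        exact_mod_cast this
      have hsq : (1 : ℤ) ≤ ((j.1 : ℤ) - ((i.1 : ℤ) + 1)) ^ 2 := by
        have hne0 : (j.1 : ℤ) - ((i.1 : ℤ) + 1) ≠ 0 := sub_ne_zero.mpr hj
        have := Int.one_le_abs hne0
        nlinarith [sq_abs ((j.1 : ℤ) - ((i.1 : ℤ) + 1)),
          abs_nonneg ((j.1 : ℤ) - ((i.1 : ℤ) + 1))]
      push_cast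
      nlinarith [hsq])

end Stmt10Aux

namespace Stmt10Aux

variable {K : Type*} [Field K]

lemma domD (s n : ℕ) (hs : n ≤ s) (i : Fin (s - n + 1)) :
    Dom (stmtW s n) (stmt9Delta K s n hs i) (NDm s n hs i) := by
  classical
  have hrw : stmt9Delta K s n hs i = ∑ σ : Equiv.Perm (Fin n),
      monomial (∑ a : Fin n, Finsupp.single
          (Sum.inr ((⟨i.1 + (σ a).1, by have := i.2; have := (σ a).2; omega⟩ : Fin s), a)) 1)
        (((Equiv.Perm.sign σ : ℤ) : K)) := by
    unfold stmt9Delta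
    rw [Matrix.det_apply']
    refine Finset.sum_congr rfl fun σ _ => ?_
    have hp : (∏ a : Fin n, (Matrix.of fun a b : Fin n =>
        (X (Sum.inr ((⟨i.1 + a.1, by have := i.2; have := a.2; omega⟩ : Fin s), b)) :
          Stmt9Ring K s n)) (σ a) a)
        = monomial (∑ a : Fin n, Finsupp.single
            (Sum.inr ((⟨i.1 + (σ a).1, by have := i.2; have := (σ a).2; omega⟩ : Fin s), a)) 1)
          (1 : K) :=
      prod_X_eq Finset.univ
        (fun a : Fin n => Sum.inr ((⟨i.1 + (σ a).1,
          by have := i.2; have := (σ a).2; omega⟩ : Fin s), a))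
    rw [hp]
    rw [show (((Equiv.Perm.sign σ : ℤ)) : Stmt9Ring K s n)
        = C (((Equiv.Perm.sign σ : ℤ) : K)) from (map_intCast (C : K →+* Stmt9Ring K s n) _).symm]
    rw [C_mul_monomial, mul_one]
  rw [hrw]
  have hdom := Dom.sum_monomial (w := stmtW s n) Finset.univ
    (fun σ : Equiv.Perm (Fin n) => ∑ a : Fin n, Finsupp.single
        (Sum.inr ((⟨i.1 + (σ a).1, by have := i.2; have := (σ a).2; omega⟩ : Fin s), a)) 1)
    (fun σ => ((Equiv.Perm.sign σ : ℤ) : K)) 1 (Finset.mem_univ _)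
    (by simp)
    (by
      intro τ _ hne
      rw [wt_sum, wt_sum]
      have lhs_eq : ∀ τ' : Equiv.Perm (Fin n), ∑ a : Fin n, wt (stmtW s n)
          (Finsupp.single (Sum.inr ((⟨i.1 + (τ' a).1,
            by have := i.2; have := (τ' a).2; omega⟩ : Fin s), a)) 1)
          = 2 * (i.1 : ℤ) * (∑ a : Fin n, (a.1 : ℤ))
            + 2 * ∑ a : Fin n, ((τ' a).1 : ℤ) * (a.1 : ℤ) := by
        intro τ'
        have e : ∀ a : Fin n, wt (stmtW s n)
            (Finsupp.single (Sum.inr ((⟨i.1 + (τ' a).1,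
              by have := i.2; have := (τ' a).2; omega⟩ : Fin s), a)) 1)
            = 2 * (i.1 : ℤ) * (a.1 : ℤ) + 2 * (((τ' a).1 : ℤ) * (a.1 : ℤ)) := by
          intro a
          rw [wt_single]
          show (1 : ℕ) * ((2 : ℤ) * (((⟨i.1 + (τ' a).1,
            by have := i.2; have := (τ' a).2; omega⟩ : Fin s)).1 : ℤ) * (a.1 : ℤ)) = _
          push_cast
          ring
        rw [Finset.sum_congr rfl fun a _ => e a, Finset.sum_add_distrib,
          ← Finset.mul_sum, ← Finset.mul_sum]
      rw [lhs_eq τ, lhs_eq 1]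
      have hone : ∑ a : Fin n, (((1 : Equiv.Perm (Fin n)) a).1 : ℤ) * (a.1 : ℤ)
          = ∑ a : Fin n, (a.1 : ℤ) * (a.1 : ℤ) := by
        refine Finset.sum_congr rfl fun a _ => ?_
        simp
      rw [hone]
      have := perm_core τ hne
      linarith)
  exact hdom

end Stmt10Aux

namespace Stmt10Aux

variable {K2 : Type*} [Field K2]

lemma ndm_apply (s n : ℕ) (hs : n ≤ s) (i : Fin (s - n + 1)) (v : Fin n ⊕ (Fin s × Fin n)) :
    NDm s n hs i v = ∑ a : Fin n, if (Sum.inr ((⟨i.1 + a.1,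
        by have := i.2; have := a.2; omega⟩ : Fin s), a) : Fin n ⊕ (Fin s × Fin n)) = v
      then 1 else 0 := by
  classical
  rw [NDm, Finsupp.finset_sum_apply]
  exact Finset.sum_congr rfl fun a _ => Finsupp.single_apply

lemma nam_apply (s n : ℕ) (hs : n ≤ s) (i : Fin (n - 1)) (v : Fin n ⊕ (Fin s × Fin n)) :
    NAm s n hs i v =
      (if (Sum.inr ((⟨i.1, by have := i.2; omega⟩ : Fin s),
          (⟨i.1 + 1, by have := i.2; omega⟩ : Fin n)) : Fin n ⊕ (Fin s × Fin n)) = v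
        then 1 else 0)
      + (if (Sum.inl (⟨i.1 + 1, by have := i.2; omega⟩ : Fin n) : Fin n ⊕ (Fin s × Fin n)) = v
        then 1 else 0) := by
  classical
  rw [NAm, Finsupp.add_apply, Finsupp.single_apply, Finsupp.single_apply]

lemma key_bound (s n : ℕ) (hn : 1 < n) (hs : n ≤ s) (v : Fin n ⊕ (Fin s × Fin n)) :
    (Finsupp.single (Sum.inl (⟨0, Nat.zero_lt_of_lt hn⟩ : Fin n) : Fin n ⊕ (Fin s × Fin n)) 1) v
      + (∑ i : Fin (s - n + 1), NDm s n hs i v)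
      + (∑ i : Fin (n - 1), NAm s n hs i v) ≤ 1 := by
  classical
  rw [Finset.sum_congr rfl fun i (_ : i ∈ Finset.univ) => ndm_apply s n hs i v,
    Finset.sum_congr rfl fun i (_ : i ∈ Finset.univ) => nam_apply s n hs i v,
    Finset.sum_add_distrib, Finsupp.single_apply]
  rcases v with j | rc
  · -- v = inl j
    have hSD : (∑ i : Fin (s - n + 1), ∑ a : Fin n, if (Sum.inr ((⟨i.1 + a.1,
        by have := i.2; have := a.2; omega⟩ : Fin s), a) : Fin n ⊕ (Fin s × Fin n)) = Sum.inl j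
        then 1 else 0) = 0 := by
      refine Finset.sum_eq_zero fun i _ => Finset.sum_eq_zero fun a _ => if_neg (fun h => ?_)
      simp at h
    have hSA1 : (∑ i : Fin (n - 1), if (Sum.inr ((⟨i.1, by have := i.2; omega⟩ : Fin s),
        (⟨i.1 + 1, by have := i.2; omega⟩ : Fin n)) : Fin n ⊕ (Fin s × Fin n)) = Sum.inl j
        then 1 else 0) = 0 := by
      refine Finset.sum_eq_zero fun i _ => if_neg (fun h => ?_)
      simp at h
    rw [hSD, hSA1]
    rcases Nat.eq_zero_or_pos j.1 with hj | hj
    · -- j = 0 : the NA sum vanishes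
      have hSA2 : (∑ i : Fin (n - 1), if (Sum.inl (⟨i.1 + 1, by have := i.2; omega⟩ : Fin n) :
          Fin n ⊕ (Fin s × Fin n)) = Sum.inl j then 1 else 0) = 0 := by
        refine Finset.sum_eq_zero fun i _ => if_neg (fun h => ?_)
        rw [Sum.inl.injEq] at h
        have := congrArg Fin.val h
        simp at this
        omega
      rw [hSA2]
      split_ifs <;> omega
    · -- j ≠ 0 : the `x₁` contribution vanishes
      have hS0 : (if (Sum.inl (⟨0, by omega⟩ : Fin n) : Fin n ⊕ (Fin s × Fin n)) = Sum.inl j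
          then 1 else 0) = 0 := by
        refine if_neg (fun h => ?_)
        rw [Sum.inl.injEq] at h
        have := congrArg Fin.val h
        simp at this
        omega
      have hSA2 : (∑ i : Fin (n - 1), if (Sum.inl (⟨i.1 + 1, by have := i.2; omega⟩ : Fin n) :
          Fin n ⊕ (Fin s × Fin n)) = Sum.inl j then 1 else 0) ≤ 1 := by
        refine sum_indicator_le_one _ _ ?_
        intro i _ i' _ hi hi'
        rw [Sum.inl.injEq] at hi hi'
        have h1 := congrArg Fin.val hi
        have h2 := congrArg Fin.val hi'
        simp at h1 h2
        exact Fin.ext (by omega)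
      rw [hS0]
      omega
  · -- v = inr (r, c)
    obtain ⟨r, c⟩ := rc
    have hS0 : (if (Sum.inl (⟨0, by omega⟩ : Fin n) : Fin n ⊕ (Fin s × Fin n)) = Sum.inr (r, c)
        then 1 else 0) = 0 := if_neg (by simp)
    have hSA2 : (∑ i : Fin (n - 1), if (Sum.inl (⟨i.1 + 1, by have := i.2; omega⟩ : Fin n) :
        Fin n ⊕ (Fin s × Fin n)) = Sum.inr (r, c) then 1 else 0) = 0 := by
      refine Finset.sum_eq_zero fun i _ => if_neg (fun h => ?_)
      simp at h
    rw [hS0, hSA2]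
    by_cases hc : c.1 = r.1 + 1
    · -- only the `a` factors can contribute
      have hSD : (∑ i : Fin (s - n + 1), ∑ a : Fin n, if (Sum.inr ((⟨i.1 + a.1,
          by have := i.2; have := a.2; omega⟩ : Fin s), a) : Fin n ⊕ (Fin s × Fin n))
          = Sum.inr (r, c) then 1 else 0) = 0 := by
        refine Finset.sum_eq_zero fun i _ => Finset.sum_eq_zero fun a _ => if_neg (fun h => ?_)
        rw [Sum.inr.injEq, Prod.mk.injEq] at h
        have h1 := congrArg Fin.val h.1
        have h2 := congrArg Fin.val h.2
        simp at h1 h2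
        omega
      have hSA1 : (∑ i : Fin (n - 1), if (Sum.inr ((⟨i.1, by have := i.2; omega⟩ : Fin s),
          (⟨i.1 + 1, by have := i.2; omega⟩ : Fin n)) : Fin n ⊕ (Fin s × Fin n)) = Sum.inr (r, c)
          then 1 else 0) ≤ 1 := by
        refine sum_indicator_le_one _ _ ?_
        intro i _ i' _ hi hi'
        rw [Sum.inr.injEq, Prod.mk.injEq] at hi hi'
        have h1 := congrArg Fin.val hi.1
        have h2 := congrArg Fin.val hi'.1
        simp at h1 h2
        exact Fin.ext (by omega)
      rw [hSD]
      omega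
    · -- only the minors can contribute
      have hSA1 : (∑ i : Fin (n - 1), if (Sum.inr ((⟨i.1, by have := i.2; omega⟩ : Fin s),
          (⟨i.1 + 1, by have := i.2; omega⟩ : Fin n)) : Fin n ⊕ (Fin s × Fin n)) = Sum.inr (r, c)
          then 1 else 0) = 0 := by
        refine Finset.sum_eq_zero fun i _ => if_neg (fun h => ?_)
        rw [Sum.inr.injEq, Prod.mk.injEq] at h
        have h1 := congrArg Fin.val h.1
        have h2 := congrArg Fin.val h.2
        simp at h1 h2
        omega
      have hSD : (∑ i : Fin (s - n + 1), ∑ a : Fin n, if (Sum.inr ((⟨i.1 + a.1,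
          by have := i.2; have := a.2; omega⟩ : Fin s), a) : Fin n ⊕ (Fin s × Fin n))
          = Sum.inr (r, c) then 1 else 0) ≤ 1 := by
        rw [← Finset.sum_product']
        refine sum_indicator_le_one _ _ ?_
        rintro ⟨i, a⟩ _ ⟨i', a'⟩ _ hi hi'
        rw [Sum.inr.injEq, Prod.mk.injEq] at hi hi'
        have h1 := congrArg Fin.val hi.1
        have h2 := congrArg Fin.val hi.2
        have h3 := congrArg Fin.val hi'.1
        have h4 := congrArg Fin.val hi'.2
        simp at h1 h2 h3 h4
        have : i = i' := Fin.ext (by omega)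
        have ha : a = a' := Fin.ext (by omega)
        rw [Prod.mk.injEq]
        exact ⟨this, ha⟩
      rw [hSA1]
      omega

end Stmt10Aux

lemma stmt10_arith (p S0 SD SA : ℕ) (hp2 : 2 ≤ p) (hb : S0 + SD + SA ≤ 1)
    (hle : p ≤ S0 + (p - 1) * SD + (p - 1) * SA) : False := by
  have hSD : SD = 0 ∨ SD = 1 := by omega
  have hSA : SA = 0 ∨ SA = 1 := by omega
  rcases hSD with rfl | rfl <;> rcases hSA with rfl | rfl <;>
    simp only [Nat.mul_zero, Nat.mul_one, Nat.add_zero] at hle <;> omega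

open Stmt10Aux

/-- Let `K` be a field of characteristic `p > 0`, `n > 1`, `s ≥ n`, and
`S = K[x₁,…,x_n][u_{i,j}]` with `𝔫` the ideal generated by all variables.  Then
`x₁ · (Δ₁⋯Δ_{s−n+1})^{p−1} · ∏_{i=1}^{n−1}(u_{i,1}x₁ + ⋯ + u_{i,n}x_n)^{p−1} ∉ 𝔫^{[p]}`,
where `𝔫^{[p]}` is generated by the `p`-th powers of all variables. -/
theorem stmt10 (K : Type*) [Field K] (p : ℕ) [Fact p.Prime] [CharP K p]
    (s n : ℕ) (hn : 1 < n) (hs : n ≤ s) :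
    (X (Sum.inl (⟨0, by omega⟩ : Fin n)) : Stmt9Ring K s n) *
        (∏ i : Fin (s - n + 1), stmt9Delta K s n hs i) ^ (p - 1) *
        ∏ i : Fin (n - 1), (stmt9A K s n hs i) ^ (p - 1) ∉
      Ideal.span (Set.range fun v : Fin n ⊕ (Fin s × Fin n) =>
        (X v : Stmt9Ring K s n) ^ p) := by
  classical
  have hp2 : 2 ≤ p := (Fact.out : p.Prime).two_le
  set w := stmtW s n with hw
  have hX : Dom w (X (Sum.inl (⟨0, by omega⟩ : Fin n)) : Stmt9Ring K s n)
      (Finsupp.single (Sum.inl (⟨0, by omega⟩ : Fin n)) 1) := Dom.X w _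
  have hP : Dom w ((∏ i : Fin (s - n + 1), stmt9Delta K s n hs i) ^ (p - 1))
      ((p - 1) • ∑ i : Fin (s - n + 1), NDm s n hs i) :=
    (Dom.prod Finset.univ _ _ (fun i _ => domD s n hs i)).pow (p - 1)
  have hQ : Dom w (∏ i : Fin (n - 1), (stmt9A K s n hs i) ^ (p - 1))
      (∑ i : Fin (n - 1), (p - 1) • NAm s n hs i) :=
    Dom.prod Finset.univ _ _ (fun i _ => (domA s n hs i).pow (p - 1))
  have hTot := (hX.mul hP).mul hQ
  intro hmem
  have hset : (Set.range fun v : Fin n ⊕ (Fin s × Fin n) => (X v : Stmt9Ring K s n) ^ p)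
      = (fun m => monomial m (1 : K)) ''
        (Set.range fun v : Fin n ⊕ (Fin s × Fin n) => Finsupp.single v p) := by
    rw [← Set.range_comp]
    refine congrArg _ (funext fun v => ?_)
    exact X_pow_eq_monomial
  rw [hset] at hmem
  have key := mem_ideal_span_monomial_image.mp hmem _ (mem_support_iff.mpr hTot.1)
  obtain ⟨si, hsi, hle⟩ := key
  obtain ⟨v, rfl⟩ := hsi
  rw [Finsupp.single_le_iff] at hle
  -- now `p ≤ Mtot v`; derive a contradiction
  set S0 := (Finsupp.single (Sum.inl (⟨0, by omega⟩ : Fin n) : Fin n ⊕ (Fin s × Fin n)) 1) v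
    with hS0
  set SD := ∑ i : Fin (s - n + 1), NDm s n hs i v with hSD
  set SA := ∑ i : Fin (n - 1), NAm s n hs i v with hSA
  have hbound : S0 + SD + SA ≤ 1 := key_bound s n hn hs v
  have hMv : ((Finsupp.single (Sum.inl (⟨0, by omega⟩ : Fin n)) 1
      + (p - 1) • ∑ i : Fin (s - n + 1), NDm s n hs i
      + ∑ i : Fin (n - 1), (p - 1) • NAm s n hs i :
        (Fin n ⊕ (Fin s × Fin n)) →₀ ℕ)) v
      = S0 + (p - 1) * SD + (p - 1) * SA := by
    simp only [Finsupp.add_apply, Finsupp.smul_apply, Finset.sum_apply', smul_eq_mul,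
      Finset.mul_sum, hS0, hSD, hSA]
  have hle2 : p ≤ S0 + (p - 1) * SD + (p - 1) * SA := le_of_le_of_eq hle hMv
  exact stmt10_arith p S0 SD SA hp2 hbound hle2
end

section
/- Let (R, 𝔪) be a regular local (or graded polynomial) ring of characteristic p > 0, let 𝔞 be an ideal generated by a regular sequence f₁,…,f_g, and set f = f₁⋯f_g. Then 𝔞^{[p]} : 𝔞 = (f^{p−1}) + 𝔞^{[p]}. -/
open Ideal RingTheory.Sequence

set_option linter.unusedSectionVars false
set_option linter.unnecessarySimpa false

section ColonCI

variable {R : Type*} [CommRing R]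

/-- `a` is a nonzerodivisor modulo `J`. -/
def NZD (J : Ideal R) (a : R) : Prop := ∀ y, a * y ∈ J → y ∈ J

/-- Elementwise regular sequence modulo `J`. -/
def ERS (J : Ideal R) : List R → Prop
  | [] => True
  | a :: m => NZD J a ∧ ERS (J ⊔ Ideal.span {a}) m

lemma NZD.pow {J : Ideal R} {a : R} (h : NZD J a) (n : ℕ) : NZD J (a ^ n) := by
  induction n with
  | zero => intro y hy; simpa using hy
  | succ n ih => intro y hy; exact ih y (h _ (by rwa [show a * (a ^ n * y) = a ^ (n+1) * y by ring]))

lemma ERS.congr {J J' : Ideal R} {l : List R} (h : ERS J l) (e : J = J') : ERS J' l := e ▸ h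

lemma ERS.append {J : Ideal R} {u v : List R} (h : ERS J (u ++ v)) :
    ERS (J ⊔ Ideal.ofList u) v := by
  induction u generalizing J with
  | nil => simpa using h
  | cons a u ih => exact (ih h.2).congr (by simp [sup_assoc])

/-- Extract that a middle element is a nonzerodivisor mod the earlier part. -/
lemma ERS.mid {J : Ideal R} {u v : List R} {c : R} (h : ERS J (u ++ (c :: v))) :
    NZD (J ⊔ Ideal.ofList u) c :=
  h.append.1

lemma nzd_of_smulreg {I : Ideal R} {a : R}
    (h : IsSMulRegular (R ⧸ (I • (⊤ : Submodule R R))) a) : NZD I a := by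
  intro y hy
  have h1 : (I • (⊤ : Submodule R R)) = I := by
    rw [smul_eq_mul]; exact mul_top I
  have h2 : a • (Submodule.Quotient.mk y : R ⧸ (I • (⊤ : Submodule R R))) = 0 := by
    rw [← Submodule.Quotient.mk_smul, Submodule.Quotient.mk_eq_zero, h1]
    simpa using hy
  have := h (by rw [h2, smul_zero] : a • (Submodule.Quotient.mk y : R ⧸ (I • (⊤ : Submodule R R))) = a • 0)
  rw [← h1]
  exact (Submodule.Quotient.mk_eq_zero _).mp this

lemma ers_of_indexed {J : Ideal R} {l : List R}
    (h : ∀ i (hi : i < l.length), NZD (J ⊔ Ideal.ofList (l.take i)) l[i]) : ERS J l := by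
  induction l generalizing J with
  | nil => trivial
  | cons a m ih =>
    constructor
    · have := h 0 (by simp); simpa using this
    · refine (ih fun i hi => ?_).congr rfl
      have := h (i + 1) (by simpa using hi)
      simpa [sup_assoc] using this

lemma ers_of_weaklyRegular {l : List R} (h : IsWeaklyRegular R l) : ERS ⊥ l := by
  refine ers_of_indexed fun i hi => ?_
  have := h.regular_mod_prev i hi
  have := nzd_of_smulreg this
  simpa using this

lemma colon_pow {J : Ideal R} {a : R} (h : NZD J a) {c n : ℕ} (hcn : c ≤ n) {x : R}
    (hx : x * a ^ c ∈ J ⊔ Ideal.span {a ^ n}) : x ∈ J ⊔ Ideal.span {a ^ (n - c)} := by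
  rw [Submodule.mem_sup] at hx ⊢
  obtain ⟨j, hj, z, hz, hsum⟩ := hx
  obtain ⟨r, rfl⟩ := Ideal.mem_span_singleton'.mp hz
  have key : a ^ c * (x - r * a ^ (n - c)) ∈ J := by
    have : a ^ c * (x - r * a ^ (n - c)) = x * a ^ c - r * a ^ n := by
      rw [show a ^ n = a ^ (n - c) * a ^ c by rw [← pow_add, Nat.sub_add_cancel hcn]]; ring
    rw [this, ← hsum]; simpa using hj
  have := (h.pow c) _ key
  exact ⟨x - r * a ^ (n - c), this, r * a ^ (n - c), Ideal.mem_span_singleton'.mpr ⟨r, rfl⟩, by ring⟩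

lemma ERS.mul {J : Ideal R} {a b : R} {m : List R}
    (hpre : ∀ m₁ m₂, m = m₁ ++ m₂ → NZD (J ⊔ Ideal.ofList m₁) a)
    (ha : ERS (J ⊔ Ideal.span {a}) m) (hb : ERS (J ⊔ Ideal.span {b}) m) :
    ERS (J ⊔ Ideal.span {a * b}) m := by
  induction m generalizing J with
  | nil => trivial
  | cons c t ih =>
    have hJa : NZD J a := by
      have h0 := hpre [] (c :: t) rfl
      rwa [ofList_nil, sup_bot_eq] at h0
    refine ⟨?_, ?_⟩
    · -- head: NZD (J ⊔ span{a*b}) c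
      intro y hy
      have hy' : c * y ∈ J ⊔ Ideal.span {a} :=
        sup_le_sup_left (Ideal.span_singleton_le_span_singleton.mpr ⟨b, rfl⟩) J hy
      have hyJa : y ∈ J ⊔ Ideal.span {a} := ha.1 y hy'
      rw [Submodule.mem_sup] at hyJa
      obtain ⟨j, hj, z, hz, rfl⟩ := hyJa
      obtain ⟨w, rfl⟩ := Ideal.mem_span_singleton'.mp hz
      rw [Submodule.mem_sup] at hy
      obtain ⟨j', hj', z', hz', hsum⟩ := hy
      obtain ⟨r, rfl⟩ := Ideal.mem_span_singleton'.mp hz'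
      have key : a * (c * w - r * b) ∈ J := by
        have e : a * (c * w - r * b) = j' - c * j := by linear_combination -hsum
        rw [e]; exact Submodule.sub_mem _ hj' (Ideal.mul_mem_left _ _ hj)
      have hcw : c * w ∈ J ⊔ Ideal.span {b} := by
        rw [Submodule.mem_sup]
        exact ⟨c * w - r * b, hJa _ key, r * b, Ideal.mem_span_singleton'.mpr ⟨r, rfl⟩, by ring⟩
      have hw : w ∈ J ⊔ Ideal.span {b} := hb.1 w hcw
      rw [Submodule.mem_sup] at hw
      obtain ⟨j₂, hj₂, z₂, hz₂, rfl⟩ := hw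
      obtain ⟨s, rfl⟩ := Ideal.mem_span_singleton'.mp hz₂
      rw [Submodule.mem_sup]
      exact ⟨j + j₂ * a, Submodule.add_mem _ hj (Ideal.mul_mem_right _ _ hj₂), s * (a * b),
        Ideal.mem_span_singleton'.mpr ⟨s, rfl⟩, by ring⟩
    · -- tail
      have hpre' : ∀ m₁ m₂, t = m₁ ++ m₂ → NZD (J ⊔ Ideal.span {c} ⊔ Ideal.ofList m₁) a := by
        intro m₁ m₂ e
        have h0 := hpre (c :: m₁) m₂ (by rw [e]; rfl)
        rwa [ofList_cons, ← sup_assoc] at h0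
      have ha' : ERS (J ⊔ Ideal.span {c} ⊔ Ideal.span {a}) t := ha.2.congr (by rw [sup_right_comm])
      have hb' : ERS (J ⊔ Ideal.span {c} ⊔ Ideal.span {b}) t := hb.2.congr (by rw [sup_right_comm])
      exact (ih hpre' ha' hb').congr (by rw [sup_right_comm])

def powL (l : List (R × ℕ)) : List R := l.map (fun q => q.1 ^ q.2)
def wt (l : List (R × ℕ)) : ℕ := (l.map (fun q => q.2 - 1)).sum

@[simp] lemma powL_nil : powL ([] : List (R × ℕ)) = [] := rfl
@[simp] lemma powL_cons (q : R × ℕ) (t : List (R × ℕ)) : powL (q :: t) = q.1 ^ q.2 :: powL t := rfl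
@[simp] lemma powL_append (s t : List (R × ℕ)) : powL (s ++ t) = powL s ++ powL t :=
  List.map_append
@[simp] lemma wt_cons (q : R × ℕ) (t : List (R × ℕ)) : wt (q :: t) = (q.2 - 1) + wt t := rfl
@[simp] lemma wt_append (s t : List (R × ℕ)) : wt (s ++ t) = wt s + wt t := by
  simp [wt]

section Perm

variable [IsNoetherianRing R] [IsLocalRing R] {g : ℕ} {f : Fin g → R}
  (hreg : RingTheory.Sequence.IsRegular R (List.ofFn f))

include hreg

lemma perm_ers {l : List R} (hl : (List.ofFn f).Perm l) : ERS ⊥ l :=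
  ers_of_weaklyRegular (IsLocalRing.isRegular_of_perm hreg hl).toIsWeaklyRegular

lemma perm_ers' {u v : List R} (huv : (u ++ v).Perm (List.ofFn f)) :
    ERS (Ideal.ofList u) v :=
  ((perm_ers hreg huv.symm).append).congr (bot_sup_eq _)

lemma masterQ : ∀ (W : ℕ) (l : List (R × ℕ)) (u : List R), wt l ≤ W →
    (∀ q ∈ l, 1 ≤ q.2) → (u ++ l.map Prod.fst).Perm (List.ofFn f) →
    ERS (Ideal.ofList u) (powL l) := by
  intro W
  induction W with
  | zero =>
    intro l u hw hexp hperm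
    have hl : powL l = l.map Prod.fst := by
      apply List.map_congr_left
      intro q hq
      have h0 : q.2 - 1 = 0 := by
        have := List.sum_eq_zero_iff.mp (Nat.le_zero.mp hw) (q.2 - 1) (List.mem_map_of_mem hq)
        exact this
      have h1 : q.2 = 1 := by have := hexp q hq; omega
      rw [h1, pow_one]
    rw [hl]
    exact perm_ers' hreg hperm
  | succ W ih =>
    intro l
    induction l with
    | nil => intro u _ _ _; trivial
    | cons q t ihl =>
      intro u hw hexp hperm
      obtain ⟨z, e⟩ := q
      simp only [List.map_cons] at hperm
      have hz : NZD (Ideal.ofList u) z := (perm_ers' hreg hperm).1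
      have he : 1 ≤ e := hexp (z, e) List.mem_cons_self
      have hexp' : ∀ q ∈ t, 1 ≤ (q : R × ℕ).2 := fun q hq => hexp q (List.mem_cons_of_mem _ hq)
      rcases Nat.lt_or_ge e 2 with h2 | h2
      · -- e = 1
        have : e = 1 := by omega
        subst this
        refine ⟨(by rw [pow_one]; exact hz : NZD (Ideal.ofList u) (z ^ 1)), ?_⟩
        have := ihl (u ++ [z]) (by simp at hw ⊢; omega) hexp'
          (by rwa [List.append_assoc, List.singleton_append])
        exact this.congr (by beta_reduce; rw [ofList_append, ofList_singleton, pow_one])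
      · -- e ≥ 2
        obtain ⟨e', rfl⟩ : ∃ e', e = e' + 1 := ⟨e - 1, by omega⟩
        have he' : 1 ≤ e' := by omega
        have hwt : wt t + e' ≤ W + 1 := by simp at hw; omega
        refine ⟨hz.pow _, ?_⟩
        have ha : ERS (Ideal.ofList u ⊔ Ideal.span {z}) (powL t) := by
          have := (ih ((z, 1) :: t) u (by simp; omega)
            (by intro q hq; rcases List.mem_cons.mp hq with rfl | hq; exact le_refl 1; exact hexp' q hq)
            (by simpa using hperm)).2
          exact this.congr (by beta_reduce; rw [pow_one])
        have hb : ERS (Ideal.ofList u ⊔ Ideal.span {z ^ e'}) (powL t) := by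
          exact (ih ((z, e') :: t) u (by simp; omega)
            (by intro q hq; rcases List.mem_cons.mp hq with rfl | hq; exact he'; exact hexp' q hq)
            (by simpa using hperm)).2
        have hpre : ∀ m₁ m₂, powL t = m₁ ++ m₂ → NZD (Ideal.ofList u ⊔ Ideal.ofList m₁) z := by
          intro m₁ m₂ hm
          obtain ⟨t₁, t₂, rfl, rfl, rfl⟩ := List.map_eq_append_iff.mp hm
          have hq := ih (t₁ ++ (z, 1) :: t₂) u (by simp at hwt ⊢; omega)
            (by intro q hq; rcases List.mem_append.mp hq with h | h
                · exact hexp' q (List.mem_append.mpr (Or.inl h))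
                · rcases List.mem_cons.mp h with rfl | hq2
                  · exact le_refl 1
                  · exact hexp' q (List.mem_append.mpr (Or.inr hq2)))
            (by
              refine List.Perm.trans ?_ hperm
              refine List.Perm.append_left u ?_
              simp only [List.map_append, List.map_cons]
              exact List.perm_middle)
          rw [powL_append, powL_cons] at hq
          have := hq.mid
          rw [pow_one] at this
          exact this
        have := ERS.mul hpre ha hb
        exact this.congr (by rw [← pow_succ'])


lemma fact_nzd {p : ℕ} (hp : 1 ≤ p) {u v : List R} {c : R}
    (hperm : (u ++ (c :: v)).Perm (List.ofFn f)) :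
    NZD (Ideal.ofList (u.map (· ^ p)) ⊔ Ideal.ofList v) c := by
  set l : List (R × ℕ) := u.map (fun z => (z, p)) ++ (v ++ [c]).map (fun z => (z, 1)) with hl
  have hers := masterQ hreg (wt l) l [] le_rfl
    (by intro q hq
        rcases List.mem_append.mp hq with h | h
        · obtain ⟨z, _, rfl⟩ := List.mem_map.mp h; exact hp
        · obtain ⟨z, _, rfl⟩ := List.mem_map.mp h; exact le_rfl)
    (by
      have h1 : l.map Prod.fst = u ++ (v ++ [c]) := by
        simp [hl, List.map_map, Function.comp_def]
      rw [List.nil_append, h1]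
      refine List.Perm.trans (List.Perm.append_left u ?_) hperm
      simpa using (List.perm_middle (a := c) (l₁ := v) (l₂ := [])))
  have h2 : powL l = (u.map (· ^ p) ++ v) ++ (c :: []) := by
    simp [powL, hl, List.map_map, Function.comp_def]
  rw [h2] at hers
  have h3 := hers.mid
  rwa [ofList_nil, bot_sup_eq, ofList_append] at h3

lemma main_colon {p : ℕ} (hp : 2 ≤ p) :
    ∀ (u v : List R), (u ++ v).Perm (List.ofFn f) →
    ∀ x : R, (∀ a ∈ u, x * a ∈ Ideal.ofList (u.map (· ^ p)) ⊔ Ideal.ofList v) →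
      x ∈ Ideal.span {u.prod ^ (p - 1)} ⊔ (Ideal.ofList (u.map (· ^ p)) ⊔ Ideal.ofList v) := by
  intro u
  induction u using List.reverseRecOn with
  | nil =>
    intro v hperm x hx
    apply Submodule.mem_sup_left
    simp [Ideal.span_singleton_one]
  | append_singleton u c ih =>
    intro v hperm x hx
    have hp1 : p - 1 + 1 = p := by omega
    set A : Ideal R := Ideal.ofList (u.map (· ^ p)) with hA
    set V : Ideal R := Ideal.ofList v with hV
    have hI : Ideal.ofList ((u ++ [c]).map (· ^ p)) ⊔ V = (A ⊔ V) ⊔ Ideal.span {c ^ p} := by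
      rw [List.map_append, ofList_append, List.map_singleton, ofList_singleton, sup_right_comm]
    have hperm' : (u ++ (c :: v)).Perm (List.ofFn f) := by
      rwa [List.append_assoc, List.singleton_append] at hperm
    have hNZD : NZD (A ⊔ V) c := fact_nzd hreg (by omega) hperm'
    have hxc := hx c (by simp)
    rw [hI] at hxc
    rw [Submodule.mem_sup] at hxc
    obtain ⟨j, hj, z, hz, hsum⟩ := hxc
    obtain ⟨r, rfl⟩ := Ideal.mem_span_singleton'.mp hz
    have hyJ : x - r * c ^ (p - 1) ∈ A ⊔ V := by
      refine hNZD _ ?_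
      have hcc : c ^ (p - 1) * c = c ^ p := by rw [← pow_succ, hp1]
      have e : c * (x - r * c ^ (p - 1)) = x * c - r * c ^ p := by
        linear_combination (-r) * hcc
      rw [e, ← hsum]
      simpa using hj
    have hr : ∀ a ∈ u, r * a ∈ A ⊔ Ideal.ofList (c :: v) := by
      intro a ha'
      have hxa := hx a (List.mem_append.mpr (Or.inl ha'))
      rw [hI] at hxa
      have hya : (x - r * c ^ (p - 1)) * a ∈ A ⊔ V := Ideal.mul_mem_right _ _ hyJ
      have h3 : (r * a) * c ^ (p - 1) ∈ (A ⊔ V) ⊔ Ideal.span {c ^ p} := by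
        have e : (r * a) * c ^ (p - 1) = x * a - (x - r * c ^ (p - 1)) * a := by ring
        rw [e]
        exact Submodule.sub_mem _ hxa (Submodule.mem_sup_left hya)
      have h4 := colon_pow hNZD (Nat.sub_le p 1) h3
      have hpp : p - (p - 1) = 1 := by omega
      rw [hpp, pow_one] at h4
      rwa [show (A ⊔ V) ⊔ Ideal.span {c} = A ⊔ Ideal.ofList (c :: v) by
        rw [ofList_cons, sup_assoc, sup_comm V]] at h4
    have hrmem := ih (c :: v) hperm' r hr
    -- assemble
    have hgoal : x = (x - r * c ^ (p - 1)) + r * c ^ (p - 1) := by ring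
    rw [hI, List.prod_append, List.prod_singleton, hgoal]
    refine Submodule.add_mem _ (Submodule.mem_sup_right (Submodule.mem_sup_left hyJ)) ?_
    rw [Submodule.mem_sup] at hrmem
    obtain ⟨s, hs, w, hw, rfl⟩ := hrmem
    have e2 : (s + w) * c ^ (p - 1) = s * c ^ (p - 1) + w * c ^ (p - 1) := by ring
    rw [e2]
    refine Submodule.add_mem _ ?_ ?_
    · apply Submodule.mem_sup_left
      obtain ⟨q, rfl⟩ := Ideal.mem_span_singleton'.mp hs
      exact Ideal.mem_span_singleton'.mpr ⟨q, by rw [mul_pow]; ring⟩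
    · apply Submodule.mem_sup_right
      rw [ofList_cons] at hw
      rw [Submodule.mem_sup] at hw
      obtain ⟨a₁, ha₁, b₁, hb₁, rfl⟩ := hw
      rw [Submodule.mem_sup] at hb₁
      obtain ⟨c₁, hc₁, v₁, hv₁, rfl⟩ := hb₁
      obtain ⟨q₂, rfl⟩ := Ideal.mem_span_singleton'.mp hc₁
      have hcc : c ^ (p - 1) * c = c ^ p := by rw [← pow_succ, hp1]
      have e3 : (a₁ + (q₂ * c + v₁)) * c ^ (p - 1)
          = (a₁ * c ^ (p - 1) + v₁ * c ^ (p - 1)) + q₂ * c ^ p := by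
        linear_combination q₂ * hcc
      rw [e3]
      refine Submodule.add_mem _ (Submodule.mem_sup_left ?_) (Submodule.mem_sup_right ?_)
      · exact Submodule.add_mem _ (Submodule.mem_sup_left (Ideal.mul_mem_right _ _ ha₁))
          (Submodule.mem_sup_right (Ideal.mul_mem_right _ _ hv₁))
      · exact Ideal.mem_span_singleton'.mpr ⟨q₂, rfl⟩


end Perm

end ColonCI

/-- Let `(R, 𝔪)` be a regular local ring of characteristic `p > 0` (by
Kunz's theorem, regularity of a Noetherian ring is equivalent to flatness of Frobenius), let
`𝔞` be an ideal generated by a regular sequence `f₁,…,f_g`, and set `f = f₁⋯f_g`.  Then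
`𝔞^{[p]} : 𝔞 = (f^{p−1}) + 𝔞^{[p]}`, where `𝔞^{[p]}` is the extension of `𝔞` along
Frobenius, i.e. the ideal `(f₁^p,…,f_g^p)`. -/
theorem stmt12 {R : Type*} [CommRing R] [IsNoetherianRing R] [IsLocalRing R] (p : ℕ)
    [Fact p.Prime] [CharP R p] (hflat : (frobenius R p).Flat) (g : ℕ) (f : Fin g → R)
    (hreg : RingTheory.Sequence.IsRegular R (List.ofFn f)) :
    ((Ideal.span (Set.range f)).map (frobenius R p)).colon (Ideal.span (Set.range f))
      = Ideal.span {(∏ i, f i) ^ (p - 1)} ⊔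
        (Ideal.span (Set.range f)).map (frobenius R p) := by
  have hp2 : 2 ≤ p := (Fact.out : p.Prime).two_le
  have hp1 : p - 1 + 1 = p := by omega
  have hofn : Ideal.span (Set.range f) = Ideal.ofList (List.ofFn f) := by
    congr 1
    ext a
    simp [List.mem_ofFn, Set.mem_range, eq_comm]
  have hmap : (Ideal.span (Set.range f)).map (frobenius R p)
      = Ideal.ofList ((List.ofFn f).map (· ^ p)) := by
    rw [hofn, Ideal.map_ofList,
      show (List.ofFn f).map (frobenius R p) = (List.ofFn f).map (· ^ p) from
        List.map_congr_left fun a _ => rfl]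
  apply le_antisymm
  · intro x hx
    have hall : ∀ a ∈ List.ofFn f,
        x * a ∈ Ideal.ofList ((List.ofFn f).map (· ^ p)) ⊔ Ideal.ofList ([] : List R) := by
      intro a ha
      rw [ofList_nil, sup_bot_eq, ← hmap]
      obtain ⟨i, rfl⟩ := (List.mem_ofFn (f := f)).mp ha
      have hmem : f i ∈ Ideal.span (Set.range f) := subset_span (Set.mem_range_self i)
      have := Submodule.mem_colon.mp hx (f i) hmem
      rwa [smul_eq_mul] at this
    have := main_colon hreg hp2 (List.ofFn f) [] (by simp) x hall
    rw [ofList_nil, sup_bot_eq, ← hmap, List.prod_ofFn] at this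
    exact this
  · apply sup_le
    · rw [Ideal.span_le]
      intro w hw
      rw [Set.mem_singleton_iff] at hw
      subst hw
      rw [SetLike.mem_coe]
      refine Submodule.mem_colon.mpr fun y hy => ?_
      induction hy using Submodule.span_induction with
      | mem y hy =>
        obtain ⟨i, rfl⟩ := hy
        rw [smul_eq_mul]
        have hcc : f i ^ (p - 1) * f i = f i ^ p := by rw [← pow_succ, hp1]
        have key : (∏ j, f j) ^ (p - 1) * f i
            = f i ^ p * ((Finset.univ.erase i).prod f) ^ (p - 1) := by
          rw [← Finset.mul_prod_erase Finset.univ f (Finset.mem_univ i), mul_pow]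
          linear_combination (((Finset.univ.erase i).prod f) ^ (p - 1)) * hcc
        rw [key]
        have : f i ^ p ∈ (Ideal.span (Set.range f)).map (frobenius R p) := by
          have := Ideal.mem_map_of_mem (frobenius R p) (subset_span (Set.mem_range_self i) : f i ∈ Ideal.span (Set.range f))
          rwa [frobenius_def] at this
        exact Ideal.mul_mem_right _ _ this
      | zero => rw [smul_zero]; exact Submodule.zero_mem _
      | add y z _ _ hy hz => rw [smul_add]; exact Submodule.add_mem _ hy hz
      | smul r y _ hy => rw [smul_comm]; exact Submodule.smul_mem _ r hy
    · intro x hx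
      exact Submodule.mem_colon.mpr fun y hy => by
        rw [smul_eq_mul]; exact Ideal.mul_mem_right _ _ hx
end
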